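/- arXiv:2306.02743 — 11 statements merged into one kernel-verified Lean document; each statement's English description precedes it below -/
import Mathlib

section
/- Subgraph monotonicity of realizability (Proposition 3.1, subgraph case): Let (n, E, t, h, z) be ℤ-labelled graph data, let V' ⊆ Fin n, and let E' ⊆ E be a set of edges all of whose tails and heads lie in V'. If the data (n, E, t, h, z) is d-realizable, then the restricted data with vertex set V', edge set E', and the restricted tail, head and label maps is also d-realizable (where periodic frameworks of the restricted data are maps p̂ : V' → ℝ^m together with a nonzero lattice vector). -/
/-- The edge vector of edge `e` of ℤ-labelled graph data with tail map `t`, head map `h`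
and labels `z`, with respect to a point configuration `p` and lattice vector `ℓ`. -/
noncomputable def edgeVec {V E : Type*} {m : ℕ} (t h : E → V) (z : E → ℤ)
    (p : V → EuclideanSpace ℝ (Fin m)) (ℓ : EuclideanSpace ℝ (Fin m)) (e : E) :
    EuclideanSpace ℝ (Fin m) :=
  p (h e) + (z e : ℝ) • ℓ - p (t e)

/-- ℤ-labelled graph data `(V, E, t, h, z)` is `d`-realizable if every periodic framework
`(p, ℓ)` of the data in any dimension `m` admits an equivalent periodic framework in `ℝ^d`. -/
def IsRealizable (V E : Type*) (t h : E → V) (z : E → ℤ) (d : ℕ) : Prop :=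
  ∀ (m : ℕ) (p : V → EuclideanSpace ℝ (Fin m)) (ℓ : EuclideanSpace ℝ (Fin m)), ℓ ≠ 0 →
    ∃ (q : V → EuclideanSpace ℝ (Fin d)) (ℓ' : EuclideanSpace ℝ (Fin d)), ℓ' ≠ 0 ∧
      ‖ℓ'‖ = ‖ℓ‖ ∧ ∀ e : E, ‖edgeVec t h z q ℓ' e‖ = ‖edgeVec t h z p ℓ e‖

/-- Proposition 3.1 (subgraph case): if ℤ-labelled graph data `(n, E, t, h, z)` is
`d`-realizable, then so is the restricted data on a vertex subset `V'` and an edge subset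
`E'` all of whose endpoints lie in `V'`. -/
theorem subgraph_monotone_realizable (n : ℕ) (hn : 1 ≤ n) (E : Type*) [Fintype E]
    (t h : E → Fin n) (z : E → ℤ) (V' : Set (Fin n)) (E' : Set E)
    (ht : ∀ e ∈ E', t e ∈ V') (hh : ∀ e ∈ E', h e ∈ V') (d : ℕ)
    (hreal : IsRealizable (Fin n) E t h z d) :
    IsRealizable V' E' (fun e => ⟨t e.1, ht e.1 e.2⟩) (fun e => ⟨h e.1, hh e.1 e.2⟩)
      (fun e => z e.1) d := by
  intro m p ℓ hℓ
  classical
  set P : Fin n → EuclideanSpace ℝ (Fin m) :=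
    fun v => if hv : v ∈ V' then p ⟨v, hv⟩ else 0 with hP
  obtain ⟨q, ℓ', hℓ', hnorm, hedge⟩ := hreal m P ℓ hℓ
  refine ⟨fun v => q v.1, ℓ', hℓ', hnorm, ?_⟩
  intro e
  have := hedge e.1
  simpa [edgeVec, hP, ht e.1 e.2, hh e.1 e.2] using this
end

section
/- Contraction monotonicity of realizability (Proposition 3.1, contraction case): Let (n, E, t, h, z) be ℤ-labelled graph data and let e₀ ∈ E be an edge with z e₀ = 0 and t e₀ ≠ h e₀; write i := t e₀ and j := h e₀. Define contracted data with vertex set Fin n \ {j}, edge set E \ {e₀}, labels unchanged, and tail/head maps t', h' obtained from t, h by replacing every occurrence of j by i. If (n, E, t, h, z) is d-realizable, then the contracted data is d-realizable. -/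
/-! The contracted data is obtained from the original one by pulling frameworks back along the
vertex map `c` that sends `h e₀` to `t e₀`, and dropping the edge `e₀`. Given a framework `p` of
the contracted data, realize `p ∘ c` in `ℝ^d` by some `q`. Since `e₀` has label `0` and `p ∘ c`
gives it length `0`, also `q` puts `t e₀` and `h e₀` at the same point, so `q` descends along `c`
to a framework of the contracted data. -/

def contractVertex {V : Type*} [DecidableEq V] {i j : V} (hij : i ≠ j) (v : V) :
    {x : V // x ≠ j} :=
  if hv : v = j then ⟨i, hij⟩ else ⟨v, hv⟩

section contractVertex

variable {V : Type*} [DecidableEq V] {i j : V} (hij : i ≠ j)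

@[simp]
lemma contractVertex_self : contractVertex hij j = ⟨i, hij⟩ := dif_pos rfl

lemma contractVertex_of_ne {v : V} (hv : v ≠ j) : contractVertex hij v = ⟨v, hv⟩ := dif_neg hv

end contractVertex

section edgeVec

variable {V W E : Type*} {m : ℕ} (t h : E → V) (z : E → ℤ)

lemma edgeVec_comp (c : V → W) (p : W → EuclideanSpace ℝ (Fin m))
    (ℓ : EuclideanSpace ℝ (Fin m)) (e : E) :
    edgeVec (c ∘ t) (c ∘ h) z p ℓ e = edgeVec t h z (p ∘ c) ℓ e :=
  rfl

lemma edgeVec_of_label_eq_zero {z : E → ℤ} {e : E} (hz : z e = 0)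
    (p : V → EuclideanSpace ℝ (Fin m)) (ℓ : EuclideanSpace ℝ (Fin m)) :
    edgeVec t h z p ℓ e = p (h e) - p (t e) := by
  simp [edgeVec, hz]

end edgeVec

namespace IsRealizable

variable {V E : Type*} {t h : E → V} {z : E → ℤ} {d : ℕ}

lemma comp_edges {E' : Type*} (hreal : IsRealizable V E t h z d) (ι : E' → E) :
    IsRealizable V E' (t ∘ ι) (h ∘ ι) (z ∘ ι) d := by
  intro m p ℓ hℓ
  obtain ⟨q, ℓ', hℓ', hnorm, hedge⟩ := hreal m p ℓ hℓ
  exact ⟨q, ℓ', hℓ', hnorm, fun e => hedge (ι e)⟩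

lemma contract [DecidableEq V] (hreal : IsRealizable V E t h z d) {e₀ : E} (hz0 : z e₀ = 0)
    (hne : t e₀ ≠ h e₀) :
    IsRealizable {x : V // x ≠ h e₀} E (contractVertex hne ∘ t) (contractVertex hne ∘ h) z d := by
  intro m p ℓ hℓ
  set c := contractVertex hne
  obtain ⟨q, ℓ', hℓ', hnorm, hedge⟩ := hreal m (p ∘ c) ℓ hℓ
  have hc : c (h e₀) = c (t e₀) := by
    simp only [c, contractVertex_self, contractVertex_of_ne hne hne]
  have hq : q (h e₀) = q (t e₀) := by
    have := hedge e₀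
    rwa [edgeVec_of_label_eq_zero t h hz0, edgeVec_of_label_eq_zero t h hz0, Function.comp_apply,
      Function.comp_apply, hc, sub_self, norm_zero, norm_eq_zero, sub_eq_zero] at this
  have hdescend : (q ∘ Subtype.val) ∘ c = q := by
    funext v
    by_cases hv : v = h e₀
    · subst hv
      simp only [Function.comp_apply, c, contractVertex_self, hq]
    · simp only [Function.comp_apply, c, contractVertex_of_ne hne hv]
  refine ⟨q ∘ Subtype.val, ℓ', hℓ', hnorm, fun e => ?_⟩
  rw [edgeVec_comp, edgeVec_comp, hdescend]
  exact hedge e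

end IsRealizable

theorem contraction_monotone_realizable_general (n : ℕ) (E : Type*)
    (t h : E → Fin n) (z : E → ℤ) (e₀ : E) (hz0 : z e₀ = 0) (hne : t e₀ ≠ h e₀) (d : ℕ)
    (hreal : IsRealizable (Fin n) E t h z d) :
    IsRealizable {x : Fin n // x ≠ h e₀} {e : E // e ≠ e₀}
      (fun e => if hte : t e.1 = h e₀ then ⟨t e₀, hne⟩ else ⟨t e.1, hte⟩)
      (fun e => if hhe : h e.1 = h e₀ then ⟨t e₀, hne⟩ else ⟨h e.1, hhe⟩)
      (fun e => z e.1) d :=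
  (hreal.contract hz0 hne).comp_edges Subtype.val

/-- Proposition 3.1 (contraction case): contracting an edge `e₀` with label `0` joining two
distinct vertices preserves `d`-realizability.  The contracted data has vertex set
`Fin n \ {h e₀}`, edge set `E \ {e₀}`, unchanged labels, and tail/head maps obtained by
replacing every occurrence of `h e₀` by `t e₀`. -/
theorem contraction_monotone_realizable (n : ℕ) (hn : 1 ≤ n) (E : Type*) [Fintype E]
    (t h : E → Fin n) (z : E → ℤ) (e₀ : E) (hz0 : z e₀ = 0) (hne : t e₀ ≠ h e₀) (d : ℕ)
    (hreal : IsRealizable (Fin n) E t h z d) :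
    IsRealizable {x : Fin n // x ≠ h e₀} {e : E // e ≠ e₀}
      (fun e => if hte : t e.1 = h e₀ then ⟨t e₀, hne⟩ else ⟨t e.1, hte⟩)
      (fun e => if hhe : h e.1 = h e₀ then ⟨t e₀, hne⟩ else ⟨h e.1, hhe⟩)
      (fun e => z e.1) d :=
  contraction_monotone_realizable_general n E t h z e₀ hz0 hne d hreal
end

section
/- Closedness of the measurement image (Lemma 6.1): For all integers d ≥ 0, n ≥ 1, every finite edge index type E, and all maps t, h : E → Fin n and z : E → ℤ, the set { ( (‖p̂(h e) + z e • ℓ − p̂(t e)‖²)_{e ∈ E}, ‖ℓ‖² ) : p̂ : Fin n → ℝ^d, ℓ ∈ ℝ^d } is a closed subset of ℝ^E × ℝ. -/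
private lemma eqvGen_bound {E : Type*} {n d : ℕ} (t h : E → Fin n) (z : E → ℤ)
    (B : E → ℝ) (L : ℝ) {i j : Fin n}
    (hij : Relation.EqvGen (fun a b => ∃ e, t e = a ∧ h e = b) i j) :
    ∃ C, ∀ (p : Fin n → EuclideanSpace ℝ (Fin d)) (ℓ : EuclideanSpace ℝ (Fin d)),
      (∀ e, ‖edgeVec t h z p ℓ e‖ ≤ B e) → ‖ℓ‖ ≤ L → ‖p i - p j‖ ≤ C := by
  induction hij with
  | rel a b hab =>
    obtain ⟨e, rfl, rfl⟩ := hab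
    refine ⟨|(z e : ℝ)| * L + B e, fun p ℓ hB hL => ?_⟩
    have h1 := hB e
    have h2 : p (t e) - p (h e) = (z e : ℝ) • ℓ - edgeVec t h z p ℓ e := by
      simp only [edgeVec]; abel
    rw [h2]
    calc ‖(z e : ℝ) • ℓ - edgeVec t h z p ℓ e‖
        ≤ ‖(z e : ℝ) • ℓ‖ + ‖edgeVec t h z p ℓ e‖ := norm_sub_le _ _
      _ ≤ |(z e : ℝ)| * L + B e := by
          rw [norm_smul, Real.norm_eq_abs]
          gcongr
  | refl a => exact ⟨0, by simp⟩
  | symm a b _ ih =>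
    obtain ⟨C, hC⟩ := ih
    exact ⟨C, fun p ℓ hB hL => by rw [norm_sub_rev]; exact hC p ℓ hB hL⟩
  | trans a b c _ _ ih1 ih2 =>
    obtain ⟨C1, h1⟩ := ih1
    obtain ⟨C2, h2⟩ := ih2
    refine ⟨C1 + C2, fun p ℓ hB hL => ?_⟩
    have := dist_triangle (p a) (p b) (p c)
    simp only [dist_eq_norm] at this
    linarith [h1 p ℓ hB hL, h2 p ℓ hB hL]

/-- Lemma 6.1: the image of the measurement map is closed.  For ℤ-labelled graph data
`(n, E, t, h, z)` and a dimension `d`, the set of all pairs consisting of the vector of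
squared edge lengths and the squared lattice length, over all point configurations
`p : Fin n → ℝ^d` and all vectors `ℓ ∈ ℝ^d`, is a closed subset of `ℝ^E × ℝ`. -/
theorem measurement_image_isClosed (d n : ℕ) (hn : 1 ≤ n) (E : Type*) [Fintype E]
    (t h : E → Fin n) (z : E → ℤ) :
    IsClosed {x : (E → ℝ) × ℝ |
      ∃ (p : Fin n → EuclideanSpace ℝ (Fin d)) (ℓ : EuclideanSpace ℝ (Fin d)),
        (x.1 = fun e => ‖edgeVec t h z p ℓ e‖ ^ 2) ∧ x.2 = ‖ℓ‖ ^ 2} := by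
  rw [← isSeqClosed_iff_isClosed]
  intro u x hu hx
  choose p ℓ hp hℓ using hu
  -- limits of coordinates
  have hx2 : Filter.Tendsto (fun k => (u k).2) Filter.atTop (nhds x.2) :=
    (continuous_snd.tendsto x).comp hx
  have hx1 : ∀ e : E, Filter.Tendsto (fun k => (u k).1 e) Filter.atTop (nhds (x.1 e)) :=
    fun e => (((continuous_apply e).comp continuous_fst).tendsto x).comp hx
  -- uniform bounds
  obtain ⟨M2, hM2⟩ := hx2.bddAbove_range
  set L : ℝ := max 1 M2 with hLdef
  have hL : ∀ k, ‖ℓ k‖ ≤ L := by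
    intro k
    have h1 : ‖ℓ k‖ ^ 2 ≤ M2 := by
      rw [← hℓ k]; exact hM2 ⟨k, rfl⟩
    rcases le_total (‖ℓ k‖) 1 with hc | hc
    · exact hc.trans (le_max_left _ _)
    · refine le_trans ?_ (h1.trans (le_max_right _ _))
      nlinarith [norm_nonneg (ℓ k)]
  have hBex : ∀ e : E, ∃ Be, ∀ k, ‖edgeVec t h z (p k) (ℓ k) e‖ ≤ Be := by
    intro e
    obtain ⟨M1, hM1⟩ := (hx1 e).bddAbove_range
    refine ⟨max 1 M1, fun k => ?_⟩
    have h1 : ‖edgeVec t h z (p k) (ℓ k) e‖ ^ 2 ≤ M1 := by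
      have := hM1 ⟨k, rfl⟩
      simpa [hp k] using this
    rcases le_total (‖edgeVec t h z (p k) (ℓ k) e‖) 1 with hc | hc
    · exact hc.trans (le_max_left _ _)
    · refine le_trans ?_ (h1.trans (le_max_right _ _))
      nlinarith [norm_nonneg (edgeVec t h z (p k) (ℓ k) e)]
  choose B hB using hBex
  -- representatives of connected components
  set r : Fin n → Fin n → Prop := fun a b => ∃ e, t e = a ∧ h e = b with hrdef
  let S : Setoid (Fin n) := Relation.EqvGen.setoid r
  let rep : Fin n → Fin n := fun i => (Quotient.mk S i).out
  have hrep_rel : ∀ i, Relation.EqvGen r i (rep i) := by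
    intro i
    exact Relation.EqvGen.symm _ _ (Quotient.mk_out (s := S) i)
  have hrep_edge : ∀ e : E, rep (t e) = rep (h e) := by
    intro e
    have : (Quotient.mk S (t e)) = Quotient.mk S (h e) :=
      Quotient.sound (Relation.EqvGen.rel _ _ ⟨e, rfl, rfl⟩)
    simp only [rep, this]
  -- bounds per vertex
  have hCex : ∀ i : Fin n, ∃ C, ∀ (p' : Fin n → EuclideanSpace ℝ (Fin d))
      (ℓ' : EuclideanSpace ℝ (Fin d)),
      (∀ e, ‖edgeVec t h z p' ℓ' e‖ ≤ B e) → ‖ℓ'‖ ≤ L → ‖p' i - p' (rep i)‖ ≤ C :=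
    fun i => eqvGen_bound t h z B L (hrep_rel i)
  choose C hC using hCex
  -- normalized witnesses
  set q : ℕ → Fin n → EuclideanSpace ℝ (Fin d) := fun k i => p k i - p k (rep i) with hqdef
  have hqe : ∀ k e, edgeVec t h z (q k) (ℓ k) e = edgeVec t h z (p k) (ℓ k) e := by
    intro k e
    simp only [edgeVec, q, hrep_edge e]
    abel
  have hqb : ∀ k i, ‖q k i‖ ≤ C i := fun k i => hC i (p k) (ℓ k) (fun e => hB e k) (hL k)
  -- compactness
  set K : Set ((Fin n → EuclideanSpace ℝ (Fin d)) × EuclideanSpace ℝ (Fin d)) :=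
    (Set.univ.pi fun i => Metric.closedBall (0 : EuclideanSpace ℝ (Fin d)) (C i)) ×ˢ
      Metric.closedBall 0 L with hKdef
  have hK : IsCompact K :=
    (isCompact_univ_pi fun i => isCompact_closedBall _ _).prod (isCompact_closedBall _ _)
  have hmemK : ∀ k, (q k, ℓ k) ∈ K := by
    intro k
    constructor
    · intro i _
      simpa [Metric.mem_closedBall, dist_zero_right] using hqb k i
    · simpa [Metric.mem_closedBall, dist_zero_right] using hL k
  obtain ⟨⟨q0, ℓ0⟩, -, φ, hφ, hlim⟩ := hK.tendsto_subseq hmemK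
  have hq0 : ∀ i, Filter.Tendsto (fun k => q (φ k) i) Filter.atTop (nhds (q0 i)) := by
    intro i
    exact (((continuous_apply i).comp continuous_fst).tendsto _).comp hlim
  have hℓ0 : Filter.Tendsto (fun k => ℓ (φ k)) Filter.atTop (nhds ℓ0) :=
    (continuous_snd.tendsto _).comp hlim
  refine ⟨q0, ℓ0, ?_, ?_⟩
  · funext e
    have h1 : Filter.Tendsto (fun k => (u (φ k)).1 e) Filter.atTop (nhds (x.1 e)) :=
      (hx1 e).comp hφ.tendsto_atTop
    have h2 : Filter.Tendsto (fun k => (u (φ k)).1 e) Filter.atTop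
        (nhds (‖edgeVec t h z q0 ℓ0 e‖ ^ 2)) := by
      have heq : ∀ k, (u (φ k)).1 e = ‖edgeVec t h z (q (φ k)) (ℓ (φ k)) e‖ ^ 2 := by
        intro k; rw [hp (φ k), hqe (φ k) e]
      simp only [heq]
      have htend : Filter.Tendsto (fun k => edgeVec t h z (q (φ k)) (ℓ (φ k)) e)
          Filter.atTop (nhds (edgeVec t h z q0 ℓ0 e)) := by
        simp only [edgeVec]
        exact ((hq0 (h e)).add (hℓ0.const_smul _)).sub (hq0 (t e))
      exact (htend.norm).pow 2
    exact tendsto_nhds_unique h1 h2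
  · have h1 : Filter.Tendsto (fun k => (u (φ k)).2) Filter.atTop (nhds x.2) :=
      hx2.comp hφ.tendsto_atTop
    have h2 : Filter.Tendsto (fun k => (u (φ k)).2) Filter.atTop (nhds (‖ℓ0‖ ^ 2)) := by
      simp only [fun k => hℓ (φ k)]
      exact (hℓ0.norm).pow 2
    exact tendsto_nhds_unique h1 h2
end

section
/- Failure of the conic condition yields a lower-dimensional equivalent framework (Proposition 4.1): Let (n, E, t, h, z) be ℤ-labelled graph data, let d ≥ 1, p̂ : Fin n → ℝ^d, and let ℓ ∈ ℝ^d be nonzero. Suppose there exists a nonzero real symmetric d×d matrix S with v_eᵀ S v_e = 0 for all e ∈ E and ℓᵀ S ℓ = 0, where v_e := p̂(h e) + z e • ℓ − p̂(t e). Then there exists a real symmetric d×d matrix A with rank A ≤ d − 1 such that ‖A v_e‖ = ‖v_e‖ for every e ∈ E and ‖A ℓ‖ = ‖ℓ‖; consequently the periodic framework (A ∘ p̂, A ℓ) is equivalent to (p̂, ℓ) and has affine dimension at most d − 1. -/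
/-- The quadratic form `vᵀ S v` of a `d × d` matrix `S` evaluated at a vector `v ∈ ℝ^d`. -/
noncomputable def quadForm {d : ℕ} (S : Matrix (Fin d) (Fin d) ℝ)
    (v : EuclideanSpace ℝ (Fin d)) : ℝ :=
  ∑ i, ∑ j, S i j * v i * v j

open Matrix

/-- Proposition 4.1: if a periodic framework `(p, ℓ)` in `ℝ^d` does not satisfy the conic
condition, i.e. there is a nonzero symmetric matrix `S` with `v_eᵀ S v_e = 0` for every
edge `e` and `ℓᵀ S ℓ = 0`, then there is a symmetric matrix `A` of rank at most `d - 1`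
with `‖A v_e‖ = ‖v_e‖` for every edge `e` and `‖A ℓ‖ = ‖ℓ‖`; consequently the periodic
framework `(A ∘ p, A ℓ)` is equivalent to `(p, ℓ)` and its affine dimension is at most
`d - 1`. -/
theorem conic_condition_failure_lower_dim (n : ℕ) (hn : 1 ≤ n) (E : Type*) [Fintype E]
    (t h : E → Fin n) (z : E → ℤ) (d : ℕ) (hd : 1 ≤ d)
    (p : Fin n → EuclideanSpace ℝ (Fin d)) (ℓ : EuclideanSpace ℝ (Fin d)) (hℓ : ℓ ≠ 0)
    (S : Matrix (Fin d) (Fin d) ℝ) (hS : S.IsSymm) (hS0 : S ≠ 0)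
    (hSe : ∀ e : E, quadForm S (edgeVec t h z p ℓ e) = 0)
    (hSl : quadForm S ℓ = 0) :
    ∃ A : Matrix (Fin d) (Fin d) ℝ, A.IsSymm ∧ A.rank ≤ d - 1 ∧
      (∀ e : E, ‖Matrix.toEuclideanLin A (edgeVec t h z p ℓ e)‖ = ‖edgeVec t h z p ℓ e‖) ∧
      ‖Matrix.toEuclideanLin A ℓ‖ = ‖ℓ‖ ∧
      Module.finrank ℝ (vectorSpan ℝ {x : EuclideanSpace ℝ (Fin d) |
        ∃ (i : Fin n) (γ : ℤ),
          x = Matrix.toEuclideanLin A (p i) + (γ : ℝ) • Matrix.toEuclideanLin A ℓ}) ≤ d - 1 := by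
  classical
  have hH : S.IsHermitian := by
    rw [Matrix.IsHermitian, Matrix.conjTranspose_eq_transpose_of_trivial]
    exact hS
  set μ := hH.eigenvalues with hμdef
  set U : Matrix (Fin d) (Fin d) ℝ := (hH.eigenvectorUnitary : Matrix (Fin d) (Fin d) ℝ) with hUdef
  have hUsU : star U * U = 1 := hH.eigenvectorUnitary.2.1
  have hUUs : U * star U = 1 := hH.eigenvectorUnitary.2.2
  have hST : S = U * Matrix.diagonal μ * star U := by
    have := hH.spectral_theorem
    simpa [Function.comp] using this
  -- a nonzero eigenvalue exists
  have hμ0 : ∃ j, μ j ≠ 0 := by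
    by_contra hc
    push_neg at hc
    have hdz : Matrix.diagonal μ = 0 := by
      rw [show μ = fun _ => (0 : ℝ) from funext hc]; exact Matrix.diagonal_zero
    exact hS0 (by rw [hST, hdz, Matrix.mul_zero, Matrix.zero_mul])
  -- pick an eigenvalue of maximal absolute value
  have hne : (Finset.univ : Finset (Fin d)).Nonempty := ⟨⟨0, hd⟩, Finset.mem_univ _⟩
  obtain ⟨k, -, hk⟩ := Finset.exists_max_image Finset.univ (fun i => |μ i|) hne
  have hk0 : μ k ≠ 0 := by
    obtain ⟨j, hj⟩ := hμ0
    intro h0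
    have := hk j (Finset.mem_univ j)
    rw [h0, abs_zero] at this
    exact hj (abs_nonpos_iff.mp this)
  set c : Fin d → ℝ := fun i => Real.sqrt (1 - μ i / μ k) with hcdef
  have hcnn : ∀ i, 0 ≤ 1 - μ i / μ k := by
    intro i
    have h1 : μ i / μ k ≤ 1 := by
      calc μ i / μ k ≤ |μ i / μ k| := le_abs_self _
        _ = |μ i| / |μ k| := abs_div _ _
        _ ≤ 1 := div_le_one_of_le₀ (hk i (Finset.mem_univ i)) (abs_nonneg _)
    linarith
  have hck : c k = 0 := by simp [hcdef, div_self hk0]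
  set A : Matrix (Fin d) (Fin d) ℝ := U * Matrix.diagonal c * star U with hAdef
  -- A is symmetric
  have hAsymm : A.IsSymm := by
    simp [Matrix.IsSymm, hAdef, Matrix.transpose_mul, Matrix.star_eq_conjTranspose,
      Matrix.conjTranspose_eq_transpose_of_trivial, Matrix.mul_assoc]
  -- A * A = 1 - (μ k)⁻¹ • S
  have hAA : A * A = 1 - (μ k)⁻¹ • S := by
    have h1 : A * A = U * (Matrix.diagonal c * Matrix.diagonal c) * star U := by
      rw [show A * A = U * (Matrix.diagonal c * ((star U * U) * (Matrix.diagonal c * star U)))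
        from by simp only [hAdef, Matrix.mul_assoc], hUsU, Matrix.one_mul]
      simp only [Matrix.mul_assoc]
    have h2 : Matrix.diagonal c * Matrix.diagonal c
        = Matrix.diagonal (fun i => 1 - μ i / μ k) := by
      have hcc : (fun i => c i * c i) = fun i => 1 - μ i / μ k :=
        funext fun i => Real.mul_self_sqrt (hcnn i)
      rw [Matrix.diagonal_mul_diagonal, hcc]
    have h3 : Matrix.diagonal (fun i => 1 - μ i / μ k)
        = 1 - (μ k)⁻¹ • Matrix.diagonal μ := by
      ext i j
      rcases eq_or_ne i j with rfl | hij
      · simp [Matrix.one_apply_eq, div_eq_inv_mul]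
      · simp [Matrix.diagonal_apply_ne _ hij, Matrix.one_apply_ne hij]
    rw [h1, h2, h3, Matrix.mul_sub, Matrix.sub_mul, Matrix.mul_one, hUUs,
      Matrix.mul_smul, Matrix.smul_mul, hST]
  -- rank bound
  have hdetU : IsUnit U.det := IsUnit.of_mul_eq_one (star U).det
    (by rw [← Matrix.det_mul, hUUs, Matrix.det_one])
  have hdetUs : IsUnit (star U).det := IsUnit.of_mul_eq_one U.det
    (by rw [← Matrix.det_mul, hUsU, Matrix.det_one])
  have hrank : A.rank ≤ d - 1 := by
    have e1 : A.rank = (Matrix.diagonal c).rank := by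
      rw [hAdef, Matrix.rank_mul_eq_left_of_isUnit_det _ _ hdetUs,
        Matrix.rank_mul_eq_right_of_isUnit_det _ _ hdetU]
    rw [e1, Matrix.rank_diagonal]
    have h4 : Fintype.card {i // c i ≠ 0} ≤ Fintype.card {i : Fin d // i ≠ k} :=
      Fintype.card_subtype_mono _ _ (fun i hi => by rintro rfl; exact hi hck)
    have h5 : Fintype.card {i : Fin d // i ≠ k} = d - 1 := by
      simp [Fintype.card_subtype_compl, Fintype.card_subtype_eq]
    exact le_trans h4 (le_of_eq h5)
  -- norm preservation
  have hnorm : ∀ v : EuclideanSpace ℝ (Fin d), quadForm S v = 0 →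
      ‖Matrix.toEuclideanLin A v‖ = ‖v‖ := by
    intro v hv
    rw [norm_eq_sqrt_real_inner (Matrix.toEuclideanLin A v), norm_eq_sqrt_real_inner v]
    congr 1
    have hW : ∀ x y : EuclideanSpace ℝ (Fin d),
        (inner ℝ x y : ℝ) = dotProduct (WithLp.equiv 2 (Fin d → ℝ) x) (WithLp.equiv 2 (Fin d → ℝ) y) := by
      intro x y
      simp [PiLp.inner_apply, dotProduct, RCLike.inner_apply, mul_comm]
    rw [hW, hW, show WithLp.equiv 2 (Fin d → ℝ) (Matrix.toEuclideanLin A v) = A *ᵥ WithLp.equiv 2 (Fin d → ℝ) v from rfl]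
    set w : Fin d → ℝ := WithLp.equiv 2 (Fin d → ℝ) v with hwdef
    have hq : (S *ᵥ w) ⬝ᵥ w = 0 := by
      rw [← hv]
      simp only [dotProduct, Matrix.mulVec, quadForm, Finset.sum_mul]
      refine Finset.sum_congr rfl fun i _ => Finset.sum_congr rfl fun j _ => ?_
      rw [show w j = v j from rfl, show w i = v i from rfl]
      ring
    rw [Matrix.dotProduct_mulVec, ← Matrix.mulVec_transpose, hAsymm.eq, Matrix.mulVec_mulVec,
      hAA, Matrix.sub_mulVec, Matrix.smul_mulVec, Matrix.one_mulVec,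
      sub_dotProduct, smul_dotProduct, hq]
    simp
  -- range and span facts
  have hrankT : Module.finrank ℝ (LinearMap.range (Matrix.toEuclideanLin A)) = A.rank := by
    rw [Matrix.toEuclideanLin_eq_toLin_orthonormal]
    exact (Matrix.rank_eq_finrank_range_toLin A _ _).symm
  refine ⟨A, hAsymm, hrank, fun e => hnorm _ (hSe e), hnorm ℓ hSl, ?_⟩
  have hspan : vectorSpan ℝ {x : EuclideanSpace ℝ (Fin d) |
      ∃ (i : Fin n) (γ : ℤ),
        x = Matrix.toEuclideanLin A (p i) + (γ : ℝ) • Matrix.toEuclideanLin A ℓ}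
      ≤ LinearMap.range (Matrix.toEuclideanLin A) := by
    rw [vectorSpan_def]
    rw [Submodule.span_le]
    rintro x ⟨a, ⟨i, γ, rfl⟩, b, ⟨j, δ, rfl⟩, rfl⟩
    refine ⟨p i + (γ : ℝ) • ℓ - (p j + (δ : ℝ) • ℓ), ?_⟩
    simp only [map_sub, map_add, _root_.map_smul, vsub_eq_sub]
  calc Module.finrank ℝ (vectorSpan ℝ {x : EuclideanSpace ℝ (Fin d) |
        ∃ (i : Fin n) (γ : ℤ),
          x = Matrix.toEuclideanLin A (p i) + (γ : ℝ) • Matrix.toEuclideanLin A ℓ})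
      ≤ Module.finrank ℝ (LinearMap.range (Matrix.toEuclideanLin A)) :=
        Submodule.finrank_mono hspan
    _ = A.rank := hrankT
    _ ≤ d - 1 := hrank
end

section
/- Invariance of equilibrium stresses under change of representatives (Lemma 5.1): Let (n, E, t, h, z) be ℤ-labelled graph data, p̂ : Fin n → ℝ^d, ℓ ∈ ℝ^d, and fix i₀ ∈ Fin n and γ ∈ ℤ. Define the switched labels z' by z' e = z e + γ if t e = i₀ and h e ≠ i₀, z' e = z e − γ if h e = i₀ and t e ≠ i₀, and z' e = z e otherwise; define p̂' by p̂' i₀ = p̂ i₀ + γ • ℓ and p̂' j = p̂ j for j ≠ i₀. Then a stress (ω, ω_L) satisfies the equilibrium equations with respect to (z, p̂, ℓ) if and only if it satisfies the equilibrium equations with respect to (z', p̂', ℓ). -/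
/-- A stress `(ω, ωL)` satisfies the equilibrium equations with respect to labels `z`,
point configuration `p` and lattice vector `ℓ`:
(eq1) at every vertex `i`, the weighted sum of incoming non-selfloop edge vectors minus
the weighted sum of outgoing non-selfloop edge vectors vanishes, and
(eq2) `Σ_e (ω e · z e) • v_e + ωL • ℓ = 0`. -/
def IsEquilibrium {n : ℕ} {E : Type*} [Fintype E] {d : ℕ} (t h : E → Fin n) (z : E → ℤ)
    (p : Fin n → EuclideanSpace ℝ (Fin d)) (ℓ : EuclideanSpace ℝ (Fin d))
    (ω : E → ℝ) (ωL : ℝ) : Prop :=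
  (∀ i : Fin n,
    (∑ e : E, if h e = i ∧ t e ≠ h e then ω e • edgeVec t h z p ℓ e else 0) -
    (∑ e : E, if t e = i ∧ t e ≠ h e then ω e • edgeVec t h z p ℓ e else 0) = 0) ∧
  (∑ e : E, (ω e * (z e : ℝ)) • edgeVec t h z p ℓ e) + ωL • ℓ = 0

/-- Lemma 5.1: the equilibrium equations are invariant under switching a vertex `i₀` by
`γ ∈ ℤ`, i.e. under replacing the labels by the switched labels `z'` and the position of
`i₀` by `p i₀ + γ • ℓ`. -/
theorem equilibrium_switching_invariant (n : ℕ) (hn : 1 ≤ n) (E : Type*) [Fintype E]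
    (t h : E → Fin n) (z : E → ℤ) (d : ℕ)
    (p : Fin n → EuclideanSpace ℝ (Fin d)) (ℓ : EuclideanSpace ℝ (Fin d))
    (i₀ : Fin n) (γ : ℤ) (ω : E → ℝ) (ωL : ℝ) :
    IsEquilibrium t h z p ℓ ω ωL ↔
      IsEquilibrium t h
        (fun e => if t e = i₀ ∧ h e ≠ i₀ then z e + γ
          else if h e = i₀ ∧ t e ≠ i₀ then z e - γ else z e)
        (Function.update p i₀ (p i₀ + (γ : ℝ) • ℓ)) ℓ ω ωL := by
  set z' : E → ℤ := fun e => if t e = i₀ ∧ h e ≠ i₀ then z e + γ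
    else if h e = i₀ ∧ t e ≠ i₀ then z e - γ else z e with hz'
  set p' := Function.update p i₀ (p i₀ + (γ : ℝ) • ℓ) with hp'
  have hvec : ∀ e : E, edgeVec t h z' p' ℓ e = edgeVec t h z p ℓ e := by
    intro e
    simp only [edgeVec, hp', hz', Function.update_apply]
    by_cases h1 : t e = i₀ <;> by_cases h2 : h e = i₀ <;>
      simp only [h1, h2, if_true, if_false, ne_eq, not_true_eq_false, not_false_eq_true,
        and_true, and_false, true_and, false_and, if_neg (fun c : False => c)] <;>
      push_cast <;> module
  have key : ∀ e : E, (ω e * ((z' e : ℤ) : ℝ)) • edgeVec t h z p ℓ e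
      = (ω e * (z e : ℝ)) • edgeVec t h z p ℓ e
        + (γ : ℝ) • ((if t e = i₀ ∧ t e ≠ h e then ω e • edgeVec t h z p ℓ e else 0)
          - (if h e = i₀ ∧ t e ≠ h e then ω e • edgeVec t h z p ℓ e else 0)) := by
    intro e
    simp only [hz']
    by_cases h1 : t e = i₀ <;> by_cases h2 : h e = i₀ <;>
      simp only [h1, h2, if_true, if_false, ne_eq, not_true_eq_false, not_false_eq_true,
        and_true, and_false, true_and, false_and, Ne.symm, sub_zero, zero_sub,
        smul_zero, add_zero, sub_self] <;>
      push_cast <;> module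
  have hsum : (∑ e : E, (ω e * ((z' e : ℤ) : ℝ)) • edgeVec t h z p ℓ e)
      = (∑ e : E, (ω e * (z e : ℝ)) • edgeVec t h z p ℓ e)
        + (γ : ℝ) • ((∑ e : E, if t e = i₀ ∧ t e ≠ h e then ω e • edgeVec t h z p ℓ e else 0)
          - (∑ e : E, if h e = i₀ ∧ t e ≠ h e then ω e • edgeVec t h z p ℓ e else 0)) := by
    simp_rw [key]
    rw [Finset.sum_add_distrib, ← Finset.smul_sum, Finset.sum_sub_distrib]
  unfold IsEquilibrium
  simp only [hvec, hsum]
  refine and_congr_right fun heq1 => ?_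
  have h0 : (∑ e : E, if t e = i₀ ∧ t e ≠ h e then ω e • edgeVec t h z p ℓ e else 0)
      - (∑ e : E, if h e = i₀ ∧ t e ≠ h e then ω e • edgeVec t h z p ℓ e else 0) = 0 := by
    have h01 := sub_eq_zero.mp (heq1 i₀)
    rw [h01]
    exact sub_self _
  rw [h0, smul_zero, add_zero]
end

section
/- Invariance of the stress-matrix signature under switching (Lemma 5.2): Let (n, E, t, h, z) be ℤ-labelled graph data, fix i₀ ∈ Fin n and γ ∈ ℤ, and let z' be the switched labels: z' e = z e + γ if t e = i₀ and h e ≠ i₀, z' e = z e − γ if h e = i₀ and t e ≠ i₀, and z' e = z e otherwise. Then for every stress (ω, ω_L), the symmetric matrices L_{z,ω} := Σ_{e ∈ E} ω e · F_e(z) + ω_L · F_L and L_{z',ω} := Σ_{e ∈ E} ω e · F_e(z') + ω_L · F_L have the same numbers of positive eigenvalues, of negative eigenvalues, and of zero eigenvalues (counted with multiplicity). -/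
/-- The indicator vector `i_e(z) = e_{h e} - e_{t e} + z e · e_{n+1} ∈ ℝ^{n+1}` of an
edge `e` of ℤ-labelled graph data. -/
noncomputable def ivec {n : ℕ} {E : Type*} (t h : E → Fin n) (z : E → ℤ) (e : E) :
    Fin (n + 1) → ℝ :=
  fun k => (if k = (h e).castSucc then 1 else 0) - (if k = (t e).castSucc then 1 else 0) +
    (if k = Fin.last n then (z e : ℝ) else 0)

/-- The rank one matrix `F_e(z) = i_e(z) i_e(z)ᵀ`. -/
noncomputable def Fmat {n : ℕ} {E : Type*} (t h : E → Fin n) (z : E → ℤ) (e : E) :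
    Matrix (Fin (n + 1)) (Fin (n + 1)) ℝ :=
  Matrix.vecMulVec (ivec t h z e) (ivec t h z e)

/-- The matrix `F_L = e_{n+1} e_{n+1}ᵀ`. -/
noncomputable def FLmat (n : ℕ) : Matrix (Fin (n + 1)) (Fin (n + 1)) ℝ :=
  Matrix.vecMulVec (fun k => if k = Fin.last n then 1 else 0)
    (fun k => if k = Fin.last n then 1 else 0)

/-- The stress matrix `L_{z,ω} = Σ_e ω e • F_e(z) + ωL • F_L` of a stress `(ω, ωL)`. -/
noncomputable def Lmat {n : ℕ} {E : Type*} [Fintype E] (t h : E → Fin n) (z : E → ℤ)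
    (ω : E → ℝ) (ωL : ℝ) : Matrix (Fin (n + 1)) (Fin (n + 1)) ℝ :=
  (∑ e : E, ω e • Fmat t h z e) + ωL • FLmat n


section Sylvester

open Matrix Module Submodule Finset

variable {N : ℕ}

noncomputable def qf (A : Matrix (Fin N) (Fin N) ℝ) (x : EuclideanSpace ℝ (Fin N)) : ℝ :=
  inner ℝ x (Matrix.toEuclideanLin A x)

lemma toEuclideanLin_mul_apply (M P : Matrix (Fin N) (Fin N) ℝ) (x : EuclideanSpace ℝ (Fin N)) :
    Matrix.toEuclideanLin (M * P) x = Matrix.toEuclideanLin M (Matrix.toEuclideanLin P x) := by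
  simp [Matrix.toEuclideanLin_apply, Matrix.mulVec_mulVec]

lemma real_transpose_eq_conjTranspose (P : Matrix (Fin N) (Fin N) ℝ) : Pᵀ = Pᴴ := by
  ext i j; simp [Matrix.conjTranspose_apply]

lemma qf_congruence (A P : Matrix (Fin N) (Fin N) ℝ) (x : EuclideanSpace ℝ (Fin N)) :
    qf (P * A * Pᵀ) x = qf A (Matrix.toEuclideanLin Pᵀ x) := by
  unfold qf
  rw [toEuclideanLin_mul_apply, toEuclideanLin_mul_apply]
  rw [real_transpose_eq_conjTranspose P, Matrix.toEuclideanLin_conjTranspose_eq_adjoint,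
    LinearMap.adjoint_inner_left]

lemma qf_eigen {A : Matrix (Fin N) (Fin N) ℝ} (hA : A.IsHermitian)
    (x : EuclideanSpace ℝ (Fin N)) :
    qf A x = ∑ i, hA.eigenvalues i * (hA.eigenvectorBasis.repr x i) ^ 2 := by
  set b := hA.eigenvectorBasis with hb
  have hTb : ∀ i, Matrix.toEuclideanLin A (b i) = hA.eigenvalues i • b i := by
    intro i
    apply (WithLp.equiv 2 _).injective
    simp only [WithLp.equiv_apply, Matrix.piLp_ofLp_toEuclideanLin]
    have := hA.mulVec_eigenvectorBasis i
    simpa [Matrix.toLin'_apply] using this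
  have hsym := (Matrix.isHermitian_iff_isSymmetric.mp hA)
  have hrepr : ∀ i, b.repr (Matrix.toEuclideanLin A x) i = hA.eigenvalues i * b.repr x i := by
    intro i
    rw [OrthonormalBasis.repr_apply_apply, OrthonormalBasis.repr_apply_apply,
      ← hsym (b i) x, hTb i, real_inner_smul_left]
  have hinner : (inner ℝ x (Matrix.toEuclideanLin A x) : ℝ)
      = ∑ i, (b.repr x i) * (b.repr (Matrix.toEuclideanLin A x) i) := by
    rw [← b.repr.inner_map_map x (Matrix.toEuclideanLin A x), PiLp.inner_apply]
    simp [RCLike.inner_apply, starRingEnd_apply, mul_comm]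
  rw [qf, hinner]
  refine Finset.sum_congr rfl fun i _ => ?_
  rw [hrepr i]; ring

lemma repr_zero_of_mem_span (b : OrthonormalBasis (Fin N) ℝ (EuclideanSpace ℝ (Fin N)))
    {s : Set (Fin N)} {x : EuclideanSpace ℝ (Fin N)}
    (hx : x ∈ span ℝ (⇑b '' s)) {i : Fin N} (hi : i ∉ s) : b.repr x i = 0 := by
  rw [← b.coe_toBasis, Basis.mem_span_image] at hx
  rw [← b.coe_toBasis_repr_apply]
  exact Finsupp.notMem_support_iff.mp (fun hmem => hi (hx hmem))

lemma finrank_span_image (b : OrthonormalBasis (Fin N) ℝ (EuclideanSpace ℝ (Fin N)))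
    (s : Set (Fin N)) : finrank ℝ (span ℝ (⇑b '' s)) = Nat.card s := by
  classical
  have li : LinearIndependent ℝ (fun i : s => b i) :=
    b.orthonormal.linearIndependent.comp Subtype.val Subtype.val_injective
  have h := finrank_span_eq_card li
  rw [← Set.image_eq_range] at h
  rw [h, Nat.card_eq_fintype_card]

lemma posdef_subspace_finrank_le {B : Matrix (Fin N) (Fin N) ℝ} (hB : B.IsHermitian)
    (W : Submodule ℝ (EuclideanSpace ℝ (Fin N)))
    (hW : ∀ x ∈ W, x ≠ 0 → 0 < qf B x) :
    finrank ℝ W ≤ Nat.card {k // 0 < hB.eigenvalues k} := by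
  classical
  set b := hB.eigenvectorBasis with hb
  set s : Set (Fin N) := {i | 0 < hB.eigenvalues i} with hs
  set U : Submodule ℝ (EuclideanSpace ℝ (Fin N)) := span ℝ (⇑b '' sᶜ) with hU
  have hUnp : ∀ x ∈ U, qf B x ≤ 0 := by
    intro x hx
    rw [qf_eigen hB]
    apply Finset.sum_nonpos
    intro i _
    by_cases his : i ∈ sᶜ
    · have hle : hB.eigenvalues i ≤ 0 := le_of_not_gt his
      exact mul_nonpos_of_nonpos_of_nonneg hle (sq_nonneg _)
    · rw [repr_zero_of_mem_span b hx his]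
      simp
  have hdisj : Disjoint W U := by
    rw [Submodule.disjoint_def]
    intro x hxW hxU
    by_contra hx0
    exact absurd (hUnp x hxU) (not_le.mpr (hW x hxW hx0))
  have hle := Submodule.finrank_add_finrank_le_of_disjoint hdisj
  rw [finrank_euclideanSpace_fin] at hle
  have hUr : finrank ℝ U = Nat.card ↥(sᶜ) := finrank_span_image b sᶜ
  have hcompl : Nat.card ↥s + Nat.card ↥(sᶜ) = N := by
    rw [Nat.card_coe_set_eq, Nat.card_coe_set_eq, Set.ncard_add_ncard_compl]
    simp [Nat.card_eq_fintype_card]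
  have : Nat.card {k // 0 < hB.eigenvalues k} = Nat.card ↥s := rfl
  omega

lemma span_posdef {B : Matrix (Fin N) (Fin N) ℝ} (hB : B.IsHermitian) :
    ∀ x ∈ span ℝ (⇑hB.eigenvectorBasis '' {i | 0 < hB.eigenvalues i}), x ≠ 0 → 0 < qf B x := by
  intro x hx hx0
  rw [qf_eigen hB]
  have hrne : hB.eigenvectorBasis.repr x ≠ 0 := fun hc => hx0 (by
    apply hB.eigenvectorBasis.repr.injective
    simpa using hc)
  obtain ⟨i, hi⟩ : ∃ i, hB.eigenvectorBasis.repr x i ≠ 0 := by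
    by_contra hc
    push_neg at hc
    exact hrne (by ext j; simpa using hc j)
  have hiS : i ∈ {i | 0 < hB.eigenvalues i} := by
    by_contra hc
    exact hi (repr_zero_of_mem_span _ hx hc)
  apply Finset.sum_pos'
  · intro j _
    by_cases hj : j ∈ {i | 0 < hB.eigenvalues i}
    · exact mul_nonneg (le_of_lt hj) (sq_nonneg _)
    · rw [repr_zero_of_mem_span _ hx hj]; simp
  · exact ⟨i, Finset.mem_univ i, mul_pos hiS (by positivity)⟩

set_option maxHeartbeats 1000000 in
lemma posCount_le {A B P P' : Matrix (Fin N) (Fin N) ℝ} (hA : A.IsHermitian) (hB : B.IsHermitian)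
    (h1 : P * P' = 1) (h2 : P' * P = 1) (hBA : B = P * A * Pᵀ) :
    Nat.card {k // 0 < hA.eigenvalues k} ≤ Nat.card {k // 0 < hB.eigenvalues k} := by
  classical
  have ht1 : Pᵀ * P'ᵀ = 1 := by rw [← Matrix.transpose_mul, h2, Matrix.transpose_one]
  have ht2 : P'ᵀ * Pᵀ = 1 := by rw [← Matrix.transpose_mul, h1, Matrix.transpose_one]
  set e : EuclideanSpace ℝ (Fin N) ≃ₗ[ℝ] EuclideanSpace ℝ (Fin N) :=
    LinearEquiv.ofLinear (Matrix.toEuclideanLin Pᵀ) (Matrix.toEuclideanLin P'ᵀ)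
      (LinearMap.ext fun x => by
        simp only [LinearMap.comp_apply, LinearMap.id_apply, ← toEuclideanLin_mul_apply, ht1]
        simp [Matrix.toEuclideanLin_apply, Matrix.one_mulVec])
      (LinearMap.ext fun x => by
        simp only [LinearMap.comp_apply, LinearMap.id_apply, ← toEuclideanLin_mul_apply, ht2]
        simp [Matrix.toEuclideanLin_apply, Matrix.one_mulVec]) with he
  have hex : ∀ x, e x = Matrix.toEuclideanLin Pᵀ x := fun x => rfl
  have hq : ∀ x, qf B x = qf A (e x) := fun x => by rw [hBA, qf_congruence, hex]
  set s : Set (Fin N) := {i | 0 < hA.eigenvalues i} with hs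
  set W : Submodule ℝ (EuclideanSpace ℝ (Fin N)) :=
    span ℝ (⇑hA.eigenvectorBasis '' s) with hW
  have hW' : ∀ x ∈ W.map (e.symm : _ →ₗ[ℝ] _), x ≠ 0 → 0 < qf B x := by
    intro x hx hx0
    obtain ⟨w, hwW, hwx⟩ := hx
    have hew : e x = w := by rw [← hwx]; simp
    rw [hq x, hew]
    exact span_posdef hA w hwW (fun hc => hx0 (by rw [← hwx, hc]; simp))
  have hcard : Nat.card {k // 0 < hA.eigenvalues k} = finrank ℝ W := by
    rw [hW, finrank_span_image]
    rfl
  have h2' := LinearEquiv.finrank_map_eq e.symm W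
  have h3 := posdef_subspace_finrank_le hB (W.map (e.symm : _ →ₗ[ℝ] _)) hW'
  omega

lemma negdef_subspace_finrank_le {B : Matrix (Fin N) (Fin N) ℝ} (hB : B.IsHermitian)
    (W : Submodule ℝ (EuclideanSpace ℝ (Fin N)))
    (hW : ∀ x ∈ W, x ≠ 0 → qf B x < 0) :
    finrank ℝ W ≤ Nat.card {k // hB.eigenvalues k < 0} := by
  classical
  set b := hB.eigenvectorBasis with hb
  set s : Set (Fin N) := {i | hB.eigenvalues i < 0} with hs
  set U : Submodule ℝ (EuclideanSpace ℝ (Fin N)) := span ℝ (⇑b '' sᶜ) with hU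
  have hUnp : ∀ x ∈ U, 0 ≤ qf B x := by
    intro x hx
    rw [qf_eigen hB]
    apply Finset.sum_nonneg
    intro i _
    by_cases his : i ∈ sᶜ
    · exact mul_nonneg (le_of_not_gt his) (sq_nonneg _)
    · rw [repr_zero_of_mem_span b hx his]
      simp
  have hdisj : Disjoint W U := by
    rw [Submodule.disjoint_def]
    intro x hxW hxU
    by_contra hx0
    exact absurd (hUnp x hxU) (not_le.mpr (hW x hxW hx0))
  have hle := Submodule.finrank_add_finrank_le_of_disjoint hdisj
  rw [finrank_euclideanSpace_fin] at hle
  have hUr : finrank ℝ U = Nat.card ↥(sᶜ) := finrank_span_image b sᶜ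
  have hcompl : Nat.card ↥s + Nat.card ↥(sᶜ) = N := by
    rw [Nat.card_coe_set_eq, Nat.card_coe_set_eq, Set.ncard_add_ncard_compl]
    simp [Nat.card_eq_fintype_card]
  have : Nat.card {k // hB.eigenvalues k < 0} = Nat.card ↥s := rfl
  omega

lemma span_negdef {B : Matrix (Fin N) (Fin N) ℝ} (hB : B.IsHermitian) :
    ∀ x ∈ span ℝ (⇑hB.eigenvectorBasis '' {i | hB.eigenvalues i < 0}), x ≠ 0 → qf B x < 0 := by
  intro x hx hx0
  rw [qf_eigen hB, ← neg_pos, ← Finset.sum_neg_distrib]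
  have hrne : hB.eigenvectorBasis.repr x ≠ 0 := fun hc => hx0 (by
    apply hB.eigenvectorBasis.repr.injective
    simpa using hc)
  obtain ⟨i, hi⟩ : ∃ i, hB.eigenvectorBasis.repr x i ≠ 0 := by
    by_contra hc
    push_neg at hc
    exact hrne (by ext j; simpa using hc j)
  have hiS : i ∈ {i | hB.eigenvalues i < 0} := by
    by_contra hc
    exact hi (repr_zero_of_mem_span _ hx hc)
  apply Finset.sum_pos'
  · intro j _
    by_cases hj : j ∈ {i | hB.eigenvalues i < 0}
    · rw [neg_nonneg]
      exact mul_nonpos_of_nonpos_of_nonneg (le_of_lt hj) (sq_nonneg _)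
    · rw [repr_zero_of_mem_span _ hx hj]; simp
  · refine ⟨i, Finset.mem_univ i, ?_⟩
    rw [neg_pos]
    exact mul_neg_of_neg_of_pos hiS (by positivity)

set_option maxHeartbeats 1000000 in
lemma negCount_le {A B P P' : Matrix (Fin N) (Fin N) ℝ} (hA : A.IsHermitian) (hB : B.IsHermitian)
    (h1 : P * P' = 1) (h2 : P' * P = 1) (hBA : B = P * A * Pᵀ) :
    Nat.card {k // hA.eigenvalues k < 0} ≤ Nat.card {k // hB.eigenvalues k < 0} := by
  classical
  have ht1 : Pᵀ * P'ᵀ = 1 := by rw [← Matrix.transpose_mul, h2, Matrix.transpose_one]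
  have ht2 : P'ᵀ * Pᵀ = 1 := by rw [← Matrix.transpose_mul, h1, Matrix.transpose_one]
  set e : EuclideanSpace ℝ (Fin N) ≃ₗ[ℝ] EuclideanSpace ℝ (Fin N) :=
    LinearEquiv.ofLinear (Matrix.toEuclideanLin Pᵀ) (Matrix.toEuclideanLin P'ᵀ)
      (LinearMap.ext fun x => by
        simp only [LinearMap.comp_apply, LinearMap.id_apply, ← toEuclideanLin_mul_apply, ht1]
        simp [Matrix.toEuclideanLin_apply, Matrix.one_mulVec])
      (LinearMap.ext fun x => by
        simp only [LinearMap.comp_apply, LinearMap.id_apply, ← toEuclideanLin_mul_apply, ht2]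
        simp [Matrix.toEuclideanLin_apply, Matrix.one_mulVec]) with he
  have hex : ∀ x, e x = Matrix.toEuclideanLin Pᵀ x := fun x => rfl
  have hq : ∀ x, qf B x = qf A (e x) := fun x => by rw [hBA, qf_congruence, hex]
  set s : Set (Fin N) := {i | hA.eigenvalues i < 0} with hs
  set W : Submodule ℝ (EuclideanSpace ℝ (Fin N)) :=
    span ℝ (⇑hA.eigenvectorBasis '' s) with hW
  have hW' : ∀ x ∈ W.map (e.symm : _ →ₗ[ℝ] _), x ≠ 0 → qf B x < 0 := by
    intro x hx hx0
    obtain ⟨w, hwW, hwx⟩ := hx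
    have hew : e x = w := by rw [← hwx]; simp
    rw [hq x, hew]
    exact span_negdef hA w hwW (fun hc => hx0 (by rw [← hwx, hc]; simp))
  have hcard : Nat.card {k // hA.eigenvalues k < 0} = finrank ℝ W := by
    rw [hW, finrank_span_image]
    rfl
  have h2' := LinearEquiv.finrank_map_eq e.symm W
  have h3 := negdef_subspace_finrank_le hB (W.map (e.symm : _ →ₗ[ℝ] _)) hW'
  omega

lemma counts_total {A : Matrix (Fin N) (Fin N) ℝ} (hA : A.IsHermitian) :
    Nat.card {k // 0 < hA.eigenvalues k} + Nat.card {k // hA.eigenvalues k < 0}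
      + Nat.card {k // hA.eigenvalues k = 0} = N := by
  classical
  rw [Nat.card_eq_fintype_card, Nat.card_eq_fintype_card, Nat.card_eq_fintype_card,
    Fintype.card_subtype, Fintype.card_subtype, Fintype.card_subtype,
    Finset.card_filter, Finset.card_filter, Finset.card_filter,
    ← Finset.sum_add_distrib, ← Finset.sum_add_distrib]
  have : ∀ k : Fin N, ((if 0 < hA.eigenvalues k then 1 else 0)
      + (if hA.eigenvalues k < 0 then 1 else 0) + (if hA.eigenvalues k = 0 then 1 else 0) : ℕ)
      = 1 := by
    intro k
    rcases lt_trichotomy (hA.eigenvalues k) 0 with hlt | heq | hgt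
    · simp [hlt, not_lt.mpr (le_of_lt hlt), ne_of_lt hlt]
    · simp [heq]
    · simp [hgt, not_lt.mpr (le_of_lt hgt), (ne_of_gt hgt)]
  rw [Finset.sum_congr rfl (fun k _ => this k)]
  simp

lemma counts_eq {A B P P' : Matrix (Fin N) (Fin N) ℝ} (hA : A.IsHermitian) (hB : B.IsHermitian)
    (h1 : P * P' = 1) (h2 : P' * P = 1) (hBA : B = P * A * Pᵀ) :
    Nat.card {k // 0 < hA.eigenvalues k} = Nat.card {k // 0 < hB.eigenvalues k} ∧
    Nat.card {k // hA.eigenvalues k < 0} = Nat.card {k // hB.eigenvalues k < 0} ∧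
    Nat.card {k // hA.eigenvalues k = 0} = Nat.card {k // hB.eigenvalues k = 0} := by
  have hAB : A = P' * B * P'ᵀ := by
    have ht : Pᵀ * P'ᵀ = 1 := by rw [← Matrix.transpose_mul, h2, Matrix.transpose_one]
    rw [hBA, show P' * (P * A * Pᵀ) * P'ᵀ = (P' * P) * A * (Pᵀ * P'ᵀ) from by noncomm_ring,
      h2, ht, Matrix.one_mul, Matrix.mul_one]
  have p1 := posCount_le hA hB h1 h2 hBA
  have p2 := posCount_le hB hA h2 h1 hAB
  have n1 := negCount_le hA hB h1 h2 hBA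
  have n2 := negCount_le hB hA h2 h1 hAB
  have t1 := counts_total hA
  have t2 := counts_total hB
  omega

end Sylvester

section App

open Matrix

lemma mul_vecMulVec_mul_transpose {N : ℕ} (P : Matrix (Fin N) (Fin N) ℝ) (v : Fin N → ℝ) :
    P * Matrix.vecMulVec v v * Pᵀ = Matrix.vecMulVec (P *ᵥ v) (P *ᵥ v) := by
  ext i j
  simp only [Matrix.mul_apply, Matrix.vecMulVec_apply, Matrix.transpose_apply,
    Matrix.mulVec, dotProduct]
  rw [Finset.sum_mul_sum, Finset.sum_comm]
  refine Finset.sum_congr rfl fun k _ => ?_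
  rw [Finset.sum_mul]
  refine Finset.sum_congr rfl fun l _ => ?_
  ring

lemma ivec_switch {n : ℕ} {E : Type*} (t h : E → Fin n) (z : E → ℤ) (i₀ : Fin n) (γ : ℤ)
    (e : E) :
    ivec t h (fun e => if t e = i₀ ∧ h e ≠ i₀ then z e + γ
        else if h e = i₀ ∧ t e ≠ i₀ then z e - γ else z e) e
      = Matrix.transvection (Fin.last n) i₀.castSucc (-(γ : ℝ)) *ᵥ ivec t h z e := by
  funext k
  rw [Matrix.transvection, Matrix.add_mulVec, Matrix.one_mulVec, Matrix.single_mulVec]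
  have hv : ivec t h z e i₀.castSucc
      = (if i₀ = h e then 1 else 0) - (if i₀ = t e then 1 else 0) := by
    simp [ivec, Fin.castSucc_inj, (Fin.castSucc_lt_last i₀).ne]
  by_cases hk : k = Fin.last n
  · subst hk
    have h1 : Fin.last n ≠ (h e).castSucc := (Fin.castSucc_lt_last (h e)).ne'
    have h2 : Fin.last n ≠ (t e).castSucc := (Fin.castSucc_lt_last (t e)).ne'
    simp only [ivec, h1, h2, if_false, if_pos rfl, Pi.add_apply, hv, Function.update_self]
    by_cases ht : t e = i₀ <;> by_cases hh : h e = i₀ <;>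
      simp [ht, hh, (Fin.castSucc_lt_last i₀).ne,
        show (i₀ = h e) ↔ (h e = i₀) from eq_comm,
        show (i₀ = t e) ↔ (t e = i₀) from eq_comm] <;> push_cast <;> ring
  · simp [ivec, Function.update, hk]

lemma Fmat_switch {n : ℕ} {E : Type*} (t h : E → Fin n) (z : E → ℤ) (i₀ : Fin n) (γ : ℤ)
    (e : E) :
    Fmat t h (fun e => if t e = i₀ ∧ h e ≠ i₀ then z e + γ
        else if h e = i₀ ∧ t e ≠ i₀ then z e - γ else z e) e
      = Matrix.transvection (Fin.last n) i₀.castSucc (-(γ : ℝ)) * Fmat t h z e *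
          (Matrix.transvection (Fin.last n) i₀.castSucc (-(γ : ℝ)))ᵀ := by
  rw [Fmat, Fmat, mul_vecMulVec_mul_transpose, ivec_switch]

lemma FLmat_switch {n : ℕ} (i₀ : Fin n) (γ : ℤ) :
    Matrix.transvection (Fin.last n) i₀.castSucc (-(γ : ℝ)) * FLmat n *
        (Matrix.transvection (Fin.last n) i₀.castSucc (-(γ : ℝ)))ᵀ = FLmat n := by
  unfold FLmat
  rw [mul_vecMulVec_mul_transpose]
  have : Matrix.transvection (Fin.last n) i₀.castSucc (-(γ : ℝ)) *ᵥ
      (fun k => if k = Fin.last n then 1 else 0) = (fun k => if k = Fin.last n then 1 else 0) := by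
    rw [Matrix.transvection, Matrix.add_mulVec, Matrix.one_mulVec, Matrix.single_mulVec]
    funext k
    simp [(Fin.castSucc_lt_last i₀).ne, Function.update]
  rw [this]

lemma Lmat_switch {n : ℕ} {E : Type*} [Fintype E] (t h : E → Fin n) (z : E → ℤ) (i₀ : Fin n)
    (γ : ℤ) (ω : E → ℝ) (ωL : ℝ) :
    Lmat t h (fun e => if t e = i₀ ∧ h e ≠ i₀ then z e + γ
        else if h e = i₀ ∧ t e ≠ i₀ then z e - γ else z e) ω ωL
      = Matrix.transvection (Fin.last n) i₀.castSucc (-(γ : ℝ)) * Lmat t h z ω ωL *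
          (Matrix.transvection (Fin.last n) i₀.castSucc (-(γ : ℝ)))ᵀ := by
  unfold Lmat
  rw [Matrix.mul_add, Matrix.add_mul]
  congr 1
  · rw [Matrix.mul_sum, Matrix.sum_mul]
    refine Finset.sum_congr rfl fun e _ => ?_
    rw [Fmat_switch, Matrix.mul_smul, Matrix.smul_mul]
  · rw [Matrix.mul_smul, Matrix.smul_mul, FLmat_switch]

end App

/-- Lemma 5.2: the signature of the stress matrix is invariant under switching.  For any
stress `(ω, ωL)`, the stress matrices with respect to labels `z` and the labels `z'`
switched at a vertex `i₀` by `γ` have the same numbers of positive, negative and zero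
eigenvalues (counted with multiplicity). -/
theorem stress_signature_switching_invariant (n : ℕ) (hn : 1 ≤ n) (E : Type*) [Fintype E]
    (t h : E → Fin n) (z : E → ℤ) (i₀ : Fin n) (γ : ℤ) (ω : E → ℝ) (ωL : ℝ)
    (hL : (Lmat t h z ω ωL).IsHermitian)
    (hL' : (Lmat t h
      (fun e => if t e = i₀ ∧ h e ≠ i₀ then z e + γ
        else if h e = i₀ ∧ t e ≠ i₀ then z e - γ else z e) ω ωL).IsHermitian) :
    Nat.card {k // 0 < hL.eigenvalues k} = Nat.card {k // 0 < hL'.eigenvalues k} ∧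
    Nat.card {k // hL.eigenvalues k < 0} = Nat.card {k // hL'.eigenvalues k < 0} ∧
    Nat.card {k // hL.eigenvalues k = 0} = Nat.card {k // hL'.eigenvalues k = 0} := by
  have hne : Fin.last n ≠ i₀.castSucc := (Fin.castSucc_lt_last i₀).ne'
  have h1 : Matrix.transvection (Fin.last n) i₀.castSucc (-(γ : ℝ)) *
      Matrix.transvection (Fin.last n) i₀.castSucc ((γ : ℝ)) = 1 := by
    rw [Matrix.transvection_mul_transvection_same _ _ hne]
    simp
  have h2 : Matrix.transvection (Fin.last n) i₀.castSucc ((γ : ℝ)) *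
      Matrix.transvection (Fin.last n) i₀.castSucc (-(γ : ℝ)) = 1 := by
    rw [Matrix.transvection_mul_transvection_same _ _ hne]
    simp
  exact counts_eq hL hL' h1 h2 (Lmat_switch t h z i₀ γ ω ωL)
end

section
/- Periodic super stability implies periodic universal rigidity (Proposition 5.4): Let (n, E, t, h, z) be ℤ-labelled graph data and let (p̂, ℓ) be a periodic framework of the data in ℝ^d (ℓ ≠ 0). Suppose there is a stress (ω, ω_L) satisfying the equilibrium equations with respect to (z, p̂, ℓ) whose stress matrix L_ω := Σ_{e ∈ E} ω e · F_e + ω_L · F_L is positive semidefinite of rank n − d, and suppose (p̂, ℓ) satisfies the conic condition. Then for every m' and every periodic framework (q̂, ℓ') of the data in ℝ^{m'} equivalent to (p̂, ℓ), one has ‖(q̂ j + γ • ℓ') − q̂ i‖ = ‖(p̂ j + γ • ℓ) − p̂ i‖ for all i, j ∈ Fin n and all γ ∈ ℤ (i.e., the lifted periodic frameworks are congruent). -/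
open Matrix in
private lemma ivec_dot' {n : ℕ} {E : Type*} (t h : E → Fin n) (z : E → ℤ) (e : E)
    (x : Fin (n+1) → ℝ) :
    ivec t h z e ⬝ᵥ x =
      x (Fin.castSucc (h e)) - x (Fin.castSucc (t e)) + (z e : ℝ) * x (Fin.last n) := by
  simp [ivec, dotProduct, add_mul, sub_mul, ite_mul, Finset.sum_add_distrib,
    Finset.sum_sub_distrib]

private lemma norm_sq_eq' {m : ℕ} (v : EuclideanSpace ℝ (Fin m)) : ‖v‖^2 = ∑ k, (v k)^2 := by
  rw [EuclideanSpace.norm_eq, Real.sq_sqrt (by positivity)]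
  simp [sq_abs]

private lemma sum_mul_self_eq' {d : ℕ} (a v : Fin d → ℝ) :
    ∑ i, ∑ j, (a i * a j) * v i * v j = (∑ r, a r * v r)^2 := by
  rw [sq, Finset.sum_mul_sum]
  exact Finset.sum_congr rfl fun i _ => Finset.sum_congr rfl fun j _ => by ring

private lemma eucl_sum_apply {m : ℕ} {ι : Type*} (s : Finset ι)
    (f : ι → EuclideanSpace ℝ (Fin m)) (k : Fin m) :
    (∑ i ∈ s, f i) k = ∑ i ∈ s, f i k :=
  by rw [WithLp.ofLp_sum, Finset.sum_apply]

open Matrix in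
private lemma Lmat_mulVec' {n : ℕ} {E : Type*} [Fintype E] (t h : E → Fin n) (z : E → ℤ)
    (ω : E → ℝ) (ωL : ℝ) (x : Fin (n+1) → ℝ) (j : Fin (n+1)) :
    (Lmat t h z ω ωL *ᵥ x) j =
      (∑ e : E, ω e * (ivec t h z e ⬝ᵥ x) * ivec t h z e j)
      + ωL * x (Fin.last n) * (if j = Fin.last n then 1 else 0) := by
  simp only [Matrix.mulVec, dotProduct, Lmat, Matrix.add_apply, Matrix.sum_apply,
    Matrix.smul_apply, Matrix.vecMulVec_apply, FLmat, Fmat, smul_eq_mul, add_mul,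
    Finset.sum_add_distrib, Finset.sum_mul, Finset.mul_sum]
  congr 1
  · rw [Finset.sum_comm]
    refine Finset.sum_congr rfl fun e _ => ?_
    exact Finset.sum_congr rfl fun i _ => by ring
  · rcases eq_or_ne j (Fin.last n) with hj | hj <;>
      simp [hj, ite_mul, mul_comm]

open Matrix in
private lemma quad_energy' {n : ℕ} {E : Type*} [Fintype E] (t h : E → Fin n) (z : E → ℤ)
    (ω : E → ℝ) (ωL : ℝ) (x : Fin (n+1) → ℝ) :
    x ⬝ᵥ (Lmat t h z ω ωL *ᵥ x) =
      (∑ e : E, ω e * (ivec t h z e ⬝ᵥ x)^2) + ωL * (x (Fin.last n))^2 := by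
  show ∑ j, x j * (Lmat t h z ω ωL *ᵥ x) j = _
  simp only [Lmat_mulVec', mul_add, Finset.sum_add_distrib, Finset.mul_sum]
  congr 1
  · rw [Finset.sum_comm]
    refine Finset.sum_congr rfl fun e _ => ?_
    have key : ∀ s : ℝ, ∑ j, x j * (ω e * s * ivec t h z e j)
        = ω e * s * ∑ j, ivec t h z e j * x j := fun s => by
      rw [Finset.mul_sum]; exact Finset.sum_congr rfl fun i _ => by ring
    rw [key, show (∑ j, ivec t h z e j * x j) = ivec t h z e ⬝ᵥ x from rfl, sq]
    ring
  · rw [Finset.sum_eq_single (Fin.last n)]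
    · simp; ring
    · intro b _ hb; simp [hb]
    · simp

/-- Proposition 5.4: a periodically super stable framework is periodically universally
rigid.  If a periodic framework `(p, ℓ)` of ℤ-labelled graph data in `ℝ^d` has an
equilibrium stress whose stress matrix is positive semidefinite of rank `n - d`, and
`(p, ℓ)` satisfies the conic condition, then every periodic framework `(q, ℓ')` of the
data equivalent to `(p, ℓ)` is congruent to it: all pairwise distances of the lifted
frameworks agree. -/
theorem superStable_universally_rigid (n : ℕ) (hn : 1 ≤ n) (E : Type*) [Fintype E]
    (t h : E → Fin n) (z : E → ℤ) (d : ℕ)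
    (p : Fin n → EuclideanSpace ℝ (Fin d)) (ℓ : EuclideanSpace ℝ (Fin d)) (hℓ : ℓ ≠ 0)
    (ω : E → ℝ) (ωL : ℝ)
    (heq : IsEquilibrium t h z p ℓ ω ωL)
    (hpsd : (Lmat t h z ω ωL).PosSemidef)
    (hrank : (Lmat t h z ω ωL).rank = n - d)
    (hconic : ∀ S : Matrix (Fin d) (Fin d) ℝ, S.IsSymm →
      (∀ e : E, quadForm S (edgeVec t h z p ℓ e) = 0) → quadForm S ℓ = 0 → S = 0)
    (m' : ℕ) (q : Fin n → EuclideanSpace ℝ (Fin m')) (ℓ' : EuclideanSpace ℝ (Fin m'))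
    (hℓ' : ℓ' ≠ 0) (hlen : ‖ℓ'‖ = ‖ℓ‖)
    (hequiv : ∀ e : E, ‖edgeVec t h z q ℓ' e‖ = ‖edgeVec t h z p ℓ e‖) :
    ∀ (i j : Fin n) (γ : ℤ),
      ‖(q j + (γ : ℝ) • ℓ') - q i‖ = ‖(p j + (γ : ℝ) • ℓ) - p i‖ := by
  classical
  open Matrix in
  obtain ⟨heq1, heq2⟩ := heq
  set L := Lmat t h z ω ωL with hLdef
  set P : Fin d → Fin (n+1) → ℝ := fun k => Fin.snoc (fun i => p i k) (ℓ k) with hPdef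
  set Q : Fin m' → Fin (n+1) → ℝ := fun k => Fin.snoc (fun i => q i k) (ℓ' k) with hQdef
  set u : Fin (n+1) → ℝ := Fin.snoc (fun _ => (1:ℝ)) 0 with hudef
  have happly : ∀ (m : ℕ) (pp : Fin n → EuclideanSpace ℝ (Fin m))
      (ll : EuclideanSpace ℝ (Fin m)) (e : E) (k : Fin m),
      edgeVec t h z pp ll e k = pp (h e) k + (z e : ℝ) * ll k - pp (t e) k := by
    intro m pp ll e k
    simp [edgeVec, PiLp.add_apply, PiLp.sub_apply, PiLp.smul_apply, smul_eq_mul]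
  have hilast : ∀ e : E, ivec t h z e (Fin.last n) = (z e : ℝ) := by
    intro e
    simp [ivec, (Fin.castSucc_lt_last (h e)).ne', (Fin.castSucc_lt_last (t e)).ne']
  have hicast : ∀ (e : E) (i : Fin n), ivec t h z e (Fin.castSucc i) =
      (if i = h e then 1 else 0) - (if i = t e then 1 else 0) := by
    intro e i
    simp [ivec, Fin.castSucc_inj, (Fin.castSucc_lt_last i).ne]
  have hdotP : ∀ (e : E) (k : Fin d), ivec t h z e ⬝ᵥ P k = edgeVec t h z p ℓ e k := by
    intro e k
    rw [ivec_dot', happly]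
    simp only [hPdef, Fin.snoc_castSucc, Fin.snoc_last]
    ring
  have hdotQ : ∀ (e : E) (k : Fin m'), ivec t h z e ⬝ᵥ Q k = edgeVec t h z q ℓ' e k := by
    intro e k
    rw [ivec_dot', happly]
    simp only [hQdef, Fin.snoc_castSucc, Fin.snoc_last]
    ring
  have hPlast : ∀ k, P k (Fin.last n) = ℓ k := fun k => by simp [hPdef]
  have hQlast : ∀ k, Q k (Fin.last n) = ℓ' k := fun k => by simp [hQdef]
  -- kernel facts
  have hLP : ∀ k, L *ᵥ P k = 0 := by
    intro k
    funext j
    rw [Lmat_mulVec']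
    induction j using Fin.lastCases with
    | last =>
      have h2 := congrFun (congrArg WithLp.ofLp heq2) k
      simp only [PiLp.add_apply, PiLp.smul_apply, smul_eq_mul,
        PiLp.zero_apply, eucl_sum_apply] at h2
      simp only [if_pos trivial, if_pos rfl, Pi.zero_apply, mul_one, hPlast]
      have : (∑ e : E, ω e * (ivec t h z e ⬝ᵥ P k) * ivec t h z e (Fin.last n))
          = ∑ e : E, (ω e * (z e : ℝ)) * edgeVec t h z p ℓ e k := by
        refine Finset.sum_congr rfl fun e _ => ?_
        rw [hdotP, hilast]; ring
      rw [this]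
      linarith [h2]
    | cast i =>
      have flip : ∀ aa bb : Fin n, (if aa = bb then (1:ℝ) else 0) = (if bb = aa then 1 else 0) := by
        intro aa bb
        by_cases hh : aa = bb
        · simp [hh]
        · simp [hh, Ne.symm hh]
      simp only [(Fin.castSucc_lt_last i).ne, if_false, mul_zero, add_zero, Pi.zero_apply]
      have key : (∑ e : E, ω e * (ivec t h z e ⬝ᵥ P k) * ivec t h z e (Fin.castSucc i))
          = ∑ e : E, ((if h e = i ∧ t e ≠ h e then ω e * edgeVec t h z p ℓ e k else 0)
            - (if t e = i ∧ t e ≠ h e then ω e * edgeVec t h z p ℓ e k else 0)) := by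
        refine Finset.sum_congr rfl fun e _ => ?_
        rw [hdotP, hicast, flip i (h e), flip i (t e)]
        rcases eq_or_ne (t e) (h e) with hte | hte
        · rw [hte]
          simp
        · by_cases h1' : h e = i <;> by_cases h2' : t e = i
          · exact absurd (h2'.trans h1'.symm) hte
          · simp only [if_pos h1', if_neg h2',
              if_pos (show h e = i ∧ t e ≠ h e from ⟨h1', hte⟩),
              if_neg (show ¬(t e = i ∧ t e ≠ h e) from fun hc => h2' hc.1)]
            ring
          · simp only [if_neg h1', if_pos h2',
              if_neg (show ¬(h e = i ∧ t e ≠ h e) from fun hc => h1' hc.1),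
              if_pos (show t e = i ∧ t e ≠ h e from ⟨h2', hte⟩)]
            ring
          · simp only [if_neg h1', if_neg h2',
              if_neg (show ¬(h e = i ∧ t e ≠ h e) from fun hc => h1' hc.1),
              if_neg (show ¬(t e = i ∧ t e ≠ h e) from fun hc => h2' hc.1)]
            ring
      have hA : (∑ e : E, if h e = i ∧ t e ≠ h e then ω e * edgeVec t h z p ℓ e k else 0)
          = (∑ e : E, if h e = i ∧ t e ≠ h e then ω e • edgeVec t h z p ℓ e else 0) k := by
        rw [eucl_sum_apply]
        refine Finset.sum_congr rfl fun e _ => ?_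
        by_cases hc : h e = i ∧ t e ≠ h e
        · simp only [if_pos hc]; rfl
        · simp only [if_neg hc]; rfl
      have hB : (∑ e : E, if t e = i ∧ t e ≠ h e then ω e * edgeVec t h z p ℓ e k else 0)
          = (∑ e : E, if t e = i ∧ t e ≠ h e then ω e • edgeVec t h z p ℓ e else 0) k := by
        rw [eucl_sum_apply]
        refine Finset.sum_congr rfl fun e _ => ?_
        by_cases hc : t e = i ∧ t e ≠ h e
        · simp only [if_pos hc]; rfl
        · simp only [if_neg hc]; rfl
      rw [key, Finset.sum_sub_distrib, hA, hB, ← PiLp.sub_apply, heq1 i]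
      rfl
  have hLu : L *ᵥ u = 0 := by
    funext j
    rw [Lmat_mulVec']
    have hzero : ∀ e : E, ivec t h z e ⬝ᵥ u = 0 := by
      intro e
      rw [ivec_dot']
      simp [hudef]
    simp only [hzero]; simp [hudef]
  -- energy
  have hq_energyP : ∀ k, P k ⬝ᵥ (L *ᵥ P k) = 0 := by
    intro k
    rw [hLP k, dotProduct_zero]
  have hsum_energyP : (∑ e : E, ω e * ‖edgeVec t h z p ℓ e‖^2) + ωL * ‖ℓ‖^2 = 0 := by
    have hswap : (∑ k, P k ⬝ᵥ (L *ᵥ P k))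
        = (∑ e : E, ω e * ‖edgeVec t h z p ℓ e‖^2) + ωL * ‖ℓ‖^2 := by
      simp only [hLdef, quad_energy', Finset.sum_add_distrib]
      congr 1
      · rw [Finset.sum_comm]
        refine Finset.sum_congr rfl fun e _ => ?_
        rw [norm_sq_eq', Finset.mul_sum]
        exact Finset.sum_congr rfl fun k _ => by rw [hdotP]
      · rw [norm_sq_eq', Finset.mul_sum]
        exact Finset.sum_congr rfl fun k _ => by rw [hPlast]
    rw [← hswap]
    simp [hq_energyP]
  have hsum_energyQ : (∑ k, Q k ⬝ᵥ (L *ᵥ Q k)) = 0 := by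
    have hswap : (∑ k, Q k ⬝ᵥ (L *ᵥ Q k))
        = (∑ e : E, ω e * ‖edgeVec t h z q ℓ' e‖^2) + ωL * ‖ℓ'‖^2 := by
      simp only [hLdef, quad_energy', Finset.sum_add_distrib]
      congr 1
      · rw [Finset.sum_comm]
        refine Finset.sum_congr rfl fun e _ => ?_
        rw [norm_sq_eq', Finset.mul_sum]
        exact Finset.sum_congr rfl fun k _ => by rw [hdotQ]
      · rw [norm_sq_eq', Finset.mul_sum]
        exact Finset.sum_congr rfl fun k _ => by rw [hQlast]
    rw [hswap]
    simp only [hequiv, hlen]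
    exact hsum_energyP
  have hQnn : ∀ k, 0 ≤ Q k ⬝ᵥ (L *ᵥ Q k) := by
    intro k
    simpa using hpsd.dotProduct_mulVec_nonneg (Q k)
  have hQzero : ∀ k, Q k ⬝ᵥ (L *ᵥ Q k) = 0 := by
    have := (Finset.sum_eq_zero_iff_of_nonneg (fun k _ => hQnn k)).1 hsum_energyQ
    exact fun k => this k (Finset.mem_univ k)
  have hLQ : ∀ k, L *ᵥ Q k = 0 := by
    intro k
    refine (hpsd.dotProduct_mulVec_zero_iff (Q k)).1 ?_
    simpa using hQzero k
  -- dimension count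
  have hker : L.rank + Module.finrank ℝ (LinearMap.ker (Matrix.mulVecLin L)) = n + 1 := by
    have hrn := LinearMap.finrank_range_add_finrank_ker (Matrix.mulVecLin L)
    rw [Matrix.rank]
    rw [Module.finrank_pi] at hrn
    simpa using hrn
  set W : Fin (d+1) → Fin (n+1) → ℝ := Fin.snoc P u with hWdef
  have hWind : LinearIndependent ℝ W := by
    rw [Fintype.linearIndependent_iff]
    intro g hg
    set a : Fin d → ℝ := fun r => g (Fin.castSucc r) with hadef
    have hgsum : ∀ jj, (∑ r, a r * P r jj) + g (Fin.last d) * u jj = 0 := by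
      intro jj
      have := congrFun hg jj
      simpa [Fin.sum_univ_castSucc, hWdef, Finset.sum_apply, Pi.smul_apply,
        smul_eq_mul] using this
    have hrow : ∀ i : Fin n, (∑ r, a r * p i r) + g (Fin.last d) = 0 := by
      intro i
      have := hgsum (Fin.castSucc i)
      simpa [hPdef, hudef] using this
    have hlastrow : (∑ r, a r * ℓ r) = 0 := by
      have := hgsum (Fin.last n)
      simpa [hPdef, hudef] using this
    set S : Matrix (Fin d) (Fin d) ℝ := Matrix.of (fun i j => a i * a j) with hSdef
    have hsymm : S.IsSymm := by
      ext i j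
      simp [hSdef, Matrix.transpose_apply, mul_comm]
    have hquadS : ∀ v : EuclideanSpace ℝ (Fin d), quadForm S v = (∑ r, a r * v r)^2 := by
      intro v
      rw [quadForm, ← sum_mul_self_eq' a (fun r => v r)]
      exact Finset.sum_congr rfl fun i _ => Finset.sum_congr rfl fun j _ => by
        simp [hSdef]
    have hdotedge : ∀ e : E, (∑ r, a r * edgeVec t h z p ℓ e r) = 0 := by
      intro e
      have expand : ∀ r, a r * edgeVec t h z p ℓ e r
          = a r * p (h e) r + (z e : ℝ) * (a r * ℓ r) - a r * p (t e) r := by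
        intro r; rw [happly]; ring
      simp only [expand, Finset.sum_add_distrib, Finset.sum_sub_distrib, ← Finset.mul_sum]
      rw [hlastrow, mul_zero]
      linarith [hrow (h e), hrow (t e)]
    have hS0 : S = 0 := by
      refine hconic S hsymm (fun e => ?_) ?_
      · rw [hquadS, hdotedge]; norm_num
      · rw [hquadS, hlastrow]; norm_num
    have ha : ∀ r, a r = 0 := by
      intro r
      have : S r r = 0 := by rw [hS0]; rfl
      simpa [hSdef, mul_self_eq_zero] using this
    have hb : g (Fin.last d) = 0 := by
      have := hrow ⟨0, hn⟩
      simpa [ha] using this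
    intro jj
    induction jj using Fin.lastCases with
    | last => exact hb
    | cast r => exact ha r
  have hsple : Submodule.span ℝ (Set.range W) ≤ LinearMap.ker (Matrix.mulVecLin L) := by
    rw [Submodule.span_le]
    rintro _ ⟨jj, rfl⟩
    simp only [SetLike.mem_coe, LinearMap.mem_ker, Matrix.mulVecLin_apply]
    induction jj using Fin.lastCases with
    | last => simpa [hWdef] using hLu
    | cast r => simpa [hWdef] using hLP r
  have hspdim : Module.finrank ℝ (Submodule.span ℝ (Set.range W)) = d + 1 := by
    rw [finrank_span_eq_card hWind]
    simp
  have hSpK : Submodule.span ℝ (Set.range W) = LinearMap.ker (Matrix.mulVecLin L) := by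
    refine Submodule.eq_of_le_of_finrank_le hsple ?_
    rw [hspdim]
    omega
  have hQrep : ∀ k, ∃ c : Fin (d+1) → ℝ, ∑ jj, c jj • W jj = Q k := by
    intro k
    refine (Submodule.mem_span_range_iff_exists_fun ℝ).1 ?_
    rw [hSpK]
    exact LinearMap.mem_ker.2 (by rw [Matrix.mulVecLin_apply]; exact hLQ k)
  choose c hc using hQrep
  set A : Fin m' → Fin d → ℝ := fun k r => c k (Fin.castSucc r) with hAdef
  set b : Fin m' → ℝ := fun k => c k (Fin.last d) with hbdef
  have hcoord : ∀ k jj, (∑ r, A k r * P r jj) + b k * u jj = Q k jj := by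
    intro k jj
    have := congrFun (hc k) jj
    simpa [Fin.sum_univ_castSucc, hWdef, Finset.sum_apply, Pi.smul_apply,
      smul_eq_mul, hAdef, hbdef] using this
  have hqk : ∀ (i : Fin n) (k : Fin m'), q i k = (∑ r, A k r * p i r) + b k := by
    intro i k
    have := hcoord k (Fin.castSucc i)
    simp only [hPdef, hudef, hQdef, Fin.snoc_castSucc, mul_one] at this
    linarith [this]
  have hl'k : ∀ k, ℓ' k = ∑ r, A k r * ℓ r := by
    intro k
    have := hcoord k (Fin.last n)
    simp only [hPdef, hudef, hQdef, Fin.snoc_last, mul_zero, add_zero] at this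
    linarith [this]
  -- second conic application
  set S2 : Matrix (Fin d) (Fin d) ℝ :=
    Matrix.of (fun i j => (∑ k, A k i * A k j) - (if i = j then 1 else 0)) with hS2def
  have hsymm2 : S2.IsSymm := by
    ext i j
    simp only [hS2def, Matrix.transpose_apply, Matrix.of_apply]
    rw [show (if j = i then (1:ℝ) else 0) = (if i = j then 1 else 0) by simp [eq_comm]]
    congr 1
    exact Finset.sum_congr rfl fun k _ => by ring
  have hquad2 : ∀ v : EuclideanSpace ℝ (Fin d),
      quadForm S2 v = (∑ k, (∑ r, A k r * v r)^2) - ∑ r, (v r)^2 := by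
    intro v
    rw [quadForm]
    have expand : ∀ i j : Fin d, S2 i j * v i * v j
        = (∑ k, (A k i * v i) * (A k j * v j)) - (if i = j then 1 else 0) * v i * v j := by
      intro i j
      simp only [hS2def, Matrix.of_apply, sub_mul, Finset.sum_mul]
      congr 1
      exact Finset.sum_congr rfl fun k _ => by ring
    simp only [expand, Finset.sum_sub_distrib]
    congr 1
    · calc (∑ i, ∑ j, ∑ k, (A k i * v i) * (A k j * v j))
          = ∑ i, ∑ k, ∑ j, (A k i * v i) * (A k j * v j) :=
            Finset.sum_congr rfl fun i _ => Finset.sum_comm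
        _ = ∑ k, ∑ i, ∑ j, (A k i * v i) * (A k j * v j) := Finset.sum_comm
        _ = ∑ k, (∑ r, A k r * v r)^2 := by
            refine Finset.sum_congr rfl fun k _ => ?_
            rw [sq, Finset.sum_mul_sum]
    · refine Finset.sum_congr rfl fun i _ => ?_
      rw [Finset.sum_eq_single i]
      · simp [sq]
      · intro bb _ hbb; simp [Ne.symm hbb]
      · simp
  have hwk : ∀ (e : E) (k : Fin m'),
      edgeVec t h z q ℓ' e k = ∑ r, A k r * edgeVec t h z p ℓ e r := by
    intro e k
    rw [happly, hqk, hqk, hl'k]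
    have expand : ∀ r, A k r * edgeVec t h z p ℓ e r
        = A k r * p (h e) r + (z e : ℝ) * (A k r * ℓ r) - A k r * p (t e) r := by
      intro r; rw [happly]; ring
    simp only [expand, Finset.sum_add_distrib, Finset.sum_sub_distrib, ← Finset.mul_sum]
    ring
  have hS20 : S2 = 0 := by
    refine hconic S2 hsymm2 (fun e => ?_) ?_
    · rw [hquad2]
      have : (∑ k, (∑ r, A k r * edgeVec t h z p ℓ e r)^2)
          = ∑ k, (edgeVec t h z q ℓ' e k)^2 :=
        Finset.sum_congr rfl fun k _ => by rw [hwk]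
      rw [this, ← norm_sq_eq', ← norm_sq_eq', hequiv]
      ring
    · rw [hquad2]
      have : (∑ k, (∑ r, A k r * ℓ r)^2) = ∑ k, (ℓ' k)^2 :=
        Finset.sum_congr rfl fun k _ => by rw [hl'k]
      rw [this, ← norm_sq_eq', ← norm_sq_eq', hlen]
      ring
  have hiso : ∀ v : EuclideanSpace ℝ (Fin d),
      (∑ k, (∑ r, A k r * v r)^2) = ∑ r, (v r)^2 := by
    intro v
    have := hquad2 v
    rw [hS20] at this
    simp only [quadForm, Matrix.zero_apply, zero_mul, Finset.sum_const_zero] at this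
    linarith
  -- conclusion
  intro i j γ
  have key : ∀ k, ((q j + (γ : ℝ) • ℓ') - q i) k
      = ∑ r, A k r * ((p j + (γ : ℝ) • ℓ) - p i) r := by
    intro k
    simp only [PiLp.add_apply, PiLp.sub_apply, PiLp.smul_apply, smul_eq_mul]
    rw [hqk, hqk, hl'k]
    have expand : ∀ r, A k r * (p j r + (γ : ℝ) * ℓ r - p i r)
        = A k r * p j r + (γ : ℝ) * (A k r * ℓ r) - A k r * p i r := by
      intro r; ring
    simp only [expand, Finset.sum_add_distrib, Finset.sum_sub_distrib, ← Finset.mul_sum]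
    ring
  have h2 : ‖(q j + (γ : ℝ) • ℓ') - q i‖^2 = ‖(p j + (γ : ℝ) • ℓ) - p i‖^2 := by
    rw [norm_sq_eq', norm_sq_eq']
    have : (∑ k, (((q j + (γ : ℝ) • ℓ') - q i) k)^2)
        = ∑ k, (∑ r, A k r * ((p j + (γ : ℝ) • ℓ) - p i) r)^2 :=
      Finset.sum_congr rfl fun k _ => by rw [key]
    rw [this]
    exact hiso _
  have h3 := congrArg Real.sqrt h2
  rwa [Real.sqrt_sq (norm_nonneg _), Real.sqrt_sq (norm_nonneg _)] at h3
end

section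
/- A basis of the space ℒ^{n+1} (intermediate claim in the proof of Lemma 6.2): Let n ≥ 1. For 1 ≤ i < j ≤ n define the (n+1)×(n+1) real matrices A_{i,j} := E_{i,i} + E_{j,j} − E_{i,j} − E_{j,i} and B_{i,j} := E_{i,n+1} + E_{n+1,i} − E_{j,n+1} − E_{n+1,j}, where E_{a,b} denotes the matrix unit. Then for every tree T on the vertex set {1, …, n} that is connected and spans all n vertices, the family {A_{i,j} : 1 ≤ i < j ≤ n} ∪ {B_{i,j} : {i,j} an edge of T} ∪ {E_{n+1,n+1}} is a basis of ℒ^{n+1}; in particular, ℒ^{n+1} has dimension n(n+1)/2. -/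
/-- The matrix `A_{i,j} = E_{i,i} + E_{j,j} - E_{i,j} - E_{j,i}` of size `(n+1) × (n+1)`,
for vertices `i, j ∈ Fin n` (embedded in the first `n` coordinates). -/
noncomputable def Amat {n : ℕ} (i j : Fin n) : Matrix (Fin (n + 1)) (Fin (n + 1)) ℝ :=
  Matrix.single i.castSucc i.castSucc 1 + Matrix.single j.castSucc j.castSucc 1 -
    Matrix.single i.castSucc j.castSucc 1 - Matrix.single j.castSucc i.castSucc 1

/-- The matrix `B_{i,j} = E_{i,n+1} + E_{n+1,i} - E_{j,n+1} - E_{n+1,j}` of size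
`(n+1) × (n+1)`, for vertices `i, j ∈ Fin n`. -/
noncomputable def Bmat {n : ℕ} (i j : Fin n) : Matrix (Fin (n + 1)) (Fin (n + 1)) ℝ :=
  Matrix.single i.castSucc (Fin.last n) 1 + Matrix.single (Fin.last n) i.castSucc 1 -
    Matrix.single j.castSucc (Fin.last n) 1 - Matrix.single (Fin.last n) j.castSucc 1

/-- The vector `𝟙' = (1, …, 1, 0)ᵀ ∈ ℝ^{n+1}`. -/
noncomputable def onesVec (n : ℕ) : Fin (n + 1) → ℝ :=
  fun k => if k = Fin.last n then 0 else 1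

section Aux

variable {n : ℕ}

private lemma sbm_apply (i j a b : Fin (n+1)) (c : ℝ) :
    Matrix.single i j c a b = if i = a ∧ j = b then c else 0 := rfl

private lemma csl (i : Fin n) : i.castSucc ≠ Fin.last n := (Fin.castSucc_lt_last i).ne

private lemma onesVec_castSucc (i : Fin n) : onesVec n i.castSucc = 1 := if_neg (csl i)

private lemma onesVec_last : onesVec n (Fin.last n) = 0 := if_pos rfl

private def sumLin (n : ℕ) : (Fin n → ℝ) →ₗ[ℝ] ℝ where
  toFun v := ∑ i, v i
  map_add' u v := by simp [Finset.sum_add_distrib]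
  map_smul' c v := by simp [Finset.mul_sum]

private lemma finrank_ker_sumLin (hn : 1 ≤ n) :
    Module.finrank ℝ (LinearMap.ker (sumLin n)) = n - 1 := by
  have hsurj : LinearMap.range (sumLin n) = ⊤ := by
    rw [LinearMap.range_eq_top]
    intro x
    exact ⟨Pi.single ⟨0, hn⟩ x, by simp [sumLin, Finset.sum_pi_single']⟩
  have h := LinearMap.finrank_range_add_finrank_ker (sumLin n)
  rw [hsurj, finrank_top, Module.finrank_self, Module.finrank_fintype_fun_eq_card,
    Fintype.card_fin] at h
  omega

private def gvec (T : SimpleGraph (Fin n)) :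
    {pr : Fin n × Fin n // pr.1 < pr.2 ∧ T.Adj pr.1 pr.2} → (Fin n → ℝ) :=
  fun q => Pi.single q.1.1 1 - Pi.single q.1.2 1

private lemma adj_mem_span {T : SimpleGraph (Fin n)} {i j : Fin n} (h : T.Adj i j) :
    Pi.single i (1:ℝ) - Pi.single j 1 ∈ Submodule.span ℝ (Set.range (gvec T)) := by
  rcases lt_trichotomy i j with hlt | heq | hgt
  · exact Submodule.subset_span ⟨⟨(i,j), hlt, h⟩, rfl⟩
  · exact absurd heq h.ne
  · have he : Pi.single i (1:ℝ) - Pi.single j 1 = -(gvec T ⟨(j,i), hgt, h.symm⟩) := by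
      simp [gvec]
    rw [he]
    exact Submodule.neg_mem _ (Submodule.subset_span ⟨_, rfl⟩)

private lemma reach_mem_span {T : SimpleGraph (Fin n)} {i j : Fin n} (h : T.Reachable i j) :
    Pi.single i (1:ℝ) - Pi.single j 1 ∈ Submodule.span ℝ (Set.range (gvec T)) := by
  obtain ⟨w⟩ := h
  induction w with
  | nil => simp
  | @cons u v w h p ih =>
      have h2 : (Pi.single u 1 - Pi.single w 1 : Fin n → ℝ) =
          (Pi.single u 1 - Pi.single v 1) + (Pi.single v 1 - Pi.single w 1) := by abel
      rw [h2]
      exact Submodule.add_mem _ (adj_mem_span h) ih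

private lemma span_gvec_eq (hn : 1 ≤ n) {T : SimpleGraph (Fin n)} (hT : T.Connected) :
    Submodule.span ℝ (Set.range (gvec T)) = LinearMap.ker (sumLin n) := by
  apply le_antisymm
  · rw [Submodule.span_le]
    rintro _ ⟨q, rfl⟩
    simp [LinearMap.mem_ker, sumLin, gvec, Finset.sum_sub_distrib, Finset.sum_pi_single']
  · intro v hv
    have h0 : ∑ i, v i = 0 := hv
    set z : Fin n := ⟨0, hn⟩ with hz
    have hrepr : v = ∑ i, v i • ((Pi.single i 1 - Pi.single z 1 : Fin n → ℝ)) := by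
      have : ∑ i, v i • ((Pi.single i 1 - Pi.single z 1 : Fin n → ℝ))
          = (∑ i, v i • (Pi.single i (1:ℝ) : Fin n → ℝ)) - (∑ i, v i) • (Pi.single z (1:ℝ) : Fin n → ℝ) := by
        rw [Finset.sum_smul]
        rw [← Finset.sum_sub_distrib]
        congr 1
        ext i
        rw [smul_sub]
      rw [this, h0, zero_smul, sub_zero]
      funext k
      simp [Finset.sum_apply, Pi.single_apply, mul_ite, Finset.sum_ite_eq]
    rw [hrepr]
    exact Submodule.sum_mem _ fun i _ =>
      Submodule.smul_mem _ _ (reach_mem_span (hT.preconnected i z))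

private lemma card_pairs (n : ℕ) :
    Fintype.card {pr : Fin n × Fin n // pr.1 < pr.2} = n.choose 2 := by
  have e : {pr : Fin n × Fin n // pr.1 < pr.2} ≃ (Σ j : Fin n, {i : Fin n // i < j}) :=
    { toFun := fun q => ⟨q.1.2, q.1.1, q.2⟩
      invFun := fun s => ⟨(s.2.1, s.1), s.2.2⟩
      left_inv := fun q => rfl
      right_inv := fun s => rfl }
  rw [Fintype.card_congr e, Fintype.card_sigma]
  have hc : ∀ j : Fin n, Fintype.card {i : Fin n // i < j} = (j : ℕ) := by
    intro j
    rw [Fintype.card_subtype]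
    have : (Finset.univ.filter fun i : Fin n => i < j) = Finset.Iio j := by
      ext i; simp
    rw [this, Fin.card_Iio]
  simp only [hc]
  rw [Nat.choose_two_right, ← Finset.sum_range_id]
  exact Fin.sum_univ_eq_sum_range (fun i => i) n

private lemma card_edg {T : SimpleGraph (Fin n)} [DecidableRel T.Adj] (hT : T.IsTree) :
    Fintype.card {pr : Fin n × Fin n // pr.1 < pr.2 ∧ T.Adj pr.1 pr.2} = n - 1 := by
  classical
  rw [Fintype.card_subtype]
  have h2 : (Finset.univ.filter fun pr : Fin n × Fin n => pr.1 < pr.2 ∧ T.Adj pr.1 pr.2).card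
      = T.edgeFinset.card := by
    apply Finset.card_bij (fun (pr : Fin n × Fin n) _ => Sym2.mk pr.1 pr.2)
    · rintro ⟨a, b⟩ h
      simp only [Finset.mem_filter] at h
      simpa [SimpleGraph.mem_edgeFinset] using h.2.2
    · rintro ⟨a, b⟩ ha ⟨c, d⟩ hc h
      simp only [Finset.mem_filter] at ha hc
      rw [Sym2.mk_eq_mk_iff] at h
      rcases h with h | h
      · exact h
      · simp only [Prod.swap_prod_mk, Prod.mk.injEq] at h
        exact absurd (h.1 ▸ h.2 ▸ ha.2.1)
          (by rw [h.1, h.2] at ha; exact fun hh => absurd (hh.trans hc.2.1) (lt_irrefl _))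
    · intro e he
      rw [SimpleGraph.mem_edgeFinset] at he
      induction e with
      | _ a b =>
        have hadj : T.Adj a b := he
        rcases lt_trichotomy a b with h | h | h
        · exact ⟨(a, b), Finset.mem_filter.2 ⟨Finset.mem_univ _, h, hadj⟩, rfl⟩
        · exact absurd h hadj.ne
        · exact ⟨(b, a), Finset.mem_filter.2 ⟨Finset.mem_univ _, h, hadj.symm⟩, Sym2.eq_swap⟩
  rw [h2]
  have := hT.card_edgeFinset
  rw [Fintype.card_fin] at this
  omega

private lemma sbm_transpose (i j : Fin (n+1)) (c : ℝ) :
    (Matrix.single i j c).transpose = Matrix.single j i c := by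
  ext a b
  simp [sbm_apply, Matrix.transpose_apply, and_comm]

private lemma sbm_mulVec (i j : Fin (n+1)) (v : Fin (n+1) → ℝ) :
    (Matrix.single i j (1:ℝ)).mulVec v = Function.update (0 : Fin (n+1) → ℝ) i (v j) := by
  rw [Matrix.single_mulVec, one_mul]

private def Lsub (n : ℕ) : Submodule ℝ (Matrix (Fin (n+1)) (Fin (n+1)) ℝ) where
  carrier := {A | A.IsSymm ∧ A.mulVec (onesVec n) = 0}
  add_mem' := by
    rintro A B ⟨hA1, hA2⟩ ⟨hB1, hB2⟩
    exact ⟨hA1.add hB1, by rw [Matrix.add_mulVec, hA2, hB2, add_zero]⟩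
  zero_mem' := ⟨Matrix.isSymm_zero, Matrix.zero_mulVec _⟩
  smul_mem' := by
    rintro c A ⟨h1, h2⟩
    exact ⟨by rw [Matrix.IsSymm, Matrix.transpose_smul, h1],
      by rw [Matrix.smul_mulVec, h2, smul_zero]⟩

private lemma mem_Lsub {A : Matrix (Fin (n+1)) (Fin (n+1)) ℝ} :
    A ∈ Lsub n ↔ A.IsSymm ∧ A.mulVec (onesVec n) = 0 := Iff.rfl

private lemma Amat_mem (i j : Fin n) : Amat i j ∈ Lsub n := by
  constructor
  · rw [Matrix.IsSymm, Amat]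
    simp only [Matrix.transpose_sub, Matrix.transpose_add, sbm_transpose]
    abel
  · rw [Amat, Matrix.sub_mulVec, Matrix.sub_mulVec, Matrix.add_mulVec]
    simp only [sbm_mulVec, onesVec_castSucc]
    abel

private lemma Bmat_mem (i j : Fin n) : Bmat i j ∈ Lsub n := by
  constructor
  · rw [Matrix.IsSymm, Bmat]
    simp only [Matrix.transpose_sub, Matrix.transpose_add, sbm_transpose]
    abel
  · rw [Bmat, Matrix.sub_mulVec, Matrix.sub_mulVec, Matrix.add_mulVec]
    simp only [sbm_mulVec, onesVec_castSucc, onesVec_last]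
    funext k
    simp [Function.update_apply]

private lemma Emat_mem : Matrix.single (Fin.last n) (Fin.last n) (1:ℝ) ∈ Lsub n := by
  constructor
  · rw [Matrix.IsSymm, sbm_transpose]
  · rw [sbm_mulVec, onesVec_last]
    funext k
    simp [Function.update_apply]

private lemma Bmat_cc (i j a b : Fin n) : Bmat i j a.castSucc b.castSucc = 0 := by
  simp [Bmat, Matrix.sub_apply, Matrix.add_apply, sbm_apply, (csl b).symm, (csl a).symm]

private lemma Emat_c1 (a : Fin n) (b : Fin (n+1)) :
    Matrix.single (Fin.last n) (Fin.last n) (1:ℝ) a.castSucc b = 0 := by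
  simp [sbm_apply, (csl a).symm]

private lemma Amat_collast (i j : Fin n) (a : Fin (n+1)) : Amat i j a (Fin.last n) = 0 := by
  simp [Amat, Matrix.sub_apply, Matrix.add_apply, sbm_apply, csl]

private lemma Bmat_clast (i j a : Fin n) :
    Bmat i j a.castSucc (Fin.last n) = (if a = i then 1 else 0) - (if a = j then 1 else 0) := by
  simp [Bmat, Matrix.sub_apply, Matrix.add_apply, sbm_apply, (csl a).symm, csl,
    Fin.castSucc_inj, eq_comm]

private lemma Bmat_ll (i j : Fin n) : Bmat i j (Fin.last n) (Fin.last n) = 0 := by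
  simp [Bmat, Matrix.sub_apply, Matrix.add_apply, sbm_apply, csl, (csl i).symm, (csl j).symm]

private lemma Amat_cc (i j a b : Fin n) (hij : i < j) (hab : a < b) :
    Amat i j a.castSucc b.castSucc = if i = a ∧ j = b then -1 else 0 := by
  simp only [Amat, Matrix.sub_apply, Matrix.add_apply, sbm_apply, Fin.castSucc_inj]
  split_ifs <;> simp_all <;> omega

private def phi (n : ℕ) (T : SimpleGraph (Fin n)) :
    Matrix (Fin (n+1)) (Fin (n+1)) ℝ →ₗ[ℝ]
      (({pr : Fin n × Fin n // pr.1 < pr.2} ⊕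
        ({pr : Fin n × Fin n // pr.1 < pr.2 ∧ T.Adj pr.1 pr.2} ⊕ Unit)) → ℝ) where
  toFun A := Sum.elim (fun q => A q.1.1.castSucc q.1.2.castSucc)
      (Sum.elim (fun q => A q.1.1.castSucc (Fin.last n) - A q.1.2.castSucc (Fin.last n))
        (fun _ => A (Fin.last n) (Fin.last n)))
  map_add' A B := by
    funext x
    rcases x with q | q | u <;> simp [Matrix.add_apply] <;> ring
  map_smul' c A := by
    funext x
    rcases x with q | q | u <;> simp [Matrix.smul_apply] <;> ring

private lemma phi_inj (hn : 1 ≤ n) {T : SimpleGraph (Fin n)} (hT : T.IsTree)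
    (A : Matrix (Fin (n+1)) (Fin (n+1)) ℝ) (hA : A ∈ Lsub n) (h0 : phi n T A = 0) :
    A = 0 := by
  obtain ⟨hsymm, hmv⟩ := mem_Lsub.1 hA
  have hsym : ∀ a b, A a b = A b a := fun a b => hsymm.apply b a
  have hoff : ∀ i j : Fin n, i ≠ j → A i.castSucc j.castSucc = 0 := by
    intro i j hij
    rcases hij.lt_or_gt with h | h
    · exact congrFun h0 (Sum.inl ⟨(i, j), h⟩)
    · rw [hsym]
      exact congrFun h0 (Sum.inl ⟨(j, i), h⟩)
  have hcol : ∀ i j : Fin n, T.Reachable i j →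
      A i.castSucc (Fin.last n) = A j.castSucc (Fin.last n) := by
    intro i j h
    obtain ⟨w⟩ := h
    induction w with
    | nil => rfl
    | @cons u v w hadj p ih =>
        have huv : A u.castSucc (Fin.last n) = A v.castSucc (Fin.last n) := by
          rcases hadj.ne.lt_or_gt with h | h
          · have h' : A u.castSucc (Fin.last n) - A v.castSucc (Fin.last n) = 0 :=
              congrFun h0 (Sum.inr (Sum.inl ⟨(u, v), h, hadj⟩))
            exact sub_eq_zero.1 h'
          · have h' : A v.castSucc (Fin.last n) - A u.castSucc (Fin.last n) = 0 :=
              congrFun h0 (Sum.inr (Sum.inl ⟨(v, u), h, hadj.symm⟩))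
            exact (sub_eq_zero.1 h').symm
        exact huv.trans ih
  set z : Fin n := ⟨0, hn⟩ with hz
  have hconst : ∀ i : Fin n, A i.castSucc (Fin.last n) = A z.castSucc (Fin.last n) :=
    fun i => hcol i z (hT.isConnected.preconnected i z)
  have hc0 : A z.castSucc (Fin.last n) = 0 := by
    have hrow : A.mulVec (onesVec n) (Fin.last n) = 0 := congrFun hmv (Fin.last n)
    rw [Matrix.mulVec, dotProduct, Fin.sum_univ_castSucc] at hrow
    simp only [onesVec_castSucc, onesVec_last, mul_one, mul_zero, add_zero] at hrow
    have hterm : ∀ j : Fin n, A (Fin.last n) j.castSucc = A z.castSucc (Fin.last n) := by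
      intro j
      rw [hsym, hconst j]
    rw [Finset.sum_congr rfl (fun j _ => hterm j), Finset.sum_const, Finset.card_univ,
      Fintype.card_fin, nsmul_eq_mul] at hrow
    have hne : (n : ℝ) ≠ 0 := Nat.cast_ne_zero.2 (by omega)
    exact (mul_eq_zero.1 hrow).resolve_left hne
  have hlastcol : ∀ i : Fin n, A i.castSucc (Fin.last n) = 0 := fun i => (hconst i).trans hc0
  have hdiag : ∀ i : Fin n, A i.castSucc i.castSucc = 0 := by
    intro i
    have hrow : A.mulVec (onesVec n) i.castSucc = 0 := congrFun hmv i.castSucc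
    rw [Matrix.mulVec, dotProduct, Fin.sum_univ_castSucc] at hrow
    simp only [onesVec_castSucc, onesVec_last, mul_one, mul_zero, add_zero] at hrow
    rwa [Finset.sum_eq_single i (fun j _ hj => hoff i j (Ne.symm hj)) (by simp)] at hrow
  have hll : A (Fin.last n) (Fin.last n) = 0 := congrFun h0 (Sum.inr (Sum.inr ()))
  have key : ∀ a b, A a b = 0 := by
    intro a b
    refine Fin.lastCases ?_ (fun i => ?_) a
    · refine Fin.lastCases ?_ (fun j => ?_) b
      · exact hll
      · rw [hsym]
        exact hlastcol j
    · refine Fin.lastCases ?_ (fun j => ?_) b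
      · exact hlastcol i
      · rcases eq_or_ne i j with rfl | hij
        · exact hdiag i
        · exact hoff i j hij
  funext a b
  exact key a b

end Aux

/-- Intermediate claim in the proof of Lemma 6.2: for every spanning tree `T` on `Fin n`,
the family `{A_{i,j} : i < j} ∪ {B_{i,j} : {i,j} ∈ E(T)} ∪ {E_{n+1,n+1}}` is a basis of
the space `ℒ^{n+1}` of symmetric `(n+1) × (n+1)` matrices `A` with `A 𝟙' = 0`;
in particular `ℒ^{n+1}` has dimension `n(n+1)/2`. -/
theorem basis_of_L (n : ℕ) (hn : 1 ≤ n) (T : SimpleGraph (Fin n)) (hT : T.IsTree) :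
    let F : ({pr : Fin n × Fin n // pr.1 < pr.2} ⊕
        ({pr : Fin n × Fin n // pr.1 < pr.2 ∧ T.Adj pr.1 pr.2} ⊕ Unit)) →
        Matrix (Fin (n + 1)) (Fin (n + 1)) ℝ :=
      Sum.elim (fun q => Amat q.1.1 q.1.2)
        (Sum.elim (fun q => Bmat q.1.1 q.1.2)
          (fun _ => Matrix.single (Fin.last n) (Fin.last n) 1))
    LinearIndependent ℝ F ∧
      (Submodule.span ℝ (Set.range F) : Set (Matrix (Fin (n + 1)) (Fin (n + 1)) ℝ)) =
        {A | A.IsSymm ∧ A.mulVec (onesVec n) = 0} ∧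
      Module.finrank ℝ (Submodule.span ℝ (Set.range F)) = n * (n + 1) / 2 := by
  classical
  intro F
  have hFinl : ∀ q, F (Sum.inl q) = Amat q.1.1 q.1.2 := fun q => rfl
  have hFinB : ∀ q, F (Sum.inr (Sum.inl q)) = Bmat q.1.1 q.1.2 := fun q => rfl
  have hFinE : F (Sum.inr (Sum.inr ())) =
      Matrix.single (Fin.last n) (Fin.last n) 1 := rfl
  -- linear independence of the tree edge vectors
  have hgind : LinearIndependent ℝ (gvec T) := by
    rw [linearIndependent_iff_card_eq_finrank_span]
    rw [card_edg hT]
    unfold Set.finrank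
    rw [span_gvec_eq hn hT.isConnected, finrank_ker_sumLin hn]
  -- linear independence of the family F
  have hindep : LinearIndependent ℝ F := by
    rw [Fintype.linearIndependent_iff]
    intro g hg
    have key : ∀ a b : Fin (n+1),
        (∑ q : {pr : Fin n × Fin n // pr.1 < pr.2}, g (Sum.inl q) * Amat q.1.1 q.1.2 a b) +
        ((∑ q : {pr : Fin n × Fin n // pr.1 < pr.2 ∧ T.Adj pr.1 pr.2},
            g (Sum.inr (Sum.inl q)) * Bmat q.1.1 q.1.2 a b) +
          g (Sum.inr (Sum.inr ())) *
            Matrix.single (Fin.last n) (Fin.last n) 1 a b) = 0 := by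
      intro a b
      have h : (∑ x, g x • F x) a b = (0 : Matrix (Fin (n+1)) (Fin (n+1)) ℝ) a b := by
        rw [hg]
      rw [Matrix.sum_apply] at h
      simp only [Matrix.smul_apply, smul_eq_mul, Matrix.zero_apply,
        Fintype.sum_sum_type, Finset.univ_unique, Finset.sum_singleton] at h
      simpa [hFinl, hFinB, hFinE] using h
    -- A-coefficients vanish
    have hA0 : ∀ q : {pr : Fin n × Fin n // pr.1 < pr.2}, g (Sum.inl q) = 0 := by
      rintro ⟨⟨i, j⟩, hij⟩
      have h := key i.castSucc j.castSucc
      rw [Finset.sum_eq_single (⟨(i, j), hij⟩ : {pr : Fin n × Fin n // pr.1 < pr.2})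
        (fun q _ hq => by
          rw [Amat_cc q.1.1 q.1.2 i j q.2 hij, if_neg, mul_zero]
          intro hc
          exact hq (Subtype.ext (Prod.ext hc.1 hc.2))) (by simp)] at h
      rw [Amat_cc i j i j hij hij, if_pos ⟨rfl, rfl⟩] at h
      simp only [Bmat_cc, mul_zero, Finset.sum_const_zero, Emat_c1, add_zero] at h
      linarith
    -- B-coefficients vanish
    have hB0 : ∀ q : {pr : Fin n × Fin n // pr.1 < pr.2 ∧ T.Adj pr.1 pr.2},
        g (Sum.inr (Sum.inl q)) = 0 := by
      have hsum0 : ∑ q : {pr : Fin n × Fin n // pr.1 < pr.2 ∧ T.Adj pr.1 pr.2},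
          g (Sum.inr (Sum.inl q)) • gvec T q = 0 := by
        funext i
        have h := key i.castSucc (Fin.last n)
        simp only [Amat_collast, mul_zero, Finset.sum_const_zero, zero_add,
          Emat_c1, add_zero, Bmat_clast] at h
        simp only [Finset.sum_apply, Pi.smul_apply, smul_eq_mul, Pi.zero_apply,
          gvec, Pi.sub_apply, Pi.single_apply]
        exact h
      exact fun q => Fintype.linearIndependent_iff.1 hgind _ hsum0 q
    -- the E-coefficient vanishes
    have hE0 : g (Sum.inr (Sum.inr ())) = 0 := by
      have h := key (Fin.last n) (Fin.last n)
      simp only [Amat_collast, Bmat_ll, mul_zero, Finset.sum_const_zero, zero_add,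
        sbm_apply] at h
      simpa using h
    rintro (q | q | u)
    · exact hA0 q
    · exact hB0 q
    · exact hE0
  refine ⟨hindep, ?_, ?_⟩
  all_goals {
    have hspanle : Submodule.span ℝ (Set.range F) ≤ Lsub n := by
      rw [Submodule.span_le]
      rintro _ ⟨(q | q | u), rfl⟩
      · exact Amat_mem q.1.1 q.1.2
      · exact Bmat_mem q.1.1 q.1.2
      · exact Emat_mem
    have hcardI : Fintype.card ({pr : Fin n × Fin n // pr.1 < pr.2} ⊕
        ({pr : Fin n × Fin n // pr.1 < pr.2 ∧ T.Adj pr.1 pr.2} ⊕ Unit)) =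
        n.choose 2 + ((n - 1) + 1) := by
      rw [Fintype.card_sum, Fintype.card_sum, card_pairs, card_edg hT, Fintype.card_unit]
    have hfr : Module.finrank ℝ (Submodule.span ℝ (Set.range F)) =
        Fintype.card ({pr : Fin n × Fin n // pr.1 < pr.2} ⊕
        ({pr : Fin n × Fin n // pr.1 < pr.2 ∧ T.Adj pr.1 pr.2} ⊕ Unit)) :=
      finrank_span_eq_card hindep
    have hinj : Function.Injective ((phi n T).comp (Lsub n).subtype) := by
      rw [← LinearMap.ker_eq_bot, LinearMap.ker_eq_bot']
      intro m hm
      exact Subtype.ext (phi_inj hn hT m.1 m.2 hm)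
    have hle : Module.finrank ℝ (Lsub n) ≤
        Fintype.card ({pr : Fin n × Fin n // pr.1 < pr.2} ⊕
        ({pr : Fin n × Fin n // pr.1 < pr.2 ∧ T.Adj pr.1 pr.2} ⊕ Unit)) := by
      have h := LinearMap.finrank_le_finrank_of_injective hinj
      rwa [Module.finrank_fintype_fun_eq_card] at h
    have hEq : Submodule.span ℝ (Set.range F) = Lsub n :=
      Submodule.eq_of_le_of_finrank_le hspanle (by rw [hfr]; exact hle)
    first
    | (rw [hEq]; rfl)
    | (rw [hfr, hcardI]
       have h1 : n - 1 + 1 = n := Nat.succ_pred_eq_of_pos hn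
       rw [h1]
       have h2 : n.choose 2 + n = (n + 1).choose 2 := by
         rw [Nat.choose_succ_succ n 1, Nat.choose_one_right, Nat.add_comm]
       rw [h2, Nat.choose_two_right]
       simp [Nat.mul_comm])
  }
end

section
/- Linear independence characterization (Lemma 6.2(i)): Let (n, E, t, h, z) be ℤ-labelled graph data with a simple labelling. The family of matrices {F_e : e ∈ E} ∪ {F_L} is linearly independent if and only if: there are no selfloops (no e with t e = h e), for every pair of distinct vertices i, j at most two edges e satisfy {t e, h e} = {i, j}, and the multiplicity graph of the data is acyclic. -/
/-- The labelling `z` is simple: selfloops have nonzero labels, and no two distinct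
parallel edges have the same direction and label, or inverse directions and inverse
labels. -/
def SimpleLabelling {n : ℕ} {E : Type*} (t h : E → Fin n) (z : E → ℤ) : Prop :=
  (∀ e, t e = h e → z e ≠ 0) ∧
  ∀ e f, e ≠ f →
    ¬((t e = t f ∧ h e = h f ∧ z e = z f) ∨ (t e = h f ∧ h e = t f ∧ z e = -z f))

/-- The multiplicity graph of ℤ-labelled graph data: distinct vertices `i, j` are
adjacent iff at least two edges `e` satisfy `{t e, h e} = {i, j}`. -/
def multGraph {n : ℕ} {E : Type*} (t h : E → Fin n) : SimpleGraph (Fin n) where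
  Adj i j := i ≠ j ∧ ∃ e f : E, e ≠ f ∧ ({t e, h e} : Set (Fin n)) = {i, j} ∧
    ({t f, h f} : Set (Fin n)) = {i, j}
  symm := by
    constructor
    rintro i j ⟨hij, e, f, hef, h1, h2⟩
    exact ⟨hij.symm, e, f, hef, by rw [Set.pair_comm j i]; exact h1,
      by rw [Set.pair_comm j i]; exact h2⟩
  loopless := by constructor; rintro i ⟨hii, -⟩; exact hii rfl



open scoped Classical

section Aux
variable {n : ℕ} {E : Type*} [Fintype E]

/-- incidence value of edge `x` at vertex `i` -/
noncomputable def dval (t h : E → Fin n) (x : E) (i : Fin n) : ℝ :=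
  (if i = h x then 1 else 0) - (if i = t x then 1 else 0)

variable (t h : E → Fin n) (z : E → ℤ)

lemma ivec_castSucc (e : E) (i : Fin n) :
    ivec t h z e i.castSucc = dval t h e i := by
  simp [ivec, dval, Fin.castSucc_inj, (Fin.castSucc_lt_last i).ne]

lemma ivec_last (e : E) : ivec t h z e (Fin.last n) = z e := by
  simp [ivec, (Fin.castSucc_lt_last (h e)).ne', (Fin.castSucc_lt_last (t e)).ne']

lemma Lmat_apply (ω : E → ℝ) (ωL : ℝ) (k l : Fin (n + 1)) :
    Lmat t h z ω ωL k l = (∑ x : E, ω x * (ivec t h z x k * ivec t h z x l)) +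
      ωL * ((if k = Fin.last n then 1 else 0) * (if l = Fin.last n then 1 else 0)) := by
  simp [Lmat, Fmat, FLmat, Matrix.sum_apply, Matrix.vecMulVec_apply, mul_comm]


lemma Lmat_eq_zero_iff (ω : E → ℝ) (ωL : ℝ) :
    Lmat t h z ω ωL = 0 ↔
      ((∀ i j : Fin n, ∑ x : E, ω x * (dval t h x i * dval t h x j) = 0) ∧
       (∀ i : Fin n, ∑ x : E, ω x * (dval t h x i * z x) = 0) ∧
       (∑ x : E, ω x * (z x * z x)) + ωL = 0) := by
  constructor
  · intro h0
    have hE : ∀ k l, Lmat t h z ω ωL k l = 0 := by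
      intro k l; rw [h0]; rfl
    refine ⟨fun i j => ?_, fun i => ?_, ?_⟩
    · have := hE i.castSucc j.castSucc
      rw [Lmat_apply] at this
      simpa [ivec_castSucc, (Fin.castSucc_lt_last i).ne] using this
    · have := hE i.castSucc (Fin.last n)
      rw [Lmat_apply] at this
      simpa [ivec_castSucc, ivec_last, (Fin.castSucc_lt_last i).ne] using this
    · have := hE (Fin.last n) (Fin.last n)
      rw [Lmat_apply] at this
      simpa [ivec_last] using this
  · rintro ⟨h1, h2, h3⟩
    ext k l
    rw [Lmat_apply]
    refine Fin.lastCases ?_ (fun i => ?_) k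
    · refine Fin.lastCases ?_ (fun j => ?_) l
      · simpa [ivec_last] using h3
      · have := h2 j
        simpa [ivec_last, ivec_castSucc, (Fin.castSucc_lt_last j).ne, mul_comm] using this
    · refine Fin.lastCases ?_ (fun j => ?_) l
      · have := h2 i
        simpa [ivec_last, ivec_castSucc, (Fin.castSucc_lt_last i).ne, mul_comm] using this
      · have := h1 i j
        simpa [ivec_castSucc, (Fin.castSucc_lt_last i).ne, (Fin.castSucc_lt_last j).ne] using this

lemma li_iff :
    LinearIndependent ℝ
        (fun o : Option E => Option.elim o (FLmat n) (fun e => Fmat t h z e)) ↔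
      ∀ (ω : E → ℝ) (ωL : ℝ), Lmat t h z ω ωL = 0 → (∀ x, ω x = 0) ∧ ωL = 0 := by
  rw [Fintype.linearIndependent_iff]
  constructor
  · intro H ω ωL h0
    have := H (fun o => Option.elim o ωL ω) ?_
    · exact ⟨fun x => this (some x), this none⟩
    · rw [Fintype.sum_option]
      simpa [Lmat, add_comm] using h0
  · intro H g hg
    have : Lmat t h z (fun e => g (some e)) (g none) = 0 := by
      rw [Fintype.sum_option] at hg
      simpa [Lmat, add_comm] using hg
    have := H _ _ this
    rintro (_|x)
    · exact this.2
    · exact this.1 x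

lemma dval_j_one {i j : Fin n} (hij : i ≠ j) {x : E} (h1 : t x = i) (h2 : h x = j) :
    dval t h x j = 1 := by simp [dval, h1, h2, Ne.symm hij]

lemma dval_j_negone {i j : Fin n} (hij : i ≠ j) {x : E} (h1 : t x = j) (h2 : h x = i) :
    dval t h x j = -1 := by simp [dval, h1, h2, Ne.symm hij]

lemma dval_of_pair {i j : Fin n} (hij : i ≠ j) {x : E}
    (hx : ({t x, h x} : Set (Fin n)) = {i, j}) (v : Fin n) :
    dval t h x v = ((if v = j then 1 else 0) - (if v = i then 1 else 0)) * dval t h x j := by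
  rcases Set.pair_eq_pair_iff.mp hx with ⟨h1, h2⟩ | ⟨h1, h2⟩
  · rw [dval_j_one t h hij h1 h2]; simp only [dval, h1, h2]; ring
  · rw [dval_j_negone t h hij h1 h2]; simp only [dval, h1, h2]; ring

lemma dval_sq_of_pair {i j : Fin n} (hij : i ≠ j) {x : E}
    (hx : ({t x, h x} : Set (Fin n)) = {i, j}) :
    dval t h x j * dval t h x j = 1 := by
  rcases Set.pair_eq_pair_iff.mp hx with ⟨h1, h2⟩ | ⟨h1, h2⟩
  · rw [dval_j_one t h hij h1 h2]; ring
  · rw [dval_j_negone t h hij h1 h2]; ring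

lemma vals_ne (hs : SimpleLabelling t h z) {i j : Fin n} (hij : i ≠ j) {e f : E}
    (hef : e ≠ f) (he : ({t e, h e} : Set (Fin n)) = {i, j})
    (hf : ({t f, h f} : Set (Fin n)) = {i, j}) :
    dval t h e j * (z e : ℝ) ≠ dval t h f j * (z f : ℝ) := by
  have hs2 := hs.2 e f hef
  rcases Set.pair_eq_pair_iff.mp he with ⟨h1, h2⟩ | ⟨h1, h2⟩ <;>
    rcases Set.pair_eq_pair_iff.mp hf with ⟨h3, h4⟩ | ⟨h3, h4⟩
  · rw [dval_j_one t h hij h1 h2, dval_j_one t h hij h3 h4]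
    intro hc
    exact hs2 (Or.inl ⟨h1.trans h3.symm, h2.trans h4.symm,
      by exact_mod_cast (by linarith : (z e : ℝ) = z f)⟩)
  · rw [dval_j_one t h hij h1 h2, dval_j_negone t h hij h3 h4]
    intro hc
    exact hs2 (Or.inr ⟨h1.trans h4.symm, h2.trans h3.symm,
      by exact_mod_cast (by linarith : (z e : ℝ) = -z f)⟩)
  · rw [dval_j_negone t h hij h1 h2, dval_j_one t h hij h3 h4]
    intro hc
    exact hs2 (Or.inr ⟨h1.trans h4.symm, h2.trans h3.symm,
      by exact_mod_cast (by linarith : (z e : ℝ) = -z f)⟩)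
  · rw [dval_j_negone t h hij h1 h2, dval_j_negone t h hij h3 h4]
    intro hc
    exact hs2 (Or.inl ⟨h1.trans h3.symm, h2.trans h4.symm,
      by exact_mod_cast (by linarith : (z e : ℝ) = z f)⟩)

lemma sum_bump_mul (e : E) (c : ℝ) (F : E → ℝ) :
    ∑ x : E, (if x = e then c else 0) * F x = c * F e := by
  rw [Finset.sum_eq_single e] <;> simp +contextual

lemma exists_eflow (hs : SimpleLabelling t h z) {i j : Fin n} (hij : i ≠ j) {e f : E}
    (hef : e ≠ f) (he : ({t e, h e} : Set (Fin n)) = {i, j})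
    (hf : ({t f, h f} : Set (Fin n)) = {i, j}) :
    ∃ ω : E → ℝ,
      (∀ v w : Fin n, ∑ x : E, ω x * (dval t h x v * dval t h x w) = 0) ∧
      (∀ v : Fin n, ∑ x : E, ω x * (dval t h x v * (z x : ℝ)) =
        (if v = j then 1 else 0) - (if v = i then 1 else 0)) ∧
      (∀ x : E, ω x ≠ 0 → ({t x, h x} : Set (Fin n)) = {i, j}) ∧ ω e ≠ 0 := by
  set Δ : ℝ := dval t h e j * (z e : ℝ) - dval t h f j * (z f : ℝ) with hΔdef
  have hΔ : Δ ≠ 0 := sub_ne_zero.mpr (vals_ne t h z hs hij hef he hf)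
  refine ⟨fun x => (if x = e then Δ⁻¹ else 0) + (if x = f then -Δ⁻¹ else 0), ?_, ?_, ?_, ?_⟩
  · intro v w
    simp only [add_mul, Finset.sum_add_distrib, sum_bump_mul]
    rw [dval_of_pair t h hij he v, dval_of_pair t h hij he w,
        dval_of_pair t h hij hf v, dval_of_pair t h hij hf w]
    set a : ℝ := (if v = j then (1:ℝ) else 0) - (if v = i then 1 else 0) with ha
    set b : ℝ := (if w = j then (1:ℝ) else 0) - (if w = i then 1 else 0) with hb
    have h1 := dval_sq_of_pair t h hij he
    have h2 := dval_sq_of_pair t h hij hf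
    linear_combination (Δ⁻¹ * a * b) * h1 - (Δ⁻¹ * a * b) * h2
  · intro v
    simp only [add_mul, Finset.sum_add_distrib, sum_bump_mul]
    rw [dval_of_pair t h hij he v, dval_of_pair t h hij hf v]
    set a : ℝ := (if v = j then (1:ℝ) else 0) - (if v = i then 1 else 0) with ha
    have hinv : Δ⁻¹ * Δ = 1 := inv_mul_cancel₀ hΔ
    linear_combination a * hinv + (Δ⁻¹ * a) * hΔdef
  · intro x hx
    by_cases h1 : x = e
    · subst h1; exact he
    · by_cases h2 : x = f
      · subst h2; exact hf
      · simp [h1, h2] at hx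
  · simp [hef, hΔ]

lemma dprod_of_pair {i j : Fin n} (hij : i ≠ j) {x : E}
    (hx : ({t x, h x} : Set (Fin n)) = {i, j}) (v w : Fin n) :
    dval t h x v * dval t h x w =
      ((if v = j then (1:ℝ) else 0) - (if v = i then 1 else 0)) *
      ((if w = j then (1:ℝ) else 0) - (if w = i then 1 else 0)) := by
  rw [dval_of_pair t h hij hx v, dval_of_pair t h hij hx w]
  set a : ℝ := (if v = j then (1:ℝ) else 0) - (if v = i then 1 else 0)
  set b : ℝ := (if w = j then (1:ℝ) else 0) - (if w = i then 1 else 0)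
  linear_combination (a * b) * dval_sq_of_pair t h hij hx

lemma selfloop_stress {e₀ : E} (h0 : t e₀ = h e₀) :
    Lmat t h z (fun x => if x = e₀ then 1 else 0) (-((z e₀ : ℝ) * (z e₀ : ℝ))) = 0 := by
  rw [Lmat_eq_zero_iff]
  have hd : ∀ i, dval t h e₀ i = 0 := by intro i; simp [dval, h0]
  refine ⟨fun i j => ?_, fun i => ?_, ?_⟩
  · rw [sum_bump_mul]; rw [hd i]; ring
  · rw [sum_bump_mul]; rw [hd i]; ring
  · rw [sum_bump_mul]; ring

lemma triple_stress (hs : SimpleLabelling t h z) {i j : Fin n} (hij : i ≠ j)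
    {e f g : E} (hef : e ≠ f) (heg : e ≠ g) (hfg : f ≠ g)
    (he : ({t e, h e} : Set (Fin n)) = {i, j})
    (hf : ({t f, h f} : Set (Fin n)) = {i, j})
    (hg : ({t g, h g} : Set (Fin n)) = {i, j}) :
    ∃ (ω : E → ℝ) (ωL : ℝ), Lmat t h z ω ωL = 0 ∧ ω e ≠ 0 := by
  set A : ℝ := dval t h e j * (z e : ℝ) with hA
  set B : ℝ := dval t h f j * (z f : ℝ) with hB
  set C : ℝ := dval t h g j * (z g : ℝ) with hC
  set ω : E → ℝ := fun x => (if x = e then B - C else 0) + (if x = f then C - A else 0) +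
    (if x = g then A - B else 0) with hω
  refine ⟨ω, -(∑ x : E, ω x * ((z x : ℝ) * (z x : ℝ))), ?_, ?_⟩
  · rw [Lmat_eq_zero_iff]
    refine ⟨fun v w => ?_, fun v => ?_, by ring⟩
    · simp only [hω, add_mul, Finset.sum_add_distrib, sum_bump_mul]
      rw [dprod_of_pair t h hij he v w, dprod_of_pair t h hij hf v w,
        dprod_of_pair t h hij hg v w]
      ring
    · simp only [hω, add_mul, Finset.sum_add_distrib, sum_bump_mul]
      have key : ∀ x : E, ({t x, h x} : Set (Fin n)) = {i, j} →
          dval t h x v * (z x : ℝ) =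
            ((if v = j then (1:ℝ) else 0) - (if v = i then 1 else 0)) *
              (dval t h x j * (z x : ℝ)) := by
        intro x hx
        rw [dval_of_pair t h hij hx v]; ring
      rw [key e he, key f hf, key g hg, ← hA, ← hB, ← hC]
      ring
  · have hBC : B ≠ C := vals_ne t h z hs hij hfg hf hg
    simp [hω, hef, heg, sub_ne_zero.mpr hBC]

lemma sym2_of_pair {a b c d : Fin n} (hp : ({a, b} : Set (Fin n)) = {c, d}) :
    s(a, b) = s(c, d) := by
  rcases Set.pair_eq_pair_iff.mp hp with ⟨h1, h2⟩ | ⟨h1, h2⟩ <;> subst h1 <;> subst h2 <;>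
    simp [Sym2.eq_swap]

lemma walk_flow (hs : SimpleLabelling t h z) (s : Set (Sym2 (Fin n))) {v w : Fin n}
    (p : (multGraph t h \ SimpleGraph.fromEdgeSet s).Walk v w) :
    ∃ ω : E → ℝ,
      (∀ a b : Fin n, ∑ x : E, ω x * (dval t h x a * dval t h x b) = 0) ∧
      (∀ a : Fin n, ∑ x : E, ω x * (dval t h x a * (z x : ℝ)) =
        (if a = w then 1 else 0) - (if a = v then 1 else 0)) ∧
      (∀ x : E, ω x ≠ 0 → s(t x, h x) ∉ s) := by
  induction p with
  | nil =>
    exact ⟨0, by simp, by simp, by simp⟩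
  | @cons u a b hadj q ih =>
    obtain ⟨ω₂, hω₂a, hω₂b, hω₂s⟩ := ih
    have hadj' : (multGraph t h).Adj u a ∧ ¬(SimpleGraph.fromEdgeSet s).Adj u a := hadj
    obtain ⟨hne, e, f, hef, he, hf⟩ := hadj'.1
    obtain ⟨ω₁, hω₁a, hω₁b, hω₁s, -⟩ := exists_eflow t h z hs hne hef he hf
    refine ⟨ω₁ + ω₂, fun a' b' => ?_, fun a' => ?_, fun x hx => ?_⟩
    · simp only [Pi.add_apply, add_mul, Finset.sum_add_distrib, hω₂a, hω₁a, add_zero]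
    · simp only [Pi.add_apply, add_mul, Finset.sum_add_distrib, hω₂b, hω₁b]
      ring
    · by_cases h1 : ω₁ x = 0
      · have h2 : ω₂ x ≠ 0 := by
          intro h2; exact hx (by simp [h1, h2])
        exact hω₂s x h2
      · have hp := hω₁s x h1
        have : s(t x, h x) = s(u, a) := sym2_of_pair hp
        rw [this]
        intro hmem
        exact hadj'.2 ((SimpleGraph.fromEdgeSet_adj _).mpr ⟨hmem, hne⟩)

lemma cycle_stress (hs : SimpleLabelling t h z) (hnac : ¬(multGraph t h).IsAcyclic) :
    ∃ (ω : E → ℝ) (ωL : ℝ), Lmat t h z ω ωL = 0 ∧ ∃ x : E, ω x ≠ 0 := by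
  rw [SimpleGraph.isAcyclic_iff_forall_adj_isBridge] at hnac
  push_neg at hnac
  obtain ⟨v, w, hadj, hnbr⟩ := hnac
  rw [SimpleGraph.isBridge_iff] at hnbr
  push_neg at hnbr
  have hreach := hnbr
  obtain ⟨p⟩ := hreach
  obtain ⟨ω₂, hω₂a, hω₂b, hω₂s⟩ := walk_flow t h z hs {s(v, w)} p
  obtain ⟨hne, e, f, hef, he, hf⟩ := hadj
  have he' : ({t e, h e} : Set (Fin n)) = {w, v} := by rw [Set.pair_comm w v]; exact he
  have hf' : ({t f, h f} : Set (Fin n)) = {w, v} := by rw [Set.pair_comm w v]; exact hf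
  obtain ⟨ω₁, hω₁a, hω₁b, hω₁s, hω₁e⟩ := exists_eflow t h z hs (Ne.symm hne) hef he' hf'
  set ω : E → ℝ := ω₁ + ω₂ with hω
  refine ⟨ω, -(∑ x : E, ω x * ((z x : ℝ) * (z x : ℝ))), ?_, e, ?_⟩
  · rw [Lmat_eq_zero_iff]
    refine ⟨fun a b => ?_, fun a => ?_, by ring⟩
    · simp only [hω, Pi.add_apply, add_mul, Finset.sum_add_distrib, hω₁a, hω₂a, add_zero]
    · simp only [hω, Pi.add_apply, add_mul, Finset.sum_add_distrib, hω₁b, hω₂b]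
      ring
  · have hω₂e : ω₂ e = 0 := by
      by_contra hc
      exact hω₂s e hc (by rw [sym2_of_pair he]; exact rfl)
    simp [hω, hω₂e, hω₁e]

lemma flow_bridge {V : Type*} [Fintype V] (G : SimpleGraph V) (hac : G.IsAcyclic)
    (φ : V → V → ℝ) (hskew : ∀ a b, φ b a = -φ a b)
    (hsupp : ∀ a b, ¬G.Adj a b → φ a b = 0)
    (hdiv : ∀ a, ∑ b : V, φ a b = 0) (a b : V) : φ a b = 0 := by
  by_cases hadj : G.Adj a b
  · have hbr := SimpleGraph.isAcyclic_iff_forall_adj_isBridge.mp hac hadj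
    rw [SimpleGraph.isBridge_iff] at hbr
    have hnr : ¬(G \ SimpleGraph.fromEdgeSet {s(a, b)}).Reachable a b := hbr
    set G' := G \ SimpleGraph.fromEdgeSet {s(a, b)} with hG'
    set C : Finset V := Finset.univ.filter (fun u => G'.Reachable a u) with hC
    have haC : a ∈ C := by simp only [hC, Finset.mem_filter, Finset.mem_univ, true_and]; exact SimpleGraph.Reachable.refl a
    have hbC : b ∉ C := by simp [hC]; exact hnr
    have h0 : ∑ u ∈ C, ∑ x : V, φ u x = 0 := by
      exact Finset.sum_eq_zero fun u _ => hdiv u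
    have hsplit : ∀ u : V, ∑ x : V, φ u x = (∑ x ∈ C, φ u x) + ∑ x ∈ Cᶜ, φ u x := by
      intro u
      rw [← Finset.sum_add_sum_compl C]
    have hS1 : ∑ u ∈ C, ∑ x ∈ C, φ u x = 0 := by
      have h1 : ∑ u ∈ C, ∑ x ∈ C, φ u x = ∑ x ∈ C, ∑ u ∈ C, φ u x := Finset.sum_comm
      have h2 : ∑ x ∈ C, ∑ u ∈ C, φ u x = -∑ u ∈ C, ∑ x ∈ C, φ u x := by
        rw [← Finset.sum_neg_distrib]
        refine Finset.sum_congr rfl fun x _ => ?_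
        rw [← Finset.sum_neg_distrib]
        exact Finset.sum_congr rfl fun u _ => by rw [hskew]
      linarith [h1, h2.symm.trans h1.symm]
    have hterm : ∀ u ∈ C, ∀ x ∈ Cᶜ, φ u x = if u = a ∧ x = b then φ a b else 0 := by
      intro u hu x hx
      rw [Finset.mem_compl] at hx
      by_cases hux : u = a ∧ x = b
      · rw [if_pos hux, hux.1, hux.2]
      · rw [if_neg hux]
        by_cases hGux : G.Adj u x
        · by_cases hedge : s(u, x) = s(a, b)
          · rcases Sym2.eq_iff.mp hedge with ⟨h1, h2⟩ | ⟨h1, h2⟩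
            · exact absurd ⟨h1, h2⟩ hux
            · exfalso; apply hbC
              rw [h1] at hu; exact hu
          · exfalso
            apply hx
            have hG'ux : G'.Adj u x := by
              rw [hG', SimpleGraph.sdiff_adj]
              refine ⟨hGux, ?_⟩
              rw [SimpleGraph.fromEdgeSet_adj]
              rintro ⟨hmem, -⟩
              exact hedge hmem
            simp only [hC, Finset.mem_filter, Finset.mem_univ, true_and] at hu ⊢
            exact hu.trans hG'ux.reachable
        · exact hsupp u x hGux
    have hS2 : ∑ u ∈ C, ∑ x ∈ Cᶜ, φ u x = φ a b := by
      rw [Finset.sum_congr rfl fun u hu => Finset.sum_congr rfl fun x hx => hterm u hu x hx]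
      have : ∀ u ∈ C, (∑ x ∈ Cᶜ, if u = a ∧ x = b then φ a b else 0) =
          if u = a then φ a b else 0 := by
        intro u _
        by_cases hu : u = a
        · subst hu
          rw [if_pos rfl]
          have hcong : (∑ x ∈ Cᶜ, if u = u ∧ x = b then φ u b else 0) =
              ∑ x ∈ Cᶜ, if x = b then φ u b else 0 :=
            Finset.sum_congr rfl fun x _ => by simp
          rw [hcong, Finset.sum_ite_eq' Cᶜ b (fun _ => φ u b),
            if_pos (Finset.mem_compl.mpr hbC)]
        · rw [if_neg hu]
          exact Finset.sum_eq_zero fun x _ => by simp [hu]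
      rw [Finset.sum_congr rfl this, Finset.sum_ite_eq' C a (fun _ => φ a b), if_pos haC]
    have := h0
    rw [Finset.sum_congr rfl fun u hu => hsplit u, Finset.sum_add_distrib, hS1, hS2] at this
    linarith
  · exact hsupp a b hadj

lemma dval_h {x : E} (hL : t x ≠ h x) : dval t h x (h x) = 1 := by
  simp [dval, Ne.symm hL]

lemma dval_t {x : E} (hL : t x ≠ h x) : dval t h x (t x) = -1 := by
  simp [dval, hL]

lemma dprod_neg_ind (hL : ∀ x : E, t x ≠ h x) (x : E) {a b : Fin n} (hab : a ≠ b) :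
    dval t h x a * dval t h x b =
      -(if ({t x, h x} : Set (Fin n)) = {a, b} then (1:ℝ) else 0) := by
  by_cases hp : ({t x, h x} : Set (Fin n)) = {a, b}
  · rw [if_pos hp]
    rcases Set.pair_eq_pair_iff.mp hp with ⟨h1, h2⟩ | ⟨h1, h2⟩ <;>
      simp [dval, h1, h2, hab, Ne.symm hab]
  · rw [if_neg hp, neg_zero]
    have hp' : ¬((t x = a ∧ h x = b) ∨ (t x = b ∧ h x = a)) :=
      fun hc => hp (Set.pair_eq_pair_iff.mpr hc)
    push_neg at hp'
    obtain ⟨hp1, hp2⟩ := hp'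
    by_cases h2 : a = t x
    · have hhb : b ≠ h x := fun hc => hp1 h2.symm hc.symm
      have hbt : b ≠ t x := fun hc => hab (h2.trans hc.symm)
      have hz : dval t h x b = 0 := by simp [dval, hhb, hbt]
      rw [hz]; ring
    · by_cases h1 : a = h x
      · have hbt : b ≠ t x := fun hc => (hp2 hc.symm) h1.symm
        have hhb : b ≠ h x := fun hc => hab (h1.trans hc.symm)
        have hz : dval t h x b = 0 := by simp [dval, hhb, hbt]
        rw [hz]; ring
      · have hz : dval t h x a = 0 := by simp [dval, h1, h2]
        rw [hz]; ring

lemma sum_ind_class (hL : ∀ x : E, t x ≠ h x) (ω : E → ℝ) {a b : Fin n} (hab : a ≠ b)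
    (ha : ∑ x : E, ω x * (dval t h x a * dval t h x b) = 0) :
    ∑ x : E, (if ({t x, h x} : Set (Fin n)) = {a, b} then ω x else 0) = 0 := by
  have key : ∀ x : E, ω x * (dval t h x a * dval t h x b) =
      -(if ({t x, h x} : Set (Fin n)) = {a, b} then ω x else 0) := by
    intro x
    rw [dprod_neg_ind t h hL x hab]
    by_cases hp : ({t x, h x} : Set (Fin n)) = {a, b} <;> simp [hp]
  rw [Finset.sum_congr rfl fun x _ => key x, Finset.sum_neg_distrib, neg_eq_zero] at ha
  exact ha

lemma omega_single (hL : ∀ x : E, t x ≠ h x) (ω : E → ℝ) {a b : Fin n} (hab : a ≠ b)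
    (ha : ∑ x : E, ω x * (dval t h x a * dval t h x b) = 0) {x₀ : E}
    (hx₀ : ({t x₀, h x₀} : Set (Fin n)) = {a, b})
    (huniq : ∀ y : E, ({t y, h y} : Set (Fin n)) = {a, b} → y = x₀) : ω x₀ = 0 := by
  have hsum := sum_ind_class t h hL ω hab ha
  rw [Finset.sum_eq_single x₀ (fun y _ hy => if_neg (fun hc => hy (huniq y hc)))
    (fun hc => absurd (Finset.mem_univ x₀) hc), if_pos hx₀] at hsum
  exact hsum

lemma inner_div_sum {x : E} (hL : t x ≠ h x) (a : Fin n) (F : Fin n → ℝ) :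
    ∑ b : Fin n, (if ({t x, h x} : Set (Fin n)) = {a, b} then F b else 0) =
      (if a = t x then F (h x) else 0) + (if a = h x then F (t x) else 0) := by
  by_cases h1 : a = t x
  · have h1' : ¬a = h x := fun hc => hL (h1.symm.trans hc)
    rw [if_pos h1, if_neg h1', add_zero]
    have hcond : ∀ b : Fin n, (({t x, h x} : Set (Fin n)) = {a, b}) ↔ b = h x := by
      intro b
      rw [Set.pair_eq_pair_iff]
      constructor
      · rintro (⟨-, hb⟩ | ⟨-, hha⟩)
        · exact hb.symm
        · exact absurd (hha.trans h1).symm hL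
      · rintro rfl
        exact Or.inl ⟨h1.symm, rfl⟩
    rw [Finset.sum_congr rfl fun b _ => (by
      by_cases hb : b = h x
      · rw [if_pos ((hcond b).mpr hb), if_pos hb]
      · rw [if_neg (fun hc => hb ((hcond b).mp hc)), if_neg hb] :
        (if ({t x, h x} : Set (Fin n)) = {a, b} then F b else 0) =
          (if b = h x then F b else 0)),
      Finset.sum_ite_eq' Finset.univ (h x) F, if_pos (Finset.mem_univ _)]
  · rw [if_neg h1, zero_add]
    by_cases h2 : a = h x
    · rw [if_pos h2]
      have hcond : ∀ b : Fin n, (({t x, h x} : Set (Fin n)) = {a, b}) ↔ b = t x := by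
        intro b
        rw [Set.pair_eq_pair_iff]
        constructor
        · rintro (⟨hta, -⟩ | ⟨htb, -⟩)
          · exact absurd hta.symm h1
          · exact htb.symm
        · rintro rfl
          exact Or.inr ⟨rfl, h2.symm⟩
      rw [Finset.sum_congr rfl fun b _ => (by
        by_cases hb : b = t x
        · rw [if_pos ((hcond b).mpr hb), if_pos hb]
        · rw [if_neg (fun hc => hb ((hcond b).mp hc)), if_neg hb] :
          (if ({t x, h x} : Set (Fin n)) = {a, b} then F b else 0) =
            (if b = t x then F b else 0)),
        Finset.sum_ite_eq' Finset.univ (t x) F, if_pos (Finset.mem_univ _)]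
    · rw [if_neg h2]
      refine Finset.sum_eq_zero fun b _ => if_neg (fun hc => ?_)
      rcases Set.pair_eq_pair_iff.mp hc with ⟨hta, -⟩ | ⟨-, hha⟩
      · exact h1 hta.symm
      · exact h2 hha.symm

lemma reverse_zero (hs : SimpleLabelling t h z) (hL : ∀ e : E, t e ≠ h e)
    (h2 : ∀ i j : Fin n, i ≠ j → ∀ e f g : E,
      ({t e, h e} : Set (Fin n)) = {i, j} → ({t f, h f} : Set (Fin n)) = {i, j} →
      ({t g, h g} : Set (Fin n)) = {i, j} → e = f ∨ e = g ∨ f = g)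
    (h3 : (multGraph t h).IsAcyclic)
    (ω : E → ℝ) (ωL : ℝ) (h0 : Lmat t h z ω ωL = 0) : (∀ x, ω x = 0) ∧ ωL = 0 := by
  obtain ⟨ha, hb, hc⟩ := (Lmat_eq_zero_iff t h z ω ωL).mp h0
  have hω : ∀ x₀ : E, ω x₀ = 0 := by
    intro x₀
    have hij : t x₀ ≠ h x₀ := hL x₀
    by_cases huniq : ∀ y : E, ({t y, h y} : Set (Fin n)) = {t x₀, h x₀} → y = x₀
    · exact omega_single t h hL ω hij (ha (t x₀) (h x₀)) rfl huniq
    · push_neg at huniq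
      obtain ⟨y, hy, hyne⟩ := huniq
      set φ : Fin n → Fin n → ℝ := fun a b =>
        ∑ x : E, (if ({t x, h x} : Set (Fin n)) = {a, b} then
          ω x * (dval t h x b * (z x : ℝ)) else 0) with hφ
      have hskew : ∀ a b, φ b a = -φ a b := by
        intro a b
        simp only [hφ]
        rw [← Finset.sum_neg_distrib]
        refine Finset.sum_congr rfl fun x _ => ?_
        by_cases hab : a = b
        · subst hab
          have hcf : ¬(({t x, h x} : Set (Fin n)) = {a, a}) := by
            intro hcon
            rcases Set.pair_eq_pair_iff.mp hcon with ⟨u1, u2⟩ | ⟨u1, u2⟩ <;>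
              exact hL x (u1.trans u2.symm)
          rw [if_neg hcf]; exact neg_zero.symm
        · by_cases hp : ({t x, h x} : Set (Fin n)) = {a, b}
          · have hp' : ({t x, h x} : Set (Fin n)) = {b, a} := hp.trans (Set.pair_comm a b)
            rw [if_pos hp', if_pos hp]
            have hd : dval t h x a = -dval t h x b := by
              rw [dval_of_pair t h hab hp a, if_neg hab, if_pos rfl]; ring
            rw [hd]; ring
          · rw [if_neg (fun hcon => hp (hcon.trans (Set.pair_comm b a))), if_neg hp]; ring
      have hsupp : ∀ a b, ¬(multGraph t h).Adj a b → φ a b = 0 := by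
        intro a b hnadj
        by_cases hab : a = b
        · subst hab
          refine Finset.sum_eq_zero fun x _ => if_neg (fun hcon => ?_)
          rcases Set.pair_eq_pair_iff.mp hcon with ⟨u1, u2⟩ | ⟨u1, u2⟩ <;>
            exact hL x (u1.trans u2.symm)
        · by_cases hex : ∃ x : E, ({t x, h x} : Set (Fin n)) = {a, b}
          · obtain ⟨x₁, hx₁⟩ := hex
            have huniq1 : ∀ y', ({t y', h y'} : Set (Fin n)) = {a, b} → y' = x₁ := by
              intro y' hy'
              by_contra hne
              exact hnadj ⟨hab, y', x₁, hne, hy', hx₁⟩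
            have hω1 : ω x₁ = 0 := omega_single t h hL ω hab (ha a b) hx₁ huniq1
            refine Finset.sum_eq_zero fun x _ => ?_
            by_cases hp : ({t x, h x} : Set (Fin n)) = {a, b}
            · rw [if_pos hp, huniq1 x hp, hω1]; ring
            · rw [if_neg hp]
          · push_neg at hex
            exact Finset.sum_eq_zero fun x _ => if_neg (hex x)
      have hdiv : ∀ a, ∑ b : Fin n, φ a b = 0 := by
        intro a
        simp only [hφ]
        rw [Finset.sum_comm]
        have hterm : ∀ x : E, (∑ b : Fin n, if ({t x, h x} : Set (Fin n)) = {a, b} then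
            ω x * (dval t h x b * (z x : ℝ)) else 0) =
            -(ω x * (dval t h x a * (z x : ℝ))) := by
          intro x
          rw [inner_div_sum t h (hL x) a (fun b => ω x * (dval t h x b * (z x : ℝ)))]
          by_cases hh1 : a = t x
          · have hh1' : ¬a = h x := fun hcon => hL x (hh1.symm.trans hcon)
            rw [if_pos hh1, if_neg hh1', add_zero, dval_h t h (hL x), hh1,
              dval_t t h (hL x)]
            ring
          · by_cases hh2 : a = h x
            · rw [if_neg hh1, if_pos hh2, zero_add, dval_t t h (hL x), hh2,
                dval_h t h (hL x)]
              ring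
            · rw [if_neg hh1, if_neg hh2]
              have hz : dval t h x a = 0 := by simp [dval, hh1, hh2]
              rw [hz]; ring
        rw [Finset.sum_congr rfl fun x _ => hterm x, Finset.sum_neg_distrib, neg_eq_zero]
        exact hb a
      have hzero := flow_bridge (multGraph t h) h3 φ hskew hsupp hdiv (t x₀) (h x₀)
      have hnotin : ∀ x : E, x ∉ ({x₀, y} : Finset E) →
          ¬(({t x, h x} : Set (Fin n)) = {t x₀, h x₀}) := by
        intro x hx hcon
        rw [Finset.mem_insert, Finset.mem_singleton] at hx
        push_neg at hx
        rcases h2 (t x₀) (h x₀) hij x₀ y x rfl hy hcon with hcc | hcc | hcc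
        · exact hyne hcc.symm
        · exact hx.1 hcc.symm
        · exact hx.2 hcc.symm
      have hsum2 : φ (t x₀) (h x₀) = ω x₀ * (dval t h x₀ (h x₀) * (z x₀ : ℝ)) +
          ω y * (dval t h y (h x₀) * (z y : ℝ)) := by
        simp only [hφ]
        rw [← Finset.sum_subset (Finset.subset_univ ({x₀, y} : Finset E))
          (fun x _ hx => if_neg (hnotin x hx))]
        rw [Finset.sum_pair (Ne.symm hyne), if_pos rfl, if_pos hy]
      have hpair_sum : ω x₀ + ω y = 0 := by
        have hcs := sum_ind_class t h hL ω hij (ha (t x₀) (h x₀))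
        rw [← Finset.sum_subset (Finset.subset_univ ({x₀, y} : Finset E))
          (fun x _ hx => if_neg (hnotin x hx)),
          Finset.sum_pair (Ne.symm hyne), if_pos rfl, if_pos hy] at hcs
        exact hcs
      have hAB : dval t h x₀ (h x₀) * (z x₀ : ℝ) ≠ dval t h y (h x₀) * (z y : ℝ) :=
        vals_ne t h z hs hij (Ne.symm hyne) rfl hy
      have hfin : ω x₀ * (dval t h x₀ (h x₀) * (z x₀ : ℝ) -
          dval t h y (h x₀) * (z y : ℝ)) = 0 := by
        rw [hsum2] at hzero
        have hyy : ω y = -ω x₀ := by linarith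
        rw [hyy] at hzero
        linarith
      rcases mul_eq_zero.mp hfin with hrr | hrr
      · exact hrr
      · exact absurd (sub_eq_zero.mp hrr) hAB
  refine ⟨hω, ?_⟩
  rw [Finset.sum_eq_zero (fun x _ => by rw [hω x]; ring)] at hc
  linarith
end Aux

/-- Lemma 6.2(i): for ℤ-labelled graph data with simple labelling, the family of matrices
`{F_e : e ∈ E} ∪ {F_L}` is linearly independent if and only if there are no selfloops,
for every pair of distinct vertices at most two edges join them, and the multiplicity
graph is acyclic. -/
theorem Fmat_linearIndependent_iff (n : ℕ) (hn : 1 ≤ n) (E : Type*) [Fintype E]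
    (t h : E → Fin n) (z : E → ℤ) (hsimple : SimpleLabelling t h z) :
    LinearIndependent ℝ
        (fun o : Option E => Option.elim o (FLmat n) (fun e => Fmat t h z e)) ↔
      ((∀ e : E, t e ≠ h e) ∧
       (∀ i j : Fin n, i ≠ j → ∀ e f g : E,
          ({t e, h e} : Set (Fin n)) = {i, j} → ({t f, h f} : Set (Fin n)) = {i, j} →
          ({t g, h g} : Set (Fin n)) = {i, j} → e = f ∨ e = g ∨ f = g) ∧
       (multGraph t h).IsAcyclic) := by
  constructor
  · intro hli
    rw [li_iff t h z] at hli
    refine ⟨?_, ?_, ?_⟩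
    · intro e hcon
      have h0 := selfloop_stress t h z hcon
      obtain ⟨hω, -⟩ := hli _ _ h0
      have := hω e
      simp at this
    · intro i j hij e f g he hf hg
      by_contra hcon
      push_neg at hcon
      obtain ⟨hef, heg, hfg⟩ := hcon
      obtain ⟨ω, ωL, h0, hne⟩ := triple_stress t h z hsimple hij hef heg hfg he hf hg
      exact hne ((hli ω ωL h0).1 e)
    · by_contra hcon
      obtain ⟨ω, ωL, h0, x, hx⟩ := cycle_stress t h z hsimple hcon
      exact hx ((hli ω ωL h0).1 x)
  · rintro ⟨c1, c2, c3⟩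
    rw [li_iff t h z]
    intro ω ωL h0
    exact reverse_zero t h z hsimple c1 c2 c3 ω ωL h0
end

section
/- Spanning characterization (Lemma 6.2(ii)): Let (n, E, t, h, z) be ℤ-labelled graph data with a simple labelling. The family of matrices {F_e : e ∈ E} ∪ {F_L} spans the space ℒ^{n+1} if and only if: for every pair of distinct vertices i, j some edge e satisfies {t e, h e} = {i, j} (i.e., si(Ĝ) is the complete graph on Fin n), and the multiplicity graph of the data is connected on all of Fin n. -/
namespace SpanAux

noncomputable def en (n : ℕ) : Fin (n + 1) → ℝ := fun k => if k = Fin.last n then 1 else 0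

noncomputable def dv {n : ℕ} (i j : Fin n) : Fin (n + 1) → ℝ :=
  fun k => (if k = j.castSucc then 1 else 0) - (if k = i.castSucc then 1 else 0)

@[simp] lemma en_last (n : ℕ) : en n (Fin.last n) = 1 := by simp [en]
@[simp] lemma en_castSucc {n : ℕ} (u : Fin n) : en n u.castSucc = 0 := by
  simp [en, Fin.ne_last_of_lt (Fin.castSucc_lt_last u)]
@[simp] lemma dv_last {n : ℕ} (i j : Fin n) : dv i j (Fin.last n) = 0 := by
  simp [dv, (Fin.ne_last_of_lt (Fin.castSucc_lt_last i)).symm,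
    (Fin.ne_last_of_lt (Fin.castSucc_lt_last j)).symm]
@[simp] lemma dv_castSucc {n : ℕ} (i j u : Fin n) :
    dv i j u.castSucc = (if u = j then 1 else 0) - (if u = i then 1 else 0) := by
  simp [dv, Fin.castSucc_inj]

lemma dv_self {n : ℕ} (i : Fin n) : dv i i = 0 := by ext k; simp [dv]

lemma dv_trans {n : ℕ} (i j k : Fin n) : dv i k = dv i j + dv j k := by
  ext a; simp [dv]

lemma dv_rev {n : ℕ} (i j : Fin n) : dv j i = -dv i j := by ext a; simp [dv]

lemma vmv_add_left {m : ℕ} (u v w : Fin m → ℝ) :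
    Matrix.vecMulVec (u + v) w = Matrix.vecMulVec u w + Matrix.vecMulVec v w := by
  ext a b; simp [Matrix.vecMulVec_apply]; ring

lemma vmv_add_right {m : ℕ} (u v w : Fin m → ℝ) :
    Matrix.vecMulVec u (v + w) = Matrix.vecMulVec u v + Matrix.vecMulVec u w := by
  ext a b; simp [Matrix.vecMulVec_apply]; ring

lemma vmv_smul_left {m : ℕ} (c : ℝ) (u w : Fin m → ℝ) :
    Matrix.vecMulVec (c • u) w = c • Matrix.vecMulVec u w := by
  ext a b; simp [Matrix.vecMulVec_apply]; ring

lemma vmv_smul_right {m : ℕ} (c : ℝ) (u w : Fin m → ℝ) :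
    Matrix.vecMulVec u (c • w) = c • Matrix.vecMulVec u w := by
  ext a b; simp [Matrix.vecMulVec_apply]; ring

lemma vmv_neg_neg {m : ℕ} (u w : Fin m → ℝ) :
    Matrix.vecMulVec (-u) (-w) = Matrix.vecMulVec u w := by
  ext a b; simp [Matrix.vecMulVec_apply]

lemma ivec_eq {n : ℕ} {E : Type*} (t h : E → Fin n) (z : E → ℤ) (e : E) :
    ivec t h z e = dv (t e) (h e) + (z e : ℝ) • en n := by
  ext k
  simp only [ivec, dv, en, Pi.add_apply, Pi.smul_apply, smul_eq_mul]
  split_ifs <;> ring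

noncomputable def Dm {n : ℕ} (i j : Fin n) : Matrix (Fin (n + 1)) (Fin (n + 1)) ℝ :=
  Matrix.vecMulVec (dv i j) (dv i j)

noncomputable def Sm {n : ℕ} (i j : Fin n) : Matrix (Fin (n + 1)) (Fin (n + 1)) ℝ :=
  Matrix.vecMulVec (dv i j) (en n) + Matrix.vecMulVec (en n) (dv i j)

lemma FLmat_eq (n : ℕ) : FLmat n = Matrix.vecMulVec (en n) (en n) := rfl

lemma expand_sq {n : ℕ} (d : Fin (n + 1) → ℝ) (a : ℝ) :
    Matrix.vecMulVec (d + a • en n) (d + a • en n) =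
      Matrix.vecMulVec d d +
        a • (Matrix.vecMulVec d (en n) + Matrix.vecMulVec (en n) d) +
        (a * a) • Matrix.vecMulVec (en n) (en n) := by
  ext k l; simp [Matrix.vecMulVec_apply]; ring

lemma Sm_self {n : ℕ} (i : Fin n) : Sm i i = 0 := by
  simp [Sm, dv_self]

lemma Sm_trans {n : ℕ} (i j k : Fin n) : Sm i k = Sm i j + Sm j k := by
  simp only [Sm, dv_trans i j k, vmv_add_left, vmv_add_right]
  abel

end SpanAux

namespace SpanAux

variable {n : ℕ} {E : Type*}

lemma Fmat_expand (t h : E → Fin n) (z : E → ℤ) (e : E) :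
    Fmat t h z e = Dm (t e) (h e) + (z e : ℝ) • Sm (t e) (h e) +
      ((z e : ℝ) * (z e : ℝ)) • FLmat n := by
  rw [Fmat, ivec_eq, FLmat_eq, expand_sq]; rfl

lemma Fmat_expand' (t h : E → Fin n) (z : E → ℤ) (e : E) (i j : Fin n)
    (ht : t e = j) (hh : h e = i) :
    Fmat t h z e = Dm i j + (-(z e : ℝ)) • Sm i j +
      ((-(z e : ℝ)) * (-(z e : ℝ))) • FLmat n := by
  have h1 : ivec t h z e = -(dv i j + (-(z e : ℝ)) • en n) := by
    rw [ivec_eq, ht, hh, dv_rev]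
    ext k; simp; ring
  rw [Fmat, h1, vmv_neg_neg, FLmat_eq, expand_sq]; rfl

/-- a ∈ {i,j}, pair analysis -/
lemma pair_cases {i j a b : Fin n} (hij : i ≠ j)
    (hset : ({a, b} : Set (Fin n)) = {i, j}) :
    (a = i ∧ b = j) ∨ (a = j ∧ b = i) := by
  have ha : a = i ∨ a = j := by
    have : a ∈ ({i, j} : Set (Fin n)) := by rw [← hset]; exact Set.mem_insert _ _
    simpa using this
  have hb : b = i ∨ b = j := by
    have : b ∈ ({i, j} : Set (Fin n)) := by
      rw [← hset]; exact Set.mem_insert_iff.2 (Or.inr rfl)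
    simpa using this
  have hi : i ∈ ({a, b} : Set (Fin n)) := by rw [hset]; exact Set.mem_insert _ _
  have hj : j ∈ ({a, b} : Set (Fin n)) := by
    rw [hset]; exact Set.mem_insert_iff.2 (Or.inr rfl)
  simp only [Set.mem_insert_iff, Set.mem_singleton_iff] at hi hj
  rcases ha with h1 | h1
  · left; refine ⟨h1, ?_⟩
    rcases hj with h2 | h2
    · exact absurd (h2.trans h1) hij.symm
    · exact h2.symm
  · right; refine ⟨h1, ?_⟩
    rcases hi with h2 | h2
    · exact absurd (h2.trans h1) hij
    · exact h2.symm

/-- The subspace ℒ as a submodule. -/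
def LLsub (n : ℕ) : Submodule ℝ (Matrix (Fin (n + 1)) (Fin (n + 1)) ℝ) where
  carrier := {A | A.IsSymm ∧ A.mulVec (onesVec n) = 0}
  add_mem' := by
    rintro A B ⟨hA1, hA2⟩ ⟨hB1, hB2⟩
    refine ⟨?_, by rw [Matrix.add_mulVec, hA2, hB2, add_zero]⟩
    unfold Matrix.IsSymm at *
    rw [Matrix.transpose_add, hA1, hB1]
  zero_mem' := ⟨by simp [Matrix.IsSymm], Matrix.zero_mulVec _⟩
  smul_mem' := by
    rintro c A ⟨h1, h2⟩
    refine ⟨?_, by rw [Matrix.smul_mulVec, h2, smul_zero]⟩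
    unfold Matrix.IsSymm at *
    rw [Matrix.transpose_smul, h1]

@[simp] lemma ones_last (n : ℕ) : onesVec n (Fin.last n) = 0 := by simp [onesVec]
@[simp] lemma ones_castSucc {n : ℕ} (u : Fin n) : onesVec n u.castSucc = 1 := by
  simp [onesVec, Fin.ne_last_of_lt (Fin.castSucc_lt_last u)]

lemma dot_ones_dv (i j : Fin n) : ∑ k, dv i j k * onesVec n k = 0 := by
  rw [Fin.sum_univ_castSucc]
  simp [Finset.sum_sub_distrib, Finset.sum_ite_eq']
lemma dot_ones_en : ∑ k : Fin (n+1), en n k * onesVec n k = 0 := by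
  rw [Fin.sum_univ_castSucc]
  simp

lemma vmv_mulVec (u w x : Fin (n+1) → ℝ) :
    (Matrix.vecMulVec u w).mulVec x = (∑ k, w k * x k) • u := by
  ext a
  simp [Matrix.mulVec, dotProduct, Matrix.vecMulVec_apply, Finset.mul_sum, mul_assoc]
  rw [Finset.sum_mul]
  exact Finset.sum_congr rfl fun k _ => by ring

lemma vmv_mem_LL (u w : Fin (n+1) → ℝ) (hu : ∑ k, u k * onesVec n k = 0)
    (hw : ∑ k, w k * onesVec n k = 0) :
    Matrix.vecMulVec u w + Matrix.vecMulVec w u ∈ LLsub n := by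
  constructor
  · unfold Matrix.IsSymm
    ext a b
    simp [Matrix.vecMulVec_apply, Matrix.transpose_apply]
    ring
  · rw [Matrix.add_mulVec, vmv_mulVec, vmv_mulVec, hu, hw]
    simp

lemma Dm_mem_LL (i j : Fin n) : Dm i j ∈ LLsub n := by
  have := vmv_mem_LL (dv i j) (dv i j) (dot_ones_dv i j) (dot_ones_dv i j)
  have h2 : Dm i j = (2⁻¹ : ℝ) • (Matrix.vecMulVec (dv i j) (dv i j) + Matrix.vecMulVec (dv i j) (dv i j)) := by
    rw [Dm, ← two_smul ℝ, smul_smul]; norm_num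
  rw [h2]; exact Submodule.smul_mem _ _ this

lemma Sm_mem_LL (i j : Fin n) : Sm i j ∈ LLsub n :=
  vmv_mem_LL (dv i j) (en n) (dot_ones_dv i j) dot_ones_en

lemma FL_mem_LL : FLmat n ∈ LLsub n := by
  have := vmv_mem_LL (en n) (en n) (dot_ones_en (n := n)) (dot_ones_en (n := n))
  have h2 : FLmat n = (2⁻¹ : ℝ) • (Matrix.vecMulVec (en n) (en n) + Matrix.vecMulVec (en n) (en n)) := by
    rw [FLmat_eq, ← two_smul ℝ, smul_smul]; norm_num
  rw [h2]; exact Submodule.smul_mem _ _ this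

lemma Fmat_mem_LL (t h : E → Fin n) (z : E → ℤ) (e : E) : Fmat t h z e ∈ LLsub n := by
  rw [Fmat_expand]
  refine Submodule.add_mem _ (Submodule.add_mem _ (Dm_mem_LL _ _)
    (Submodule.smul_mem _ _ (Sm_mem_LL _ _))) (Submodule.smul_mem _ _ FL_mem_LL)

end SpanAux

namespace SpanAux

variable {n : ℕ} {E : Type*} [Fintype E] (t h : E → Fin n) (z : E → ℤ)

noncomputable def sp (t h : E → Fin n) (z : E → ℤ) :
    Submodule ℝ (Matrix (Fin (n + 1)) (Fin (n + 1)) ℝ) :=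
  Submodule.span ℝ
    (Set.range (fun o : Option E => Option.elim o (FLmat n) (fun e => Fmat t h z e)))

lemma FL_mem_sp : FLmat n ∈ sp t h z :=
  Submodule.subset_span ⟨none, rfl⟩

lemma Fmat_mem_sp (e : E) : Fmat t h z e ∈ sp t h z :=
  Submodule.subset_span ⟨some e, rfl⟩

/-- orientation data for an edge realizing the pair `{i,j}` -/
lemma edge_orient {i j : Fin n} (hij : i ≠ j) (e : E)
    (hset : ({t e, h e} : Set (Fin n)) = {i, j}) :
    ∃ a : ℝ, Fmat t h z e = Dm i j + a • Sm i j + (a * a) • FLmat n ∧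
      ((t e = i ∧ h e = j ∧ a = (z e : ℝ)) ∨ (t e = j ∧ h e = i ∧ a = -(z e : ℝ))) := by
  rcases pair_cases hij hset with ⟨h1, h2⟩ | ⟨h1, h2⟩
  · refine ⟨(z e : ℝ), ?_, Or.inl ⟨h1, h2, rfl⟩⟩
    have := Fmat_expand t h z e
    rw [h1, h2] at this
    exact this
  · exact ⟨-(z e : ℝ), Fmat_expand' t h z e i j h1 h2, Or.inr ⟨h1, h2, rfl⟩⟩

lemma Sm_mem_of_adj (hsimple : SimpleLabelling t h z) {i j : Fin n}
    (hadj : (multGraph t h).Adj i j) : Sm i j ∈ sp t h z := by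
  obtain ⟨hij, e, f, hef, hse, hsf⟩ := hadj
  obtain ⟨a, hFe, hoe⟩ := edge_orient t h z hij e hse
  obtain ⟨b, hFf, hof⟩ := edge_orient t h z hij f hsf
  have hab : a ≠ b := by
    intro hab
    subst hab
    rcases hoe with ⟨he1, he2, he3⟩ | ⟨he1, he2, he3⟩ <;>
      rcases hof with ⟨hf1, hf2, hf3⟩ | ⟨hf1, hf2, hf3⟩
    · refine hsimple.2 e f hef (Or.inl ⟨he1.trans hf1.symm, he2.trans hf2.symm, ?_⟩)
      have : (z e : ℝ) = (z f : ℝ) := he3.symm.trans hf3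
      exact_mod_cast this
    · refine hsimple.2 e f hef (Or.inr ⟨he1.trans hf2.symm, he2.trans hf1.symm, ?_⟩)
      have : (z e : ℝ) = -(z f : ℝ) := he3.symm.trans hf3
      exact_mod_cast this
    · refine hsimple.2 e f hef (Or.inr ⟨he1.trans hf2.symm, he2.trans hf1.symm, ?_⟩)
      have : -(z e : ℝ) = (z f : ℝ) := he3.symm.trans hf3
      have : (z e : ℝ) = -(z f : ℝ) := by linarith
      exact_mod_cast this
    · refine hsimple.2 e f hef (Or.inl ⟨he1.trans hf1.symm, he2.trans hf2.symm, ?_⟩)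
      have : -(z e : ℝ) = -(z f : ℝ) := he3.symm.trans hf3
      have : (z e : ℝ) = (z f : ℝ) := by linarith
      exact_mod_cast this
  have key : (a - b) • Sm i j =
      Fmat t h z e - Fmat t h z f - (a * a - b * b) • FLmat n := by
    rw [hFe, hFf]; module
  have h2 : Sm i j = (a - b)⁻¹ • ((a - b) • Sm i j) :=
    (inv_smul_smul₀ (sub_ne_zero.2 hab) _).symm
  rw [h2, key]
  exact Submodule.smul_mem _ _ (Submodule.sub_mem _
    (Submodule.sub_mem _ (Fmat_mem_sp t h z e) (Fmat_mem_sp t h z f))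
    (Submodule.smul_mem _ _ (FL_mem_sp t h z)))

lemma Sm_mem_of_reachable (hsimple : SimpleLabelling t h z) {i j : Fin n}
    (hr : (multGraph t h).Reachable i j) : Sm i j ∈ sp t h z := by
  obtain ⟨w⟩ := hr
  induction w with
  | nil => rw [Sm_self]; exact Submodule.zero_mem _
  | @cons a b c hadj w ih =>
      rw [Sm_trans a b c]
      exact Submodule.add_mem _ (Sm_mem_of_adj t h z hsimple hadj) ih

lemma Dm_mem_sp (hsimple : SimpleLabelling t h z)
    (hconn : (multGraph t h).Connected)
    (hcomp : ∀ i j : Fin n, i ≠ j → ∃ e : E, ({t e, h e} : Set (Fin n)) = {i, j})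
    (i j : Fin n) : Dm i j ∈ sp t h z := by
  by_cases hij : i = j
  · subst hij
    have : Dm i i = 0 := by
      rw [Dm, dv_self]
      ext a b; simp [Matrix.vecMulVec_apply]
    rw [this]; exact Submodule.zero_mem _
  · obtain ⟨e, hse⟩ := hcomp i j hij
    obtain ⟨a, hFe, -⟩ := edge_orient t h z hij e hse
    have hS : Sm i j ∈ sp t h z :=
      Sm_mem_of_reachable t h z hsimple (hconn.preconnected i j)
    have : Dm i j = Fmat t h z e - a • Sm i j - (a * a) • FLmat n := by
      rw [hFe]; module
    rw [this]
    exact Submodule.sub_mem _ (Submodule.sub_mem _ (Fmat_mem_sp t h z e)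
      (Submodule.smul_mem _ _ hS)) (Submodule.smul_mem _ _ (FL_mem_sp t h z))

end SpanAux

namespace SpanAux

variable {n : ℕ}

lemma decomp (i0 : Fin n) (A : Matrix (Fin (n+1)) (Fin (n+1)) ℝ)
    (hsymm : A.IsSymm) (hmv : A.mulVec (onesVec n) = 0) :
    A = (∑ i : Fin n, ∑ j : Fin n, (-(A i.castSucc j.castSucc) / 2) • Dm i j)
      + (∑ i : Fin n, (A i.castSucc (Fin.last n)) • Sm i0 i)
      + (A (Fin.last n) (Fin.last n)) • FLmat n := by
  have hsy : ∀ a b, A a b = A b a := fun a b =>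
    (congrFun (congrFun hsymm.symm a) b : A a b = A.transpose a b)
  have rowsum : ∀ a, ∑ j : Fin n, A a j.castSucc = 0 := by
    intro a
    have h0 : ∑ k, A a k * onesVec n k = 0 := congrFun hmv a
    rw [Fin.sum_univ_castSucc] at h0
    simpa [onesVec, Fin.ne_last_of_lt (Fin.castSucc_lt_last _)] using h0
  have colsum : ∀ b, ∑ i : Fin n, A i.castSucc b = 0 := by
    intro b
    rw [show (∑ i : Fin n, A i.castSucc b) = ∑ i : Fin n, A b i.castSucc from
      Finset.sum_congr rfl fun i _ => hsy _ _]
    exact rowsum b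
  funext a b
  simp only [Matrix.add_apply, Matrix.sum_apply, Matrix.smul_apply, smul_eq_mul,
    Dm, Sm, FLmat_eq, Matrix.vecMulVec_apply, Matrix.add_apply]
  induction a using Fin.lastCases with
  | last =>
    induction b using Fin.lastCases with
    | last => simp
    | cast v =>
      have key : ∀ x : Fin n, A x.castSucc (Fin.last n) *
          ((if v = x then 1 else 0) - if v = i0 then 1 else 0) =
          (if v = x then A x.castSucc (Fin.last n) else 0) -
          (if v = i0 then 1 else 0) * A x.castSucc (Fin.last n) := by
        intro x; split_ifs <;> ring
      simp only [dv_castSucc, en_castSucc, dv_last, en_last, mul_zero, zero_mul,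
        mul_one, one_mul, add_zero, zero_add, Finset.sum_const_zero]
      rw [Finset.sum_congr rfl (fun x _ => key x), Finset.sum_sub_distrib,
        Finset.sum_ite_eq, ← Finset.mul_sum, colsum]
      simp [hsy]
  | cast u =>
    induction b using Fin.lastCases with
    | last => simp [mul_sub, Finset.sum_sub_distrib, Finset.sum_ite_eq, colsum]
    | cast v =>
      simp only [dv_castSucc, en_castSucc, dv_last, en_last, mul_zero, zero_mul,
        mul_one, add_zero, zero_add, mul_sub, sub_mul, Finset.sum_sub_distrib,
        Finset.sum_add_distrib]
      simp only [mul_ite, ite_mul, mul_one, mul_zero, Finset.sum_ite_eq,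
        Finset.mem_univ, if_true, Finset.sum_const_zero, zero_add, sub_zero, add_zero]
      have h1 : (∑ x : Fin n, if u = v then -A x.castSucc v.castSucc / 2 else 0) = 0 := by
        by_cases huv : u = v
        · simp only [huv, if_true]
          rw [← Finset.sum_div, Finset.sum_neg_distrib, colsum]
          norm_num
        · simp [huv]
      have h3 : (∑ x : Fin n, ∑ x_1 : Fin n,
          if v = x then if u = x_1 then -A x.castSucc x_1.castSucc / 2 else 0 else 0) =
          -A v.castSucc u.castSucc / 2 := by
        rw [Finset.sum_comm]
        simp [Finset.sum_ite_eq]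
      have h4 : (∑ x : Fin n, ∑ x_1 : Fin n,
          if v = x then if u = x then -A x.castSucc x_1.castSucc / 2 else 0 else 0) = 0 := by
        have e4 : ∀ x : Fin n, (∑ x_1 : Fin n,
            if v = x then if u = x then -A x.castSucc x_1.castSucc / 2 else 0 else 0) = 0 := by
          intro x
          split_ifs with hh1 hh2
          · rw [← Finset.sum_div, Finset.sum_neg_distrib, rowsum]; norm_num
          · simp
          · simp
        rw [Finset.sum_congr rfl (fun x _ => e4 x), Finset.sum_const_zero]
      rw [h1, h3, h4, hsy v.castSucc u.castSucc]
      ring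

end SpanAux

namespace SpanAux

variable {n : ℕ} {E : Type*}

noncomputable def ind {m : ℕ} (p : Fin m) : Fin m → ℝ := fun k => if k = p then 1 else 0

lemma en_eq_ind : en n = ind (Fin.last n) := rfl
lemma FLmat_eq_ind : FLmat n = Matrix.vecMulVec (ind (Fin.last n)) (ind (Fin.last n)) := rfl

lemma dv_eq_ind (i j : Fin n) :
    dv i j = (1 : ℝ) • ind j.castSucc + (-1 : ℝ) • ind i.castSucc +
      (0 : ℝ) • ind (Fin.last n) := by
  ext k; simp [dv, ind]; ring

lemma ivec_eq_ind (t h : E → Fin n) (z : E → ℤ) (e : E) :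
    ivec t h z e = (1 : ℝ) • ind (h e).castSucc + (-1 : ℝ) • ind (t e).castSucc +
      (z e : ℝ) • ind (Fin.last n) := by
  ext k; simp [ivec, ind]; split_ifs <;> ring

noncomputable def phiLM (X : Matrix (Fin (n+1)) (Fin (n+1)) ℝ) :
    Matrix (Fin (n+1)) (Fin (n+1)) ℝ →ₗ[ℝ] ℝ where
  toFun A := ∑ a, ∑ b, X a b * A a b
  map_add' A B := by
    simp only [Matrix.add_apply, mul_add, Finset.sum_add_distrib]
  map_smul' c A := by
    simp only [Matrix.smul_apply, smul_eq_mul, RingHom.id_apply]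
    rw [Finset.mul_sum]
    refine Finset.sum_congr rfl fun a _ => ?_
    rw [Finset.mul_sum]
    exact Finset.sum_congr rfl fun b _ => by ring

lemma phi_vmv_ind (X : Matrix (Fin (n+1)) (Fin (n+1)) ℝ) (p q : Fin (n+1)) :
    phiLM X (Matrix.vecMulVec (ind p) (ind q)) = X p q := by
  simp only [phiLM, LinearMap.coe_mk, AddHom.coe_mk, Matrix.vecMulVec_apply, ind,
    mul_ite, ite_mul, mul_one, mul_zero, one_mul, zero_mul]
  rw [Finset.sum_congr rfl fun a (_ : a ∈ Finset.univ) => Finset.sum_ite_eq' Finset.univ q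
    (fun b => if a = p then X a b else 0)]
  simp [Finset.sum_ite_eq']

lemma phi_comb (X : Matrix (Fin (n+1)) (Fin (n+1)) ℝ) (c1 c2 c3 d1 d2 d3 : ℝ)
    (p1 p2 p3 q1 q2 q3 : Fin (n+1)) :
    phiLM X (Matrix.vecMulVec (c1 • ind p1 + c2 • ind p2 + c3 • ind p3)
      (d1 • ind q1 + d2 • ind q2 + d3 • ind q3)) =
      c1 * d1 * X p1 q1 + c1 * d2 * X p1 q2 + c1 * d3 * X p1 q3 +
      c2 * d1 * X p2 q1 + c2 * d2 * X p2 q2 + c2 * d3 * X p2 q3 +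
      c3 * d1 * X p3 q1 + c3 * d2 * X p3 q2 + c3 * d3 * X p3 q3 := by
  simp only [vmv_add_left, vmv_add_right, vmv_smul_left, vmv_smul_right, map_add,
    map_smul, smul_smul, smul_eq_mul, phi_vmv_ind]
  ring

noncomputable def Xmat (n : ℕ) (y : Fin n → ℝ) (Tb : Fin n → Fin n → ℝ) :
    Matrix (Fin (n+1)) (Fin (n+1)) ℝ :=
  fun a b =>
    if ha : a = Fin.last n then (if hb : b = Fin.last n then 0 else y (b.castPred hb))
    else (if hb : b = Fin.last n then y (a.castPred ha)
      else Tb (a.castPred ha) (b.castPred hb))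

@[simp] lemma Xmat_last_last (y : Fin n → ℝ) (Tb : Fin n → Fin n → ℝ) :
    Xmat n y Tb (Fin.last n) (Fin.last n) = 0 := by simp [Xmat]
@[simp] lemma Xmat_cast_last (y : Fin n → ℝ) (Tb : Fin n → Fin n → ℝ) (u : Fin n) :
    Xmat n y Tb u.castSucc (Fin.last n) = y u := by
  simp [Xmat, Fin.ne_last_of_lt (Fin.castSucc_lt_last u)]
@[simp] lemma Xmat_last_cast (y : Fin n → ℝ) (Tb : Fin n → Fin n → ℝ) (v : Fin n) :
    Xmat n y Tb (Fin.last n) v.castSucc = y v := by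
  simp [Xmat, Fin.ne_last_of_lt (Fin.castSucc_lt_last v)]
@[simp] lemma Xmat_cast_cast (y : Fin n → ℝ) (Tb : Fin n → Fin n → ℝ) (u v : Fin n) :
    Xmat n y Tb u.castSucc v.castSucc = Tb u v := by
  simp [Xmat, Fin.ne_last_of_lt (Fin.castSucc_lt_last u),
    Fin.ne_last_of_lt (Fin.castSucc_lt_last v)]

lemma phi_FL (y : Fin n → ℝ) (Tb : Fin n → Fin n → ℝ) :
    phiLM (Xmat n y Tb) (FLmat n) = 0 := by
  rw [FLmat_eq_ind, phi_vmv_ind]; simp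

lemma phi_Fmat (t h : E → Fin n) (z : E → ℤ) (y : Fin n → ℝ) (Tb : Fin n → Fin n → ℝ)
    (e : E) :
    phiLM (Xmat n y Tb) (Fmat t h z e) =
      Tb (h e) (h e) + Tb (t e) (t e) - Tb (h e) (t e) - Tb (t e) (h e) +
        2 * (z e : ℝ) * (y (h e) - y (t e)) := by
  rw [Fmat, ivec_eq_ind, phi_comb]
  simp only [Xmat_last_last, Xmat_cast_last, Xmat_last_cast, Xmat_cast_cast]
  ring

lemma phi_Sm (y : Fin n → ℝ) (Tb : Fin n → Fin n → ℝ) (i j : Fin n) :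
    phiLM (Xmat n y Tb) (Sm i j) = 2 * (y j - y i) := by
  have hl : (en n : Fin (n+1) → ℝ) = (1:ℝ) • ind (Fin.last n) + (0:ℝ) • ind (Fin.last n) +
      (0:ℝ) • ind (Fin.last n) := by ext k; simp [en, ind]
  rw [Sm, map_add, hl, dv_eq_ind, phi_comb, phi_comb]
  simp only [Xmat_last_last, Xmat_cast_last, Xmat_last_cast, Xmat_cast_cast]
  ring

end SpanAux

namespace SpanAux

variable {n : ℕ} {E : Type*}

def entryLM (a b : Fin (n+1)) : Matrix (Fin (n+1)) (Fin (n+1)) ℝ →ₗ[ℝ] ℝ where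
  toFun A := A a b
  map_add' _ _ := rfl
  map_smul' _ _ := rfl

lemma ivec_castSucc (t h : E → Fin n) (z : E → ℤ) (e : E) (u : Fin n) :
    ivec t h z e u.castSucc = (if u = h e then 1 else 0) - (if u = t e then 1 else 0) := by
  rw [ivec_eq]; simp

end SpanAux


open SpanAux

/-- Lemma 6.2(ii): for ℤ-labelled graph data with simple labelling, the family of matrices
`{F_e : e ∈ E} ∪ {F_L}` spans the space `ℒ^{n+1}` of symmetric `(n+1) × (n+1)` matrices
annihilating `𝟙'` if and only if every pair of distinct vertices is joined by some edge
(i.e. `si(Ĝ)` is complete) and the multiplicity graph is connected. -/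
theorem Fmat_span_iff (n : ℕ) (hn : 1 ≤ n) (E : Type*) [Fintype E]
    (t h : E → Fin n) (z : E → ℤ) (hsimple : SimpleLabelling t h z) :
    (Submodule.span ℝ
        (Set.range (fun o : Option E => Option.elim o (FLmat n) (fun e => Fmat t h z e))) :
        Set (Matrix (Fin (n + 1)) (Fin (n + 1)) ℝ)) =
        {A | A.IsSymm ∧ A.mulVec (onesVec n) = 0} ↔
      ((∀ i j : Fin n, i ≠ j → ∃ e : E, ({t e, h e} : Set (Fin n)) = {i, j}) ∧
       (multGraph t h).Connected) := by
  classical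
  constructor
  · intro hspan
    have hmem : ∀ B : Matrix (Fin (n+1)) (Fin (n+1)) ℝ, B ∈ LLsub n → B ∈ sp t h z := by
      intro B hB
      have hB' : B ∈ ({A : Matrix (Fin (n+1)) (Fin (n+1)) ℝ |
          A.IsSymm ∧ A.mulVec (onesVec n) = 0}) := hB
      rw [← hspan] at hB'
      exact hB'
    constructor
    · -- completeness
      intro i j hij
      by_contra hno
      push_neg at hno
      have hD : Dm i j ∈ sp t h z := hmem _ (Dm_mem_LL i j)
      have hker : sp t h z ≤ LinearMap.ker (entryLM i.castSucc j.castSucc) := by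
        rw [sp, Submodule.span_le]
        rintro _ ⟨o, rfl⟩
        rcases o with - | e
        · show FLmat n i.castSucc j.castSucc = 0
          rw [FLmat_eq, Matrix.vecMulVec_apply]
          simp
        · show Fmat t h z e i.castSucc j.castSucc = 0
          rw [Fmat, Matrix.vecMulVec_apply]
          have hfac : ∀ u : Fin n, u ≠ t e → u ≠ h e →
              ivec t h z e u.castSucc = 0 := by
            intro u h1 h2; rw [ivec_castSucc]; simp [h1, h2]
          by_cases hi1 : i = t e ∨ i = h e
          · by_cases hj1 : j = t e ∨ j = h e
            · exfalso
              apply hno e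
              rcases hi1 with h1 | h1 <;> rcases hj1 with h2 | h2
              · exact absurd (h1.trans h2.symm) hij
              · rw [← h1, ← h2]
              · rw [← h1, ← h2, Set.pair_comm]
              · exact absurd (h1.trans h2.symm) hij
            · push_neg at hj1
              rw [hfac j hj1.1 hj1.2, mul_zero]
          · push_neg at hi1
            rw [hfac i hi1.1 hi1.2, zero_mul]
      have := hker hD
      rw [LinearMap.mem_ker] at this
      have hval : entryLM i.castSucc j.castSucc (Dm i j) = -1 := by
        show Dm i j i.castSucc j.castSucc = -1
        rw [Dm, Matrix.vecMulVec_apply, dv_castSucc, dv_castSucc]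
        simp [hij, Ne.symm hij]
      rw [this] at hval
      norm_num at hval
    · -- connectivity
      rw [SimpleGraph.connected_iff]
      refine ⟨?_, ⟨⟨0, hn⟩⟩⟩
      intro i j
      by_contra hni
      set y : Fin n → ℝ := fun k => if (multGraph t h).Reachable i k then 1 else 0 with hy
      set Tb : Fin n → Fin n → ℝ := fun u v =>
        ∑ e : E, if ({t e, h e} : Set (Fin n)) = {u, v}
          then (z e : ℝ) * (y (h e) - y (t e)) else 0 with hTb
      have key : ∀ e : E, Tb (t e) (h e) = (z e : ℝ) * (y (h e) - y (t e)) := by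
        intro e
        by_cases hye : y (t e) = y (h e)
        · rw [show y (h e) - y (t e) = 0 from by rw [hye, sub_self], mul_zero, hTb]
          refine Finset.sum_eq_zero fun f _ => ?_
          split_ifs with hc
          · have htf : t f = t e ∨ t f = h e := by
              have : t f ∈ ({t e, h e} : Set (Fin n)) := by
                rw [← hc]; exact Set.mem_insert _ _
              simpa using this
            have hhf : h f = t e ∨ h f = h e := by
              have : h f ∈ ({t e, h e} : Set (Fin n)) := by
                rw [← hc]; exact Set.mem_insert_iff.2 (Or.inr rfl)
              simpa using this
            have : y (t f) = y (h f) := by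
              rcases htf with h1 | h1 <;> rcases hhf with h2 | h2 <;> rw [h1, h2]
              · exact hye
              · exact hye.symm
            rw [show y (h f) - y (t f) = 0 from by rw [this, sub_self], mul_zero]
          · rfl
        · have hne : t e ≠ h e := fun hc => hye (by rw [hc])
          have huniq : ∀ f : E, ({t f, h f} : Set (Fin n)) = {t e, h e} → f = e := by
            intro f hf
            by_contra hfe
            have hadj : (multGraph t h).Adj (t e) (h e) :=
              ⟨hne, e, f, fun hh => hfe hh.symm, rfl, hf⟩
            have hreach := hadj.reachable
            apply hye
            have hiff : (multGraph t h).Reachable i (t e) ↔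
                (multGraph t h).Reachable i (h e) :=
              ⟨fun hr => hr.trans hreach, fun hr => hr.trans hreach.symm⟩
            rw [hy]
            simp only []
            exact if_congr hiff rfl rfl
          simp only [hTb]
          rw [Finset.sum_eq_single e]
          · simp
          · intro f _ hfe
            split_ifs with hc
            · exact absurd (huniq f hc) hfe
            · rfl
          · intro he'; exact absurd (Finset.mem_univ e) he'
      have hTbdiag : ∀ u : Fin n, Tb u u = 0 := by
        intro u
        rw [hTb]
        refine Finset.sum_eq_zero fun f _ => ?_
        split_ifs with hc
        · have htf : t f = u := by
            have : t f ∈ ({u, u} : Set (Fin n)) := by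
              rw [← hc]; exact Set.mem_insert _ _
            simpa using this
          have hhf : h f = u := by
            have : h f ∈ ({u, u} : Set (Fin n)) := by
              rw [← hc]; exact Set.mem_insert_iff.2 (Or.inr rfl)
            simpa using this
          rw [htf, hhf, sub_self, mul_zero]
        · rfl
      have hTbsymm : ∀ u v : Fin n, Tb u v = Tb v u := by
        intro u v
        rw [hTb]
        exact Finset.sum_congr rfl fun f _ =>
          if_congr (by rw [Set.pair_comm u v]) rfl rfl
      have hker : sp t h z ≤ LinearMap.ker (phiLM (Xmat n y Tb)) := by
        rw [sp, Submodule.span_le]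
        rintro _ ⟨o, rfl⟩
        rcases o with - | e
        · show phiLM (Xmat n y Tb) (FLmat n) = 0
          exact phi_FL y Tb
        · show phiLM (Xmat n y Tb) (Fmat t h z e) = 0
          rw [phi_Fmat, hTbdiag, hTbdiag, hTbsymm (h e) (t e), key]
          ring
      have hS : Sm i j ∈ sp t h z := hmem _ (Sm_mem_LL i j)
      have hker' := hker hS
      rw [LinearMap.mem_ker, phi_Sm] at hker'
      have hyi : y i = 1 := by
        simp only [hy]; rw [if_pos]; exact SimpleGraph.Reachable.refl i
      have hyj : y j = 0 := by simp only [hy]; rw [if_neg hni]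
      rw [hyi, hyj] at hker'
      norm_num at hker'
  · rintro ⟨hcomp, hconn⟩
    have hle1 : sp t h z ≤ LLsub n := by
      rw [sp, Submodule.span_le]
      rintro _ ⟨o, rfl⟩
      rcases o with - | e
      · exact FL_mem_LL
      · exact Fmat_mem_LL t h z e
    have heq : sp t h z = LLsub n := by
      refine le_antisymm hle1 fun A hA => ?_
      rw [decomp ⟨0, hn⟩ A hA.1 hA.2]
      refine Submodule.add_mem _ (Submodule.add_mem _ ?_ ?_)
        (Submodule.smul_mem _ _ (FL_mem_sp t h z))
      · refine Submodule.sum_mem _ fun i _ => Submodule.sum_mem _ fun j _ =>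
          Submodule.smul_mem _ _ (Dm_mem_sp t h z hsimple hconn hcomp i j)
      · exact Submodule.sum_mem _ fun k _ => Submodule.smul_mem _ _
          (Sm_mem_of_reachable t h z hsimple (hconn.preconnected _ _))
    show (↑(sp t h z) : Set (Matrix (Fin (n + 1)) (Fin (n + 1)) ℝ)) = _
    rw [heq]
    rfl
end

section
/- Periodic realizability dominates finite realizability (Proposition 6.1): Let (n, E, t, h, z) be ℤ-labelled graph data. If the data is d-realizable (in the periodic sense), then the simple graph si(Ĝ) is d-realizable in the finite sense: for every m and every map q : Fin n → ℝ^m there exists q' : Fin n → ℝ^d with ‖q' i − q' j‖ = ‖q i − q j‖ for every edge {i, j} of si(Ĝ). -/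
open Filter Topology Bornology Set

section BoundedDistance

variable {V X : Type*}

def boundedDistSetoid [PseudoMetricSpace X] (F : ℕ → V → X) : Setoid V where
  r u v := ∃ C, ∀ k, dist (F k u) (F k v) ≤ C
  iseqv :=
    { refl := fun _ => ⟨0, fun _ => (dist_self _).le⟩
      symm := fun ⟨C, hC⟩ => ⟨C, fun k => dist_comm (F k _) _ ▸ hC k⟩
      trans := fun ⟨C, hC⟩ ⟨D, hD⟩ =>
        ⟨C + D, fun k => (dist_triangle _ _ _).trans (add_le_add (hC k) (hD k))⟩ }

theorem exists_norm_sub_eq_of_tendsto [Finite V] [NormedAddCommGroup X] [ProperSpace X]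
    {ι : Type*} (F : ℕ → V → X) (a b : ι → V) (g : ι → ℝ)
    (hF : ∀ i, Tendsto (fun k => ‖F k (a i) - F k (b i)‖) atTop (𝓝 (g i))) :
    ∃ f : V → X, ∀ i, ‖f (a i) - f (b i)‖ = g i := by
  have := Fintype.ofFinite V
  let S := boundedDistSetoid F
  let base : V → V := fun v => (Quotient.mk S v).out
  let r : ℕ → V → X := fun k v => F k v - F k (base v)
  have base_eq : ∀ i, base (a i) = base (b i) := fun i => by
    obtain ⟨C, hC⟩ := (hF i).bddAbove_range
    exact congrArg Quotient.out <| Quotient.sound ⟨C, fun k => by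
      rw [dist_eq_norm]; exact hC ⟨k, rfl⟩⟩
  have r_bounded : IsBounded (range r) := by
    refine forall_isBounded_image_eval_iff.1 fun v => ?_
    obtain ⟨C, hC⟩ := S.symm (Quotient.mk_out (s := S) v)
    refine isBounded_iff_forall_norm_le.2 ⟨C, ?_⟩
    rintro _ ⟨_, ⟨k, rfl⟩, rfl⟩
    simpa [r, dist_eq_norm] using hC k
  obtain ⟨f, -, φ, hφ, hlim⟩ := tendsto_subseq_of_bounded r_bounded fun k => mem_range_self k
  refine ⟨f, fun i => tendsto_nhds_unique ?_ ((hF i).comp hφ.tendsto_atTop)⟩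
  have hdiff := ((continuous_apply (a i)).tendsto f).comp hlim
    |>.sub (((continuous_apply (b i)).tendsto f).comp hlim)
  simpa [Function.comp_def, r, base_eq i] using hdiff.norm

end BoundedDistance

theorem abs_norm_sub_norm_le_of_norm_add_eq {E F : Type*} [SeminormedAddCommGroup E]
    [SeminormedAddCommGroup F] {x u : E} {y v : F} (h : ‖x + u‖ = ‖y + v‖) :
    |‖x‖ - ‖y‖| ≤ ‖u‖ + ‖v‖ := by
  have hx := norm_le_norm_add_norm_neg_add x (x + u)
  have hy := norm_le_norm_add_norm_neg_add y (y + v)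
  have hxu := norm_add_le x u
  have hyv := norm_add_le y v
  simp only [neg_add_cancel_left] at hx hy
  rw [abs_le]
  constructor <;> linarith

theorem edgeVec_eq_sub_add {V E : Type*} {m : ℕ} (t h : E → V) (z : E → ℤ)
    (p : V → EuclideanSpace ℝ (Fin m)) (ℓ : EuclideanSpace ℝ (Fin m)) (e : E) :
    edgeVec t h z p ℓ e = p (h e) - p (t e) + (z e : ℝ) • ℓ :=
  add_sub_right_comm _ _ _

namespace IsRealizable

variable {V E : Type*} {t h : E → V} {z : E → ℤ} {d : ℕ}

theorem exists_abs_norm_sub_le (hreal : IsRealizable V E t h z d) {m : ℕ}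
    (q : V → EuclideanSpace ℝ (Fin m)) {ℓ : EuclideanSpace ℝ (Fin m)} (hℓ : ℓ ≠ 0) :
    ∃ Q : V → EuclideanSpace ℝ (Fin d), ∀ e,
      |‖Q (h e) - Q (t e)‖ - ‖q (h e) - q (t e)‖| ≤ 2 * |(z e : ℝ)| * ‖ℓ‖ := by
  obtain ⟨Q, L, -, hL, hQ⟩ := hreal m q ℓ hℓ
  refine ⟨Q, fun e => ?_⟩
  have key := abs_norm_sub_norm_le_of_norm_add_eq (by simpa only [edgeVec_eq_sub_add] using hQ e)
  rw [norm_smul, norm_smul, hL, Real.norm_eq_abs] at key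
  linarith

theorem exists_seq_tendsto_norm_sub (hreal : IsRealizable V E t h z d) {m : ℕ}
    [Nontrivial (EuclideanSpace ℝ (Fin m))] (q : V → EuclideanSpace ℝ (Fin m)) :
    ∃ Q : ℕ → V → EuclideanSpace ℝ (Fin d), ∀ e,
      Tendsto (fun k => ‖Q k (h e) - Q k (t e)‖) atTop (𝓝 ‖q (h e) - q (t e)‖) := by
  obtain ⟨u, hu⟩ := exists_ne (0 : EuclideanSpace ℝ (Fin m))
  let ℓ : ℕ → EuclideanSpace ℝ (Fin m) := fun k => (1 / ((k : ℝ) + 1)) • u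
  have hℓ_ne : ∀ k, ℓ k ≠ 0 := fun k => smul_ne_zero (by positivity) hu
  have hℓ_lim : Tendsto ℓ atTop (𝓝 0) := by
    simpa [ℓ] using (tendsto_one_div_add_atTop_nhds_zero_nat (𝕜 := ℝ)).smul_const u
  choose Q hQ using fun k => hreal.exists_abs_norm_sub_le q (hℓ_ne k)
  refine ⟨Q, fun e => tendsto_iff_norm_sub_tendsto_zero.2 ?_⟩
  refine squeeze_zero (fun _ => norm_nonneg _) (fun k => hQ k e) ?_
  simpa using hℓ_lim.norm.const_mul (2 * |(z e : ℝ)|)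

theorem exists_norm_sub_eq [Finite V] (hreal : IsRealizable V E t h z d) {m : ℕ}
    (q : V → EuclideanSpace ℝ (Fin m)) :
    ∃ f : V → EuclideanSpace ℝ (Fin d), ∀ e, ‖f (h e) - f (t e)‖ = ‖q (h e) - q (t e)‖ := by
  rcases subsingleton_or_nontrivial (EuclideanSpace ℝ (Fin m)) with _ | _
  · exact ⟨0, fun e => by simp [Subsingleton.elim (q (h e)) (q (t e))]⟩
  · obtain ⟨Q, hQ⟩ := hreal.exists_seq_tendsto_norm_sub q
    exact exists_norm_sub_eq_of_tendsto Q h t _ hQ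

end IsRealizable

theorem periodic_dominates_finite_realizable_general (n : ℕ) (E : Type*)
    (t h : E → Fin n) (z : E → ℤ) (d : ℕ)
    (hreal : IsRealizable (Fin n) E t h z d) :
    ∀ (m : ℕ) (q : Fin n → EuclideanSpace ℝ (Fin m)),
      ∃ q' : Fin n → EuclideanSpace ℝ (Fin d),
        ∀ i j : Fin n, i ≠ j → (∃ e : E, ({t e, h e} : Set (Fin n)) = {i, j}) →
          ‖q' i - q' j‖ = ‖q i - q j‖ := by
  intro m q
  obtain ⟨f, hf⟩ := hreal.exists_norm_sub_eq q
  refine ⟨f, fun i j _ ⟨e, he⟩ => ?_⟩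
  rcases Set.pair_eq_pair_iff.mp he with ⟨rfl, rfl⟩ | ⟨rfl, rfl⟩
  · rw [norm_sub_rev, hf, norm_sub_rev]
  · exact hf e

/-- Proposition 6.1: periodic realizability dominates finite realizability.  If ℤ-labelled
graph data `(n, E, t, h, z)` is `d`-realizable in the periodic sense, then the simple
graph `si(Ĝ)` is `d`-realizable in the finite sense: every point configuration
`q : Fin n → ℝ^m` admits `q' : Fin n → ℝ^d` preserving the lengths of all edges of
`si(Ĝ)`. -/
theorem periodic_dominates_finite_realizable (n : ℕ) (hn : 1 ≤ n) (E : Type*) [Fintype E]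
    (t h : E → Fin n) (z : E → ℤ) (d : ℕ)
    (hreal : IsRealizable (Fin n) E t h z d) :
    ∀ (m : ℕ) (q : Fin n → EuclideanSpace ℝ (Fin m)),
      ∃ q' : Fin n → EuclideanSpace ℝ (Fin d),
        ∀ i j : Fin n, i ≠ j → (∃ e : E, ({t e, h e} : Set (Fin n)) = {i, j}) →
          ‖q' i - q' j‖ = ‖q i - q j‖ :=
  periodic_dominates_finite_realizable_general n E t h z d hreal
end
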